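/- arXiv:math/0610768 — 7 statements merged into one kernel-verified Lean document; each statement's English description precedes it below -/
import Mathlib

section
/- Let E be a product structure on a nilpotent real Lie algebra g with eigenspace decomposition g = g₊ ⊕ g₋ and projections π₊ : g → g₊, π₋ : g → g₋. Define the linear maps ρ : g₊ → End(g₋) and μ : g₋ → End(g₊) by ρ(x)x' = π₋[x, x'] and μ(x')x = −π₊[x, x'] for x ∈ g₊, x' ∈ g₋ (so that [x,x'] = −μ(x')x + ρ(x)x'). Then ρ(x) is a nilpotent endomorphism of g₋ for every x ∈ g₊, and μ(x') is a nilpotent endomorphism of g₊ for every x' ∈ g₋. -/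
open Module LinearMap

variable {g : Type*} [LieRing g] [LieAlgebra ℝ g]

/-- A complex structure on a real Lie algebra: `J² = -id` and integrability. -/
def IsComplexStr (J : Module.End ℝ g) : Prop :=
  (∀ x : g, J (J x) = -x) ∧
  (∀ x y : g, J ⁅x, y⁆ = ⁅J x, y⁆ + ⁅x, J y⁆ + J ⁅J x, J y⁆)

/-- A product structure on a real Lie algebra: `E² = id`, `E ≠ ±id` and integrability. -/
def IsProductStr (E : Module.End ℝ g) : Prop :=
  (∀ x : g, E (E x) = x) ∧ E ≠ LinearMap.id ∧ E ≠ -LinearMap.id ∧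
  (∀ x y : g, E ⁅x, y⁆ = ⁅E x, y⁆ + ⁅x, E y⁆ - E ⁅E x, E y⁆)

/-- A complex product structure: a complex structure and a product structure
that anticommute. -/
def IsCPS (J E : Module.End ℝ g) : Prop :=
  IsComplexStr J ∧ IsProductStr E ∧ ∀ x : g, J (E x) = -E (J x)

/-- The +1-eigenspace `g₊` of a product structure. -/
def posPart (E : Module.End ℝ g) : Submodule ℝ g where
  carrier := {x | E x = x}
  zero_mem' := by simp
  add_mem' := by
    intro a b ha hb
    simp only [Set.mem_setOf_eq, map_add] at *
    rw [ha, hb]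
  smul_mem' := by
    intro c a ha
    simp only [Set.mem_setOf_eq, map_smul] at *
    rw [ha]

/-- The −1-eigenspace `g₋` of a product structure. -/
def negPart (E : Module.End ℝ g) : Submodule ℝ g where
  carrier := {x | E x = -x}
  zero_mem' := by simp
  add_mem' := by
    intro a b ha hb
    simp only [Set.mem_setOf_eq, map_add] at *
    rw [ha, hb]; abel
  smul_mem' := by
    intro c a ha
    simp only [Set.mem_setOf_eq, map_smul] at *
    rw [ha, smul_neg]

/-- The projection `π₊ : g → g₊` associated to a product structure. -/
noncomputable def pplus (E : Module.End ℝ g) : Module.End ℝ g :=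
  (1 / 2 : ℝ) • (LinearMap.id + E)

/-- The projection `π₋ : g → g₋` associated to a product structure. -/
noncomputable def pminus (E : Module.End ℝ g) : Module.End ℝ g :=
  (1 / 2 : ℝ) • (LinearMap.id - E)


lemma pos_bracket (E : Module.End ℝ g) (hE : IsProductStr E) {a b : g}
    (ha : E a = a) (hb : E b = b) : E ⁅a, b⁆ = ⁅a, b⁆ := by
  have h := hE.2.2.2 a b
  rw [ha, hb] at h
  have h2 : (2:ℝ) • E ⁅a, b⁆ = (2:ℝ) • ⁅a, b⁆ := by
    rw [two_smul, two_smul]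
    nth_rewrite 1 [h]; abel
  have := congrArg (fun v => (1/2 : ℝ) • v) h2
  simpa [smul_smul] using this

lemma neg_bracket (E : Module.End ℝ g) (hE : IsProductStr E) {a b : g}
    (ha : E a = -a) (hb : E b = -b) : E ⁅a, b⁆ = -⁅a, b⁆ := by
  have h := hE.2.2.2 a b
  rw [ha, hb] at h
  simp only [lie_neg, neg_lie, neg_neg] at h
  have h2 : (2:ℝ) • E ⁅a, b⁆ = (2:ℝ) • (-⁅a, b⁆) := by
    rw [two_smul, two_smul]
    nth_rewrite 1 [h]; abel
  have := congrArg (fun v => (1/2 : ℝ) • v) h2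
  simpa [smul_smul] using this

lemma pminus_of_pos (E : Module.End ℝ g) {a : g} (ha : E a = a) : pminus E a = 0 := by
  simp [pminus, ha]

lemma pplus_of_neg (E : Module.End ℝ g) {a : g} (ha : E a = -a) : pplus E a = 0 := by
  simp [pplus, ha]

lemma key_minus (E : Module.End ℝ g) (hE : IsProductStr E) {x : g} (hx : E x = x) (v : g) :
    pminus E ⁅x, pminus E v⁆ = pminus E ⁅x, v⁆ := by
  have hpos : E (v + E v) = v + E v := by rw [map_add, hE.1]; abel
  have h0 : pminus E ⁅x, v + E v⁆ = 0 :=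
    pminus_of_pos E (pos_bracket E hE hx hpos)
  have hv : pminus E v = v - (1/2:ℝ) • (v + E v) := by
    simp [pminus]; module
  rw [hv, lie_sub, lie_smul, map_sub, map_smul, h0, smul_zero, sub_zero]

lemma key_plus (E : Module.End ℝ g) (hE : IsProductStr E) {x : g} (hx : E x = -x) (v : g) :
    pplus E ⁅x, pplus E v⁆ = pplus E ⁅x, v⁆ := by
  have hneg : E (v - E v) = -(v - E v) := by rw [map_sub, hE.1]; abel
  have h0 : pplus E ⁅x, v - E v⁆ = 0 :=
    pplus_of_neg E (neg_bracket E hE hx hneg)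
  have hv : pplus E v = v - (1/2:ℝ) • (v - E v) := by
    simp [pplus]; module
  rw [hv, lie_sub, lie_smul, map_sub, map_smul, h0, smul_zero, sub_zero]

lemma nilp_minus [LieRing.IsNilpotent g] (E : Module.End ℝ g) (hE : IsProductStr E)
    {x : g} (hx : E x = x) :
    ∃ n : ℕ, ∀ x' : g, ((pminus E ∘ₗ LieAlgebra.ad ℝ g x) ^ n) x' = 0 := by
  obtain ⟨k, hk⟩ := LieAlgebra.nilpotent_ad_of_nilpotent_algebra ℝ g
  refine ⟨k + 1, fun x' => ?_⟩
  have main : ∀ n : ℕ, ((pminus E ∘ₗ LieAlgebra.ad ℝ g x) ^ (n+1)) x'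
      = pminus E ((LieAlgebra.ad ℝ g x ^ (n+1)) x') := by
    intro n
    induction n with
    | zero => simp
    | succ m ih =>
        rw [pow_succ', pow_succ' (LieAlgebra.ad ℝ g x)]
        simp only [Module.End.mul_apply] at *
        rw [ih]
        simp only [LinearMap.comp_apply, LieAlgebra.ad_apply]
        exact key_minus E hE hx _
  have hlast : (LieAlgebra.ad ℝ g x ^ (k+1)) x' = 0 := by
    rw [pow_succ']
    simp [hk x]
  cases k with
  | zero => simpa [main 0] using congrArg (pminus E) hlast
  | succ m =>
      rw [main (m+1), hlast, map_zero]

lemma nilp_plus [LieRing.IsNilpotent g] (E : Module.End ℝ g) (hE : IsProductStr E)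
    {x' : g} (hx' : E x' = -x') :
    ∃ n : ℕ, ∀ x : g, ((pplus E ∘ₗ LieAlgebra.ad ℝ g x') ^ n) x = 0 := by
  obtain ⟨k, hk⟩ := LieAlgebra.nilpotent_ad_of_nilpotent_algebra ℝ g
  refine ⟨k + 1, fun x => ?_⟩
  have main : ∀ n : ℕ, ((pplus E ∘ₗ LieAlgebra.ad ℝ g x') ^ (n+1)) x
      = pplus E ((LieAlgebra.ad ℝ g x' ^ (n+1)) x) := by
    intro n
    induction n with
    | zero => simp
    | succ m ih =>
        rw [pow_succ', pow_succ' (LieAlgebra.ad ℝ g x')]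
        simp only [Module.End.mul_apply] at *
        rw [ih]
        simp only [LinearMap.comp_apply, LieAlgebra.ad_apply]
        exact key_plus E hE hx' _
  have hlast : (LieAlgebra.ad ℝ g x' ^ (k+1)) x = 0 := by
    rw [pow_succ']
    simp [hk x']
  cases k with
  | zero => simpa [main 0] using congrArg (pplus E) hlast
  | succ m =>
      rw [main (m+1), hlast, map_zero]

/-- Let `E` be a product structure on a nilpotent real Lie algebra `g`, with
eigenspaces `g₊`, `g₋` and projections `π₊`, `π₋`.  Defining
`ρ(x) x' = π₋ ⁅x, x'⁆` (realised as the endomorphism `π₋ ∘ ad x`) and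
`μ(x') x = −π₊ ⁅x, x'⁆ = π₊ ⁅x', x⁆` (realised as `π₊ ∘ ad x'`), the
endomorphism `ρ(x)` of `g₋` is nilpotent for every `x ∈ g₊`, and the
endomorphism `μ(x')` of `g₊` is nilpotent for every `x' ∈ g₋`. -/
theorem rho_mu_nilpotent [LieRing.IsNilpotent g]
    (E : Module.End ℝ g) (hE : IsProductStr E) :
    (∀ x ∈ posPart E, ∃ n : ℕ, ∀ x' ∈ negPart E,
      ((pminus E ∘ₗ LieAlgebra.ad ℝ g x) ^ n) x' = 0) ∧
    (∀ x' ∈ negPart E, ∃ n : ℕ, ∀ x ∈ posPart E,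
      ((pplus E ∘ₗ LieAlgebra.ad ℝ g x') ^ n) x = 0) := by
  constructor
  · intro x hx
    obtain ⟨n, hn⟩ := nilp_minus E hE (hx : E x = x)
    exact ⟨n, fun x' _ => hn x'⟩
  · intro x' hx'
    obtain ⟨n, hn⟩ := nilp_plus E hE (hx' : E x' = -x')
    exact ⟨n, fun x _ => hn x⟩
end

section
/- Let g be a nilpotent real Lie algebra equipped with a complex product structure {J,E} and let ∇ be the associated torsion-free connection. Then for every z ∈ g the endomorphism ∇_z : g → g, y ↦ ∇_z y, has trace zero. -/
open Module LinearMap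

variable {g : Type*} [LieRing g] [LieAlgebra ℝ g]

attribute [local instance 100] LieRing.ofAssociativeRing

/-- Auxiliary: the linear map `x ↦ A ∘ ad(P x) ∘ B`. -/
noncomputable def connTerm (A B P : Module.End ℝ g) : g →ₗ[ℝ] Module.End ℝ g :=
  (LinearMap.llcomp ℝ g g g A ∘ₗ LinearMap.lcomp ℝ g B) ∘ₗ
    (LieAlgebra.ad ℝ g).toLinearMap ∘ₗ P

/-- The torsion-free connection associated to a complex product structure `{J, E}`.
Its value `cpConn J E x y` equals
`−π₊ J ⁅π₊x, J π₊y⁆ − π₋ J ⁅π₋x, J π₋y⁆ + π₋ ⁅π₊x, π₋y⁆ + π₊ ⁅π₋x, π₊y⁆`,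
which encodes the defining identities `∇_{x₊} y₊ = −π₊ J ⁅x₊, J y₊⁆`,
`∇_{x₋} y₋ = −π₋ J ⁅x₋, J y₋⁆`, `∇_{x₊} y₋ = π₋ ⁅x₊, y₋⁆`, `∇_{x₋} y₊ = π₊ ⁅x₋, y₊⁆`. -/
noncomputable def cpConn (J E : Module.End ℝ g) : g →ₗ[ℝ] Module.End ℝ g :=
  -connTerm (pplus E ∘ₗ J) (J ∘ₗ pplus E) (pplus E)
    - connTerm (pminus E ∘ₗ J) (J ∘ₗ pminus E) (pminus E)
    + connTerm (pminus E) (pminus E) (pplus E)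
    + connTerm (pplus E) (pplus E) (pminus E)

lemma connTerm_apply' (A B P : Module.End ℝ g) (z : g) :
    connTerm A B P z = A * (LieAlgebra.ad ℝ g (P z)) * B := rfl

/-- If `R * A * R = A * R` and `A` is nilpotent then `trace (A * R) = 0`. -/
lemma trace_mul_eq_zero_aux [FiniteDimensional ℝ g] (A R : Module.End ℝ g)
    (hkey : R * A * R = A * R) (hA : IsNilpotent A) :
    LinearMap.trace ℝ g (A * R) = 0 := by
  obtain ⟨k, hk⟩ := hA
  have hkey' : R * (A * R) = A * R := by rw [← mul_assoc, hkey]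
  have hpow : ∀ n : ℕ, (A * R) ^ (n + 1) = A ^ (n + 1) * R := by
    intro n
    induction n with
    | zero => simp
    | succ n ih =>
        calc (A * R) ^ (n + 2) = (A * R) ^ (n + 1) * (A * R) := by
              rw [pow_succ]
          _ = A ^ (n + 1) * (R * (A * R)) := by rw [ih, mul_assoc]
          _ = A ^ (n + 1) * (A * R) := by rw [hkey']
          _ = A ^ (n + 2) * R := by rw [← mul_assoc, ← pow_succ]
  have hnil : IsNilpotent (A * R) := ⟨k + 1, by rw [hpow, pow_succ', hk]; simp⟩
  have := LinearMap.isNilpotent_trace_of_isNilpotent hnil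
  exact isNilpotent_iff_eq_zero.mp this

lemma trace_ad_mul_proj_zero [FiniteDimensional ℝ g] [LieRing.IsNilpotent g]
    (R : Module.End ℝ g) (w : g) (hw : ∀ y, R ⁅w, R y⁆ = ⁅w, R y⁆) :
    LinearMap.trace ℝ g (LieAlgebra.ad ℝ g w * R) = 0 := by
  apply trace_mul_eq_zero_aux
  · ext y
    simpa using hw y
  · obtain ⟨k, hk⟩ := LieAlgebra.nilpotent_ad_of_nilpotent_algebra ℝ g
    exact ⟨k, hk w⟩

lemma trace_ad_zero [FiniteDimensional ℝ g] [LieRing.IsNilpotent g] (w : g) :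
    LinearMap.trace ℝ g (LieAlgebra.ad ℝ g w) = 0 := by
  obtain ⟨k, hk⟩ := LieAlgebra.nilpotent_ad_of_nilpotent_algebra ℝ g
  exact isNilpotent_iff_eq_zero.mp
    (LinearMap.isNilpotent_trace_of_isNilpotent ⟨k, hk w⟩)

/-- Let `g` be a (finite-dimensional) nilpotent real Lie algebra equipped with a
complex product structure `{J,E}` and let `∇ = cpConn J E` be the associated
torsion-free connection.  Then for every `z ∈ g` the endomorphism
`∇_z : g → g` has trace zero. -/
theorem cpConn_trace_zero [FiniteDimensional ℝ g] [LieRing.IsNilpotent g]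
    (J E : Module.End ℝ g) (h : IsCPS J E) (z : g) :
    LinearMap.trace ℝ g (cpConn J E z) = 0 := by
  obtain ⟨⟨hJ2, _⟩, ⟨hE2, _, _, hEint⟩, hJE⟩ := h
  set P := pplus E with hP
  set Q := pminus E with hQ
  have hEP : ∀ x, E (P x) = P x := by
    intro x
    simp only [hP, pplus, LinearMap.smul_apply, LinearMap.add_apply, LinearMap.id_apply,
      map_smul, map_add, hE2]
    module
  have hEQ : ∀ x, E (Q x) = -Q x := by
    intro x
    simp only [hQ, pminus, LinearMap.smul_apply, LinearMap.sub_apply, LinearMap.id_apply,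
      map_smul, map_sub, hE2]
    module
  have hbp : ∀ u v, E u = u → E v = v → E ⁅u, v⁆ = ⁅u, v⁆ := by
    intro u v hu hv
    have h1 := hEint u v
    rw [hu, hv] at h1
    rw [eq_sub_iff_add_eq] at h1
    have h2 : (2 : ℝ) • E ⁅u, v⁆ = (2 : ℝ) • ⁅u, v⁆ := by
      rw [two_smul, two_smul]; exact h1
    exact smul_right_injective g two_ne_zero h2
  have hbm : ∀ u v, E u = -u → E v = -v → E ⁅u, v⁆ = -⁅u, v⁆ := by
    intro u v hu hv
    have h1 := hEint u v
    rw [hu, hv] at h1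
    simp only [lie_neg, neg_lie, neg_neg] at h1
    rw [eq_sub_iff_add_eq] at h1
    have h2 : (2 : ℝ) • E ⁅u, v⁆ = (2 : ℝ) • (-⁅u, v⁆) := by
      rw [two_smul, two_smul]; exact h1
    exact smul_right_injective g two_ne_zero h2
  have hPfix : ∀ u, E u = u → P u = u := by
    intro u hu
    simp only [hP, pplus, LinearMap.smul_apply, LinearMap.add_apply, LinearMap.id_apply, hu]
    module
  have hQfix : ∀ u, E u = -u → Q u = u := by
    intro u hu
    simp only [hQ, pminus, LinearMap.smul_apply, LinearMap.sub_apply, LinearMap.id_apply, hu]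
    module
  have key1 : ∀ y, P ⁅P z, P y⁆ = ⁅P z, P y⁆ := fun y =>
    hPfix _ (hbp _ _ (hEP z) (hEP y))
  have key2 : ∀ y, Q ⁅Q z, Q y⁆ = ⁅Q z, Q y⁆ := fun y =>
    hQfix _ (hbm _ _ (hEQ z) (hEQ y))
  have hPQ : Q = 1 - P := by
    ext x
    simp only [hP, hQ, pplus, pminus, LinearMap.smul_apply, LinearMap.add_apply,
      LinearMap.sub_apply, LinearMap.id_apply, Module.End.one_apply]
    module
  have hQP : P = 1 - Q := by rw [hPQ, sub_sub_cancel]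
  have tQ : LinearMap.trace ℝ g (LieAlgebra.ad ℝ g (P z) * Q) = 0 := by
    rw [hPQ, mul_sub, mul_one, map_sub, trace_ad_zero,
      trace_ad_mul_proj_zero P (P z) key1, sub_zero]
  have tP : LinearMap.trace ℝ g (LieAlgebra.ad ℝ g (Q z) * P) = 0 := by
    rw [hQP, mul_sub, mul_one, map_sub, trace_ad_zero,
      trace_ad_mul_proj_zero Q (Q z) key2, sub_zero]
  have trace_connTerm : ∀ A B R : Module.End ℝ g,
      LinearMap.trace ℝ g (connTerm A B R z)
        = LinearMap.trace ℝ g (LieAlgebra.ad ℝ g (R z) * (B * A)) := by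
    intro A B R
    rw [connTerm_apply', mul_assoc, LinearMap.trace_mul_comm, mul_assoc]
  have e1 : (J ∘ₗ P) * (P ∘ₗ J) = -Q := by
    ext x
    have h1 : P (P (J x)) = P (J x) := hPfix _ (hEP (J x))
    simp only [Module.End.mul_apply, LinearMap.comp_apply, LinearMap.neg_apply, h1]
    simp only [hP, hQ, pplus, pminus, LinearMap.smul_apply, LinearMap.add_apply,
      LinearMap.sub_apply, LinearMap.id_apply, map_smul, map_add, map_sub, map_neg,
      hJE, hJ2, hE2]
    module
  have e2 : (J ∘ₗ Q) * (Q ∘ₗ J) = -P := by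
    ext x
    have h1 : Q (Q (J x)) = Q (J x) := hQfix _ (hEQ (J x))
    simp only [Module.End.mul_apply, LinearMap.comp_apply, LinearMap.neg_apply, h1]
    simp only [hP, hQ, pplus, pminus, LinearMap.smul_apply, LinearMap.add_apply,
      LinearMap.sub_apply, LinearMap.id_apply, map_smul, map_add, map_sub, map_neg,
      hJE, hJ2, hE2]
    module
  have e3 : Q * Q = Q := by
    ext x
    exact hQfix _ (hEQ x)
  have e4 : P * P = P := by
    ext x
    exact hPfix _ (hEP x)
  have expand : cpConn J E z
      = -(connTerm (P ∘ₗ J) (J ∘ₗ P) P z) - connTerm (Q ∘ₗ J) (J ∘ₗ Q) Q z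
        + connTerm Q Q P z + connTerm P P Q z := rfl
  rw [expand, map_add, map_add, map_sub, map_neg, trace_connTerm, trace_connTerm,
    trace_connTerm, trace_connTerm, e1, e2, e3, e4, mul_neg, mul_neg, map_neg, map_neg,
    tQ, tP]
  simp
end

section
/- Let g be a nilpotent real Lie algebra equipped with a complex product structure {J,E} and let ∇ be the associated torsion-free connection, with curvature R(x,y) = ∇ₓ∇ᵧ − ∇ᵧ∇ₓ − ∇_{[x,y]}. Then the Ricci tensor of ∇, defined by ric(x,y) = tr(z ↦ R(z,x)y), vanishes identically: ric(x,y) = 0 for all x,y ∈ g. -/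
open Module LinearMap

attribute [local instance 100] LieRing.ofAssociativeRing

variable {g : Type*} [LieRing g] [LieAlgebra ℝ g]

/-- The Ricci tensor of the connection `∇ = cpConn J E`:
`ric(x,y) = tr (z ↦ R(z,x) y)`, where `R(z,x) = ∇_z ∇_x − ∇_x ∇_z − ∇_{⁅z,x⁆}` is the
curvature.  The linear map `z ↦ R(z,x) y` is expressed as
`z ↦ ∇_z (∇_x y) − ∇_x (∇_z y) − ∇_{⁅z,x⁆} y`. -/
noncomputable def cpRicci (J E : Module.End ℝ g) (x y : g) : ℝ :=
  LinearMap.trace ℝ g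
    ((cpConn J E).flip (cpConn J E x y)
      - cpConn J E x ∘ₗ (cpConn J E).flip y
      - (cpConn J E).flip y ∘ₗ (-(LieAlgebra.ad ℝ g x)))


-- ===== auxiliary development for cpConn_ricci_flat =====

namespace CPSProof

variable {g : Type*} [LieRing g] [LieAlgebra ℝ g]

section Pointwise

variable {J E : Module.End ℝ g}

lemma pplus_apply (E : Module.End ℝ g) (x : g) : pplus E x = (1 / 2 : ℝ) • (x + E x) := by
  simp [pplus]

lemma pminus_apply (E : Module.End ℝ g) (x : g) : pminus E x = (1 / 2 : ℝ) • (x - E x) := by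
  simp [pminus]

lemma aPQ (E : Module.End ℝ g) (x : g) : pplus E x + pminus E x = x := by
  rw [pplus_apply, pminus_apply, ← smul_add]
  have h2 : x + E x + (x - E x) = (2 : ℝ) • x := by rw [two_smul]; abel
  rw [h2, smul_smul]
  norm_num

lemma aEP (h : IsCPS J E) (x : g) : E (pplus E x) = pplus E x := by
  rw [pplus_apply, map_smul, map_add, h.2.1.1 x, add_comm (E x) x]

lemma aEQ (h : IsCPS J E) (x : g) : E (pminus E x) = -(pminus E x) := by
  rw [pminus_apply, map_smul, map_sub, h.2.1.1 x, ← smul_neg, neg_sub]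

lemma aPid (x : g) (hx : E x = x) : pplus E x = x := by
  rw [pplus_apply, hx, ← two_smul ℝ x, smul_smul]
  norm_num

lemma aP0 (x : g) (hx : E x = -x) : pplus E x = 0 := by
  rw [pplus_apply, hx]; simp

lemma aQid (x : g) (hx : E x = -x) : pminus E x = x := by
  rw [pminus_apply, hx, sub_neg_eq_add, ← two_smul ℝ x, smul_smul]
  norm_num

lemma aQ0 (x : g) (hx : E x = x) : pminus E x = 0 := by
  rw [pminus_apply, hx]; simp

lemma aPP (h : IsCPS J E) (x : g) : pplus E (pplus E x) = pplus E x := aPid _ (aEP h x)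
lemma aQP (h : IsCPS J E) (x : g) : pminus E (pplus E x) = 0 := aQ0 _ (aEP h x)
lemma aPQ0 (h : IsCPS J E) (x : g) : pplus E (pminus E x) = 0 := aP0 _ (aEQ h x)
lemma aQQ (h : IsCPS J E) (x : g) : pminus E (pminus E x) = pminus E x := aQid _ (aEQ h x)

lemma aJP (h : IsCPS J E) (x : g) : J (pplus E x) = pminus E (J x) := by
  rw [pplus_apply, map_smul, map_add, h.2.2 x, pminus_apply, ← sub_eq_add_neg]

lemma aJQ (h : IsCPS J E) (x : g) : J (pminus E x) = pplus E (J x) := by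
  rw [pminus_apply, map_smul, map_sub, h.2.2 x, pplus_apply, sub_neg_eq_add]

lemma aEJp (h : IsCPS J E) (x : g) (hx : E x = x) : E (J x) = -(J x) := by
  have h1 := h.2.2 x
  rw [hx] at h1
  exact (neg_eq_iff_eq_neg.mpr h1).symm

lemma aEJm (h : IsCPS J E) (x : g) (hx : E x = -x) : E (J x) = J x := by
  have h1 := h.2.2 x
  rw [hx, map_neg] at h1
  exact (neg_injective h1).symm

lemma abrP (h : IsCPS J E) (a b : g) (ha : E a = a) (hb : E b = b) :
    E ⁅a, b⁆ = ⁅a, b⁆ := by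
  have he := h.2.1.2.2.2 a b
  rw [ha, hb] at he
  have h2 : (2 : ℝ) • E ⁅a, b⁆ = (2 : ℝ) • ⁅a, b⁆ := by
    rw [two_smul, two_smul]
    calc E ⁅a, b⁆ + E ⁅a, b⁆ = ⁅a, b⁆ + ⁅a, b⁆ - E ⁅a, b⁆ + E ⁅a, b⁆ := by rw [← he]
    _ = ⁅a, b⁆ + ⁅a, b⁆ := by abel
  exact smul_right_injective g two_ne_zero h2

lemma abrQ (h : IsCPS J E) (a b : g) (ha : E a = -a) (hb : E b = -b) :
    E ⁅a, b⁆ = -⁅a, b⁆ := by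
  have he := h.2.1.2.2.2 a b
  rw [ha, hb, neg_lie, lie_neg, neg_lie, lie_neg, neg_neg] at he
  have h2 : (2 : ℝ) • E ⁅a, b⁆ = (2 : ℝ) • (-⁅a, b⁆) := by
    rw [two_smul, two_smul]
    calc E ⁅a, b⁆ + E ⁅a, b⁆ = -⁅a, b⁆ + -⁅a, b⁆ - E ⁅a, b⁆ + E ⁅a, b⁆ := by rw [← he]
    _ = -⁅a, b⁆ + -⁅a, b⁆ := by abel
  exact smul_right_injective g two_ne_zero h2

/-- torsion core, `g₊` version: `P (J ⁅J a, c⁆) = -(P ⁅a,c⁆) - P (J ⁅a, J c⁆)`. -/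
lemma aT (h : IsCPS J E) (a c : g) (ha : E a = a) (hc : E c = c) :
    pplus E (J ⁅J a, c⁆) = -(pplus E ⁅a, c⁆) - pplus E (J ⁅a, J c⁆) := by
  have h1 := congrArg J (h.1.2 a c)
  rw [map_add, map_add, h.1.1, h.1.1] at h1
  have h2 := congrArg (pplus E) h1
  rw [map_neg, map_add, map_add, map_neg] at h2
  rw [aP0 _ (abrQ h _ _ (aEJp h a ha) (aEJp h c hc)), neg_zero, add_zero] at h2
  exact eq_sub_of_add_eq h2.symm

lemma aTm (h : IsCPS J E) (a c : g) (ha : E a = -a) (hc : E c = -c) :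
    pminus E (J ⁅J a, c⁆) = -(pminus E ⁅a, c⁆) - pminus E (J ⁅a, J c⁆) := by
  have h1 := congrArg J (h.1.2 a c)
  rw [map_add, map_add, h.1.1, h.1.1] at h1
  have h2 := congrArg (pminus E) h1
  rw [map_neg, map_add, map_add, map_neg] at h2
  rw [aQ0 _ (abrP h _ _ (aEJm h a ha) (aEJm h c hc)), neg_zero, add_zero] at h2
  exact eq_sub_of_add_eq h2.symm

end Pointwise

/-- The product `a · b = -π₊ J ⁅a, J b⁆` on `g₊`. -/
noncomputable def cdotP (J E : Module.End ℝ g) (a b : g) : g := -(pplus E (J ⁅a, J b⁆))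

/-- The product `a ∘ b = -π₋ J ⁅a, J b⁆` on `g₋`. -/
noncomputable def cdotQ (J E : Module.End ℝ g) (a b : g) : g := -(pminus E (J ⁅a, J b⁆))

section Dot

variable {J E : Module.End ℝ g}

lemma aPdot (h : IsCPS J E) (a b : g) : pplus E (cdotP J E a b) = cdotP J E a b := by
  rw [cdotP, map_neg, aPP h]

lemma aEdotP (h : IsCPS J E) (a b : g) : E (cdotP J E a b) = cdotP J E a b := by
  rw [cdotP, map_neg, aEP h]

lemma aQdot (h : IsCPS J E) (a b : g) : pminus E (cdotQ J E a b) = cdotQ J E a b := by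
  rw [cdotQ, map_neg, aQQ h]

lemma aEdotQ (h : IsCPS J E) (a b : g) : E (cdotQ J E a b) = -(cdotQ J E a b) := by
  rw [cdotQ, map_neg, aEQ h, neg_neg]

lemma acdotP_subl (u v b : g) :
    cdotP J E (u - v) b = cdotP J E u b - cdotP J E v b := by
  rw [cdotP, cdotP, cdotP, sub_lie, map_sub, map_sub]
  abel

lemma acdotQ_subl (u v b : g) :
    cdotQ J E (u - v) b = cdotQ J E u b - cdotQ J E v b := by
  rw [cdotQ, cdotQ, cdotQ, sub_lie, map_sub, map_sub]
  abel

/-- torsion in dot form (plus side). -/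
lemma atorsP (h : IsCPS J E) (a b : g) (ha : E a = a) (hb : E b = b) :
    cdotP J E a b - cdotP J E b a = ⁅a, b⁆ := by
  have hT := aT h a b ha hb
  rw [cdotP, cdotP, show ⁅b, J a⁆ = -⁅J a, b⁆ from (lie_skew _ _).symm, map_neg, map_neg, hT,
    aPid _ (abrP h _ _ ha hb)]
  abel

lemma atorsQ (h : IsCPS J E) (a b : g) (ha : E a = -a) (hb : E b = -b) :
    cdotQ J E a b - cdotQ J E b a = ⁅a, b⁆ := by
  have hT := aTm h a b ha hb
  rw [cdotQ, cdotQ, show ⁅b, J a⁆ = -⁅J a, b⁆ from (lie_skew _ _).symm, map_neg, map_neg, hT,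
    aQid _ (abrQ h _ _ ha hb)]
  abel

lemma akeyP (h : IsCPS J E) (b : g) (u v : g) (hu : E u = u) (hv : E v = v) :
    cdotP J E u (cdotP J E v b) = -(pplus E (J ⁅u, ⁅v, J b⁆⁆)) := by
  rw [cdotP, cdotP, map_neg, aJP h, h.1.1, map_neg, neg_neg]
  have hQw : pminus E ⁅v, J b⁆ = ⁅v, J b⁆ - pplus E ⁅v, J b⁆ := by
    conv_lhs => rw [show pminus E ⁅v, J b⁆ = pplus E ⁅v, J b⁆ + pminus E ⁅v, J b⁆ - pplus E ⁅v, J b⁆ by abel, aPQ E]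
  rw [hQw, lie_sub, map_sub, map_sub]
  have hz : pplus E (J ⁅u, pplus E ⁅v, J b⁆⁆) = 0 :=
    aP0 _ (aEJp h _ (abrP h _ _ hu (aEP h _)))
  rw [hz, sub_zero]

lemma akeyQ (h : IsCPS J E) (b : g) (u v : g) (hu : E u = -u) (hv : E v = -v) :
    cdotQ J E u (cdotQ J E v b) = -(pminus E (J ⁅u, ⁅v, J b⁆⁆)) := by
  rw [cdotQ, cdotQ, map_neg, aJQ h, h.1.1, map_neg, neg_neg]
  have hQw : pplus E ⁅v, J b⁆ = ⁅v, J b⁆ - pminus E ⁅v, J b⁆ := by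
    conv_lhs => rw [show pplus E ⁅v, J b⁆ = pplus E ⁅v, J b⁆ + pminus E ⁅v, J b⁆ - pminus E ⁅v, J b⁆ by abel, aPQ E]
  rw [hQw, lie_sub, map_sub, map_sub]
  have hz : pminus E (J ⁅u, pminus E ⁅v, J b⁆⁆) = 0 :=
    aQ0 _ (aEJm h _ (abrQ h _ _ hu (aEQ h _)))
  rw [hz, sub_zero]

lemma aflatP (h : IsCPS J E) (a b c : g) (ha : E a = a) (hc : E c = c) :
    cdotP J E c (cdotP J E a b) - cdotP J E a (cdotP J E c b) = cdotP J E ⁅c, a⁆ b := by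
  rw [akeyP h b c a hc ha, akeyP h b a c ha hc, cdotP,
    show ⁅⁅c, a⁆, J b⁆ = ⁅c, ⁅a, J b⁆⁆ - ⁅a, ⁅c, J b⁆⁆ from lie_lie _ _ _,
    map_sub, map_sub]
  abel

lemma aflatQ (h : IsCPS J E) (a b c : g) (ha : E a = -a) (hc : E c = -c) :
    cdotQ J E c (cdotQ J E a b) - cdotQ J E a (cdotQ J E c b) = cdotQ J E ⁅c, a⁆ b := by
  rw [akeyQ h b c a hc ha, akeyQ h b a c ha hc, cdotQ,
    show ⁅⁅c, a⁆, J b⁆ = ⁅c, ⁅a, J b⁆⁆ - ⁅a, ⁅c, J b⁆⁆ from lie_lie _ _ _,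
    map_sub, map_sub]
  abel

/-- left-symmetry on `g₊`. -/
lemma aLSAP (h : IsCPS J E) (a b c : g) (ha : E a = a) (hb : E b = b) (hc : E c = c) :
    cdotP J E (cdotP J E c a) b =
      cdotP J E c (cdotP J E a b) - cdotP J E a (cdotP J E c b)
        + cdotP J E (cdotP J E a c) b := by
  have h1 := aflatP h a b c ha hc
  have h3 := acdotP_subl (J := J) (E := E) (cdotP J E c a) (cdotP J E a c) b
  rw [atorsP h c a hc ha, ← h1] at h3
  rw [h3]
  abel

lemma aLSAQ (h : IsCPS J E) (a b c : g) (ha : E a = -a) (hb : E b = -b) (hc : E c = -c) :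
    cdotQ J E (cdotQ J E c a) b =
      cdotQ J E c (cdotQ J E a b) - cdotQ J E a (cdotQ J E c b)
        + cdotQ J E (cdotQ J E a c) b := by
  have h1 := aflatQ h a b c ha hc
  have h3 := acdotQ_subl (J := J) (E := E) (cdotQ J E c a) (cdotQ J E a c) b
  rw [atorsQ h c a hc ha, ← h1] at h3
  rw [h3]
  abel

end Dot

end CPSProof
namespace CPSProof

variable {g : Type*} [LieRing g] [LieAlgebra ℝ g]

section Ops

/-- Right multiplication operator on `g₊`. -/
noncomputable def RpD (J E : Module.End ℝ g) (x : g) : Module.End ℝ g :=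
  pplus E ∘ₗ (J ∘ₗ (LieAlgebra.ad ℝ g (J (pplus E x)) ∘ₗ pplus E))

/-- Left multiplication operator on `g₊`. -/
noncomputable def LpD (J E : Module.End ℝ g) (x : g) : Module.End ℝ g :=
  -(pplus E ∘ₗ (J ∘ₗ (LieAlgebra.ad ℝ g (pplus E x) ∘ₗ (J ∘ₗ pplus E))))

/-- Mixed block operator. -/
noncomputable def NpD (J E : Module.End ℝ g) (x : g) : Module.End ℝ g :=
  pplus E ∘ₗ (LieAlgebra.ad ℝ g (pplus E x) ∘ₗ pminus E)

noncomputable def RqD (J E : Module.End ℝ g) (x : g) : Module.End ℝ g :=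
  pminus E ∘ₗ (J ∘ₗ (LieAlgebra.ad ℝ g (J (pminus E x)) ∘ₗ pminus E))

noncomputable def LqD (J E : Module.End ℝ g) (x : g) : Module.End ℝ g :=
  -(pminus E ∘ₗ (J ∘ₗ (LieAlgebra.ad ℝ g (pminus E x) ∘ₗ (J ∘ₗ pminus E))))

noncomputable def NqD (J E : Module.End ℝ g) (x : g) : Module.End ℝ g :=
  pminus E ∘ₗ (LieAlgebra.ad ℝ g (pminus E x) ∘ₗ pplus E)

lemma aconn (J E : Module.End ℝ g) (x y : g) :
    cpConn J E x y =
      -(pplus E (J ⁅pplus E x, J (pplus E y)⁆)) - pminus E (J ⁅pminus E x, J (pminus E y)⁆)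
        + pminus E ⁅pplus E x, pminus E y⁆ + pplus E ⁅pminus E x, pplus E y⁆ := by
  simp only [cpConn, connTerm, LinearMap.sub_apply, LinearMap.add_apply, LinearMap.neg_apply,
    LinearMap.comp_apply, LinearMap.llcomp_apply, LinearMap.lcomp_apply,
    LieHom.coe_toLinearMap, LieAlgebra.ad_apply]

lemma aconnE (J E : Module.End ℝ g) (x : g) :
    cpConn J E x =
      -(pplus E ∘ₗ (J ∘ₗ (LieAlgebra.ad ℝ g (pplus E x) ∘ₗ (J ∘ₗ pplus E))))
        - pminus E ∘ₗ (J ∘ₗ (LieAlgebra.ad ℝ g (pminus E x) ∘ₗ (J ∘ₗ pminus E)))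
        + pminus E ∘ₗ (LieAlgebra.ad ℝ g (pplus E x) ∘ₗ pminus E)
        + pplus E ∘ₗ (LieAlgebra.ad ℝ g (pminus E x) ∘ₗ pplus E) := by
  ext z
  simp only [cpConn, connTerm, LinearMap.sub_apply, LinearMap.add_apply, LinearMap.neg_apply,
    LinearMap.comp_apply, LinearMap.llcomp_apply, LinearMap.lcomp_apply,
    LieHom.coe_toLinearMap, LieAlgebra.ad_apply]

end Ops

section OpsFacts

variable {J E : Module.End ℝ g}

lemma aRp_apply (x u : g) : RpD J E x u = cdotP J E (pplus E u) (pplus E x) := by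
  rw [RpD, cdotP]
  simp only [LinearMap.comp_apply, LieAlgebra.ad_apply]
  rw [show ⁅pplus E u, J (pplus E x)⁆ = -⁅J (pplus E x), pplus E u⁆ from (lie_skew _ _).symm,
    map_neg, map_neg, neg_neg]

lemma aLp_apply (x u : g) : LpD J E x u = cdotP J E (pplus E x) (pplus E u) := by
  rw [LpD, cdotP]
  simp only [LinearMap.neg_apply, LinearMap.comp_apply, LieAlgebra.ad_apply]

lemma aRq_apply (x u : g) : RqD J E x u = cdotQ J E (pminus E u) (pminus E x) := by
  rw [RqD, cdotQ]
  simp only [LinearMap.comp_apply, LieAlgebra.ad_apply]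
  rw [show ⁅pminus E u, J (pminus E x)⁆ = -⁅J (pminus E x), pminus E u⁆ from (lie_skew _ _).symm,
    map_neg, map_neg, neg_neg]

lemma aLq_apply (x u : g) : LqD J E x u = cdotQ J E (pminus E x) (pminus E u) := by
  rw [LqD, cdotQ]
  simp only [LinearMap.neg_apply, LinearMap.comp_apply, LieAlgebra.ad_apply]

lemma aconnPP (h : IsCPS J E) (x y : g) :
    cpConn J E (pplus E x) (pplus E y) = cdotP J E (pplus E x) (pplus E y) := by
  rw [aconn, cdotP]
  simp only [aPP h, aQP h, zero_lie, lie_zero, map_zero]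
  abel

lemma aconnQQ (h : IsCPS J E) (x y : g) :
    cpConn J E (pminus E x) (pminus E y) = cdotQ J E (pminus E x) (pminus E y) := by
  rw [aconn, cdotQ]
  simp only [aQQ h, aPQ0 h, zero_lie, lie_zero, map_zero]
  abel

lemma aTopP (h : IsCPS J E) (x : g) :
    RpD J E x = LpD J E x - pplus E ∘ₗ (LieAlgebra.ad ℝ g (pplus E x) ∘ₗ pplus E) := by
  ext z
  simp only [RpD, LpD, LinearMap.sub_apply, LinearMap.neg_apply, LinearMap.comp_apply,
    LieAlgebra.ad_apply]
  rw [aT h (pplus E x) (pplus E z) (aEP h x) (aEP h z)]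
  abel

lemma aTopQ (h : IsCPS J E) (x : g) :
    RqD J E x = LqD J E x - pminus E ∘ₗ (LieAlgebra.ad ℝ g (pminus E x) ∘ₗ pminus E) := by
  ext z
  simp only [RqD, LqD, LinearMap.sub_apply, LinearMap.neg_apply, LinearMap.comp_apply,
    LieAlgebra.ad_apply]
  rw [aTm h (pminus E x) (pminus E z) (aEQ h x) (aEQ h z)]
  abel

lemma aBP (h : IsCPS J E) (x : g) :
    cpConn J E (pplus E x) - LieAlgebra.ad ℝ g (pplus E x) = RpD J E x - NpD J E x := by
  ext z
  simp only [LinearMap.sub_apply, LinearMap.comp_apply, LieAlgebra.ad_apply, RpD, NpD]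
  rw [aconn J E (pplus E x) z]
  simp only [aPP h, aQP h, zero_lie, lie_zero, map_zero]
  rw [aT h (pplus E x) (pplus E z) (aEP h x) (aEP h z)]
  have h3 : ⁅pplus E x, z⁆ = ⁅pplus E x, pplus E z⁆ + ⁅pplus E x, pminus E z⁆ := by
    rw [← lie_add, aPQ E z]
  have eP : pplus E ⁅pplus E x, pplus E z⁆ = ⁅pplus E x, pplus E z⁆ :=
    aPid _ (abrP h _ _ (aEP h x) (aEP h z))
  have eQ : pminus E ⁅pplus E x, pminus E z⁆
      = ⁅pplus E x, pminus E z⁆ - pplus E ⁅pplus E x, pminus E z⁆ := by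
    rw [eq_sub_iff_add_eq, add_comm]; exact aPQ E _
  rw [h3, eP, eQ]
  abel

lemma aBQ (h : IsCPS J E) (x : g) :
    cpConn J E (pminus E x) - LieAlgebra.ad ℝ g (pminus E x) = RqD J E x - NqD J E x := by
  ext z
  simp only [LinearMap.sub_apply, LinearMap.comp_apply, LieAlgebra.ad_apply, RqD, NqD]
  rw [aconn J E (pminus E x) z]
  simp only [aQQ h, aPQ0 h, zero_lie, lie_zero, map_zero]
  rw [aTm h (pminus E x) (pminus E z) (aEQ h x) (aEQ h z)]
  have h3 : ⁅pminus E x, z⁆ = ⁅pminus E x, pminus E z⁆ + ⁅pminus E x, pplus E z⁆ := by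
    rw [← lie_add]
    rw [show pminus E z + pplus E z = z from by rw [add_comm]; exact aPQ E z]
  have eP : pminus E ⁅pminus E x, pminus E z⁆ = ⁅pminus E x, pminus E z⁆ :=
    aQid _ (abrQ h _ _ (aEQ h x) (aEQ h z))
  have eQ : pplus E ⁅pminus E x, pplus E z⁆
      = ⁅pminus E x, pplus E z⁆ - pminus E ⁅pminus E x, pplus E z⁆ := by
    rw [eq_sub_iff_add_eq]; exact aPQ E _
  rw [h3, eP, eQ]
  abel

/-- full torsion-freeness of `cpConn`. -/
lemma ators (h : IsCPS J E) (u v : g) :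
    cpConn J E u v - cpConn J E v u = ⁅u, v⁆ := by
  have h1 := atorsP h (pplus E u) (pplus E v) (aEP h u) (aEP h v)
  have h2 := atorsQ h (pminus E u) (pminus E v) (aEQ h u) (aEQ h v)
  rw [cdotP, cdotP] at h1
  rw [cdotQ, cdotQ] at h2
  have e1 : pplus E (J ⁅pplus E v, J (pplus E u)⁆)
      = ⁅pplus E u, pplus E v⁆ + pplus E (J ⁅pplus E u, J (pplus E v)⁆) := by
    rw [← h1]; abel
  have e2 : pminus E (J ⁅pminus E v, J (pminus E u)⁆)
      = ⁅pminus E u, pminus E v⁆ + pminus E (J ⁅pminus E u, J (pminus E v)⁆) := by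
    rw [← h2]; abel
  have e3 : pminus E ⁅pplus E u, pminus E v⁆
      = ⁅pplus E u, pminus E v⁆ - pplus E ⁅pplus E u, pminus E v⁆ := by
    rw [eq_sub_iff_add_eq, add_comm]; exact aPQ E _
  have e4 : pminus E ⁅pminus E u, pplus E v⁆
      = ⁅pminus E u, pplus E v⁆ - pplus E ⁅pminus E u, pplus E v⁆ := by
    rw [eq_sub_iff_add_eq, add_comm]; exact aPQ E _
  have h7 : ⁅u, v⁆ = ⁅pplus E u, pplus E v⁆ + ⁅pplus E u, pminus E v⁆
      + ⁅pminus E u, pplus E v⁆ + ⁅pminus E u, pminus E v⁆ := by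
    conv_lhs => rw [← aPQ E u, ← aPQ E v]
    rw [add_lie, lie_add, lie_add]
    abel
  rw [aconn J E u v, aconn J E v u,
    show ⁅pplus E v, pminus E u⁆ = -⁅pminus E u, pplus E v⁆ from (lie_skew _ _).symm,
    show ⁅pminus E v, pplus E u⁆ = -⁅pplus E u, pminus E v⁆ from (lie_skew _ _).symm,
    map_neg, map_neg, e1, e2, e3, e4, h7]
  abel

/-- the operator form of left-symmetry on `g₊`. -/
lemma aOPIDP (h : IsCPS J E) (x y : g) :
    RpD J E y ∘ₗ RpD J E x =
      RpD J E (cpConn J E (pplus E x) (pplus E y))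
        - LpD J E x ∘ₗ RpD J E y + RpD J E y ∘ₗ LpD J E x := by
  ext z
  simp only [LinearMap.sub_apply, LinearMap.add_apply, LinearMap.comp_apply]
  simp only [aRp_apply, aLp_apply, aconnPP h, aPdot h, aPP h]
  exact aLSAP h _ _ _ (aEP h x) (aEP h y) (aEP h z)

lemma aOPIDQ (h : IsCPS J E) (x y : g) :
    RqD J E y ∘ₗ RqD J E x =
      RqD J E (cpConn J E (pminus E x) (pminus E y))
        - LqD J E x ∘ₗ RqD J E y + RqD J E y ∘ₗ LqD J E x := by
  ext z
  simp only [LinearMap.sub_apply, LinearMap.add_apply, LinearMap.comp_apply]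
  simp only [aRq_apply, aLq_apply, aconnQQ h, aQdot h, aQQ h]
  exact aLSAQ h _ _ _ (aEQ h x) (aEQ h y) (aEQ h z)

/- endomorphism-level projection facts -/

lemma oPPc (h : IsCPS J E) : pplus E ∘ₗ pplus E = pplus E := by
  ext z; exact aPP h z

lemma oQQc (h : IsCPS J E) : pminus E ∘ₗ pminus E = pminus E := by
  ext z; exact aQQ h z

lemma oQPc (h : IsCPS J E) : pminus E ∘ₗ pplus E = 0 := by
  ext z; exact aQP h z

lemma oPQc (h : IsCPS J E) : pplus E ∘ₗ pminus E = 0 := by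
  ext z; exact aPQ0 h z

lemma oQPk (h : IsCPS J E) (f : Module.End ℝ g) : pminus E ∘ₗ (pplus E ∘ₗ f) = 0 := by
  rw [← LinearMap.comp_assoc, oQPc h, LinearMap.zero_comp]

lemma oPQk (h : IsCPS J E) (f : Module.End ℝ g) : pplus E ∘ₗ (pminus E ∘ₗ f) = 0 := by
  rw [← LinearMap.comp_assoc, oPQc h, LinearMap.zero_comp]

lemma oPPk (h : IsCPS J E) (f : Module.End ℝ g) : pplus E ∘ₗ (pplus E ∘ₗ f) = pplus E ∘ₗ f := by
  rw [← LinearMap.comp_assoc, oPPc h]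

lemma oQQk (h : IsCPS J E) (f : Module.End ℝ g) : pminus E ∘ₗ (pminus E ∘ₗ f) = pminus E ∘ₗ f := by
  rw [← LinearMap.comp_assoc, oQQc h]

lemma aJPJ (h : IsCPS J E) : J ∘ₗ (pplus E ∘ₗ J) = -(pminus E : Module.End ℝ g) := by
  ext z
  simp only [LinearMap.comp_apply, LinearMap.neg_apply]
  rw [aJP h, h.1.1, map_neg]

lemma aJQJ (h : IsCPS J E) : J ∘ₗ (pminus E ∘ₗ J) = -(pplus E : Module.End ℝ g) := by
  ext z
  simp only [LinearMap.comp_apply, LinearMap.neg_apply]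
  rw [aJQ h, h.1.1, map_neg]

lemma ainv1 (h : IsCPS J E) (v : g) :
    pplus E ∘ₗ (LieAlgebra.ad ℝ g (pplus E v) ∘ₗ pplus E)
      = LieAlgebra.ad ℝ g (pplus E v) ∘ₗ pplus E := by
  ext z
  simp only [LinearMap.comp_apply, LieAlgebra.ad_apply]
  exact aPid _ (abrP h _ _ (aEP h v) (aEP h z))

lemma ainv1m (h : IsCPS J E) (v : g) :
    pminus E ∘ₗ (LieAlgebra.ad ℝ g (pminus E v) ∘ₗ pminus E)
      = LieAlgebra.ad ℝ g (pminus E v) ∘ₗ pminus E := by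
  ext z
  simp only [LinearMap.comp_apply, LieAlgebra.ad_apply]
  exact aQid _ (abrQ h _ _ (aEQ h v) (aEQ h z))

lemma ainv2 (h : IsCPS J E) (v : g) :
    (pplus E ∘ₗ LieAlgebra.ad ℝ g (pminus E v)) ∘ₗ pplus E
      = pplus E ∘ₗ LieAlgebra.ad ℝ g (pminus E v) := by
  ext z
  simp only [LinearMap.comp_apply, LieAlgebra.ad_apply]
  conv_rhs => rw [← aPQ E z]
  rw [lie_add, map_add, aP0 _ (abrQ h _ _ (aEQ h v) (aEQ h z)), add_zero]

lemma ainv2m (h : IsCPS J E) (v : g) :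
    (pminus E ∘ₗ LieAlgebra.ad ℝ g (pplus E v)) ∘ₗ pminus E
      = pminus E ∘ₗ LieAlgebra.ad ℝ g (pplus E v) := by
  ext z
  simp only [LinearMap.comp_apply, LieAlgebra.ad_apply]
  conv_rhs => rw [show z = pminus E z + pplus E z from by rw [add_comm]; exact (aPQ E z).symm]
  rw [lie_add, map_add, aQ0 _ (abrP h _ _ (aEP h v) (aEP h z)), add_zero]

end OpsFacts

end CPSProof
namespace CPSProof

variable {g : Type*} [LieRing g] [LieAlgebra ℝ g]

section MoreOps

variable {J E : Module.End ℝ g}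

lemma ainv2R (h : IsCPS J E) (v : g) :
    pplus E ∘ₗ (LieAlgebra.ad ℝ g (pminus E v) ∘ₗ pplus E)
      = pplus E ∘ₗ LieAlgebra.ad ℝ g (pminus E v) := by
  rw [← LinearMap.comp_assoc]; exact ainv2 h v

lemma ainv2mR (h : IsCPS J E) (v : g) :
    pminus E ∘ₗ (LieAlgebra.ad ℝ g (pplus E v) ∘ₗ pminus E)
      = pminus E ∘ₗ LieAlgebra.ad ℝ g (pplus E v) := by
  rw [← LinearMap.comp_assoc]; exact ainv2m h v

end MoreOps

section TraceFacts

variable [FiniteDimensional ℝ g] {J E : Module.End ℝ g}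

local notation "tr" => LinearMap.trace ℝ g

lemma atc (f k : Module.End ℝ g) : tr (f ∘ₗ k) = tr (k ∘ₗ f) :=
  LinearMap.trace_comp_comm' k f

lemma trnil {f : Module.End ℝ g} (hf : IsNilpotent f) : tr f = 0 :=
  (LinearMap.isNilpotent_trace_of_isNilpotent hf).eq_zero

lemma apow1 {Pr A : Module.End ℝ g} (hinv : Pr ∘ₗ (A ∘ₗ Pr) = A ∘ₗ Pr) :
    ∀ n : ℕ, (A ∘ₗ Pr) ^ (n + 1) = (A ^ (n + 1)) ∘ₗ Pr := by
  intro n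
  induction n with
  | zero => rw [zero_add, pow_one, pow_one]
  | succ n ih =>
    rw [pow_succ (A ∘ₗ Pr) (n + 1), ih, pow_succ A (n + 1), Module.End.mul_eq_comp,
      Module.End.mul_eq_comp]
    simp only [LinearMap.comp_assoc]
    rw [hinv]

lemma apow2 {Pr A : Module.End ℝ g} (hinv : (Pr ∘ₗ A) ∘ₗ Pr = Pr ∘ₗ A) :
    ∀ n : ℕ, (Pr ∘ₗ A) ^ (n + 1) = Pr ∘ₗ (A ^ (n + 1)) := by
  intro n
  induction n with
  | zero => rw [zero_add, pow_one, pow_one]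
  | succ n ih =>
    rw [pow_succ' (Pr ∘ₗ A) (n + 1), ih, pow_succ' A (n + 1), Module.End.mul_eq_comp,
      Module.End.mul_eq_comp, ← LinearMap.comp_assoc, hinv]
    simp only [LinearMap.comp_assoc]

variable [LieRing.IsNilpotent g]

lemma adnil (v : g) : IsNilpotent (LieAlgebra.ad ℝ g v) := by
  obtain ⟨k, hk⟩ := LieAlgebra.nilpotent_ad_of_nilpotent_algebra ℝ g
  exact ⟨k, hk v⟩

lemma atrad (v : g) : tr (LieAlgebra.ad ℝ g v) = 0 := trnil (adnil v)

lemma atrP (h : IsCPS J E) (v : g) :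
    tr (pplus E ∘ₗ (LieAlgebra.ad ℝ g v ∘ₗ pplus E)) = 0 := by
  have hsplit : (LieAlgebra.ad ℝ g v : Module.End ℝ g)
      = LieAlgebra.ad ℝ g (pplus E v) + LieAlgebra.ad ℝ g (pminus E v) := by
    rw [← map_add, aPQ E v]
  rw [hsplit, LinearMap.add_comp, LinearMap.comp_add, map_add]
  have t1 : tr (pplus E ∘ₗ (LieAlgebra.ad ℝ g (pplus E v) ∘ₗ pplus E)) = 0 := by
    rw [ainv1 h v]
    obtain ⟨k, hk⟩ := adnil (pplus E v)
    refine trnil ⟨k + 1, ?_⟩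
    rw [apow1 (ainv1 h v) k, pow_succ, hk, zero_mul, LinearMap.zero_comp]
  have t2 : tr (pplus E ∘ₗ (LieAlgebra.ad ℝ g (pminus E v) ∘ₗ pplus E)) = 0 := by
    rw [← LinearMap.comp_assoc, ainv2 h v]
    obtain ⟨k, hk⟩ := adnil (pminus E v)
    refine trnil ⟨k + 1, ?_⟩
    rw [apow2 (ainv2 h v) k, pow_succ, hk, zero_mul, LinearMap.comp_zero]
  rw [t1, t2, add_zero]

lemma atrQ (h : IsCPS J E) (v : g) :
    tr (pminus E ∘ₗ (LieAlgebra.ad ℝ g v ∘ₗ pminus E)) = 0 := by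
  have hsplit : (LieAlgebra.ad ℝ g v : Module.End ℝ g)
      = LieAlgebra.ad ℝ g (pminus E v) + LieAlgebra.ad ℝ g (pplus E v) := by
    rw [← map_add]
    rw [show pminus E v + pplus E v = v from by rw [add_comm]; exact aPQ E v]
  rw [hsplit, LinearMap.add_comp, LinearMap.comp_add, map_add]
  have t1 : tr (pminus E ∘ₗ (LieAlgebra.ad ℝ g (pminus E v) ∘ₗ pminus E)) = 0 := by
    rw [ainv1m h v]
    obtain ⟨k, hk⟩ := adnil (pminus E v)
    refine trnil ⟨k + 1, ?_⟩
    rw [apow1 (ainv1m h v) k, pow_succ, hk, zero_mul, LinearMap.zero_comp]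
  have t2 : tr (pminus E ∘ₗ (LieAlgebra.ad ℝ g (pplus E v) ∘ₗ pminus E)) = 0 := by
    rw [← LinearMap.comp_assoc, ainv2m h v]
    obtain ⟨k, hk⟩ := adnil (pplus E v)
    refine trnil ⟨k + 1, ?_⟩
    rw [apow2 (ainv2m h v) k, pow_succ, hk, zero_mul, LinearMap.comp_zero]
  rw [t1, t2, add_zero]

lemma atrL (h : IsCPS J E) (v : g) :
    tr (pplus E ∘ₗ (J ∘ₗ (LieAlgebra.ad ℝ g v ∘ₗ (J ∘ₗ pplus E)))) = 0 := by
  rw [atc]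
  have e1 : (J ∘ₗ (LieAlgebra.ad ℝ g v ∘ₗ (J ∘ₗ pplus E))) ∘ₗ pplus E
      = J ∘ₗ (LieAlgebra.ad ℝ g v ∘ₗ (J ∘ₗ pplus E)) := by
    simp only [LinearMap.comp_assoc]
    rw [show pplus E ∘ₗ pplus E = pplus E from oPPc h]
  rw [e1, atc]
  have e2 : (LieAlgebra.ad ℝ g v ∘ₗ (J ∘ₗ pplus E)) ∘ₗ J
      = LieAlgebra.ad ℝ g v ∘ₗ (-(pminus E : Module.End ℝ g)) := by
    simp only [LinearMap.comp_assoc]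
    rw [show J ∘ₗ (pplus E ∘ₗ J) = -(pminus E : Module.End ℝ g) from aJPJ h]
  rw [e2, LinearMap.comp_neg, map_neg]
  have e3 : tr (LieAlgebra.ad ℝ g v ∘ₗ pminus E)
      = tr (pminus E ∘ₗ (LieAlgebra.ad ℝ g v ∘ₗ pminus E)) := by
    rw [atc (pminus E) (LieAlgebra.ad ℝ g v ∘ₗ pminus E)]
    congr 1
    rw [LinearMap.comp_assoc, oQQc h]
  rw [e3, atrQ h v, neg_zero]

lemma atrLm (h : IsCPS J E) (v : g) :
    tr (pminus E ∘ₗ (J ∘ₗ (LieAlgebra.ad ℝ g v ∘ₗ (J ∘ₗ pminus E)))) = 0 := by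
  rw [atc]
  have e1 : (J ∘ₗ (LieAlgebra.ad ℝ g v ∘ₗ (J ∘ₗ pminus E))) ∘ₗ pminus E
      = J ∘ₗ (LieAlgebra.ad ℝ g v ∘ₗ (J ∘ₗ pminus E)) := by
    simp only [LinearMap.comp_assoc]
    rw [show pminus E ∘ₗ pminus E = pminus E from oQQc h]
  rw [e1, atc]
  have e2 : (LieAlgebra.ad ℝ g v ∘ₗ (J ∘ₗ pminus E)) ∘ₗ J
      = LieAlgebra.ad ℝ g v ∘ₗ (-(pplus E : Module.End ℝ g)) := by
    simp only [LinearMap.comp_assoc]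
    rw [show J ∘ₗ (pminus E ∘ₗ J) = -(pplus E : Module.End ℝ g) from aJQJ h]
  rw [e2, LinearMap.comp_neg, map_neg]
  have e3 : tr (LieAlgebra.ad ℝ g v ∘ₗ pplus E)
      = tr (pplus E ∘ₗ (LieAlgebra.ad ℝ g v ∘ₗ pplus E)) := by
    rw [atc (pplus E) (LieAlgebra.ad ℝ g v ∘ₗ pplus E)]
    congr 1
    rw [LinearMap.comp_assoc, oPPc h]
  rw [e3, atrP h v, neg_zero]

lemma atrRp (h : IsCPS J E) (v : g) : tr (RpD J E v) = 0 := by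
  rw [aTopP h v, map_sub, LpD, map_neg, atrL h (pplus E v), atrP h (pplus E v), neg_zero,
    sub_zero]

lemma atrRq (h : IsCPS J E) (v : g) : tr (RqD J E v) = 0 := by
  rw [aTopQ h v, map_sub, LqD, map_neg, atrLm h (pminus E v), atrQ h (pminus E v), neg_zero,
    sub_zero]

lemma atrconn (h : IsCPS J E) (v : g) : tr (cpConn J E v) = 0 := by
  rw [aconnE J E v, map_add, map_add, map_sub, map_neg,
    atrL h (pplus E v), atrLm h (pminus E v), atrQ h (pplus E v), atrP h (pminus E v)]
  norm_num

lemma aTpp (h : IsCPS J E) (x y : g) :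
    tr ((RpD J E x - NpD J E x) ∘ₗ (RpD J E y - NpD J E y)) = 0 := by
  rw [LinearMap.sub_comp, LinearMap.comp_sub, LinearMap.comp_sub, map_sub, map_sub, map_sub]
  have t1 : tr (RpD J E x ∘ₗ RpD J E y) = 0 := by
    rw [atc, aOPIDP h x y, map_add, map_sub, atrRp h _, atc (RpD J E y) (LpD J E x)]
    ring
  have t2 : tr (RpD J E x ∘ₗ NpD J E y) = 0 := by
    rw [atc]
    have hz : NpD J E y ∘ₗ RpD J E x = 0 := by
      simp only [NpD, RpD, LinearMap.comp_assoc, oQPk h, LinearMap.comp_zero]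
    rw [hz, map_zero]
  have t3 : tr (NpD J E x ∘ₗ RpD J E y) = 0 := by
    have hz : NpD J E x ∘ₗ RpD J E y = 0 := by
      simp only [NpD, RpD, LinearMap.comp_assoc, oQPk h, LinearMap.comp_zero]
    rw [hz, map_zero]
  have t4 : tr (NpD J E x ∘ₗ NpD J E y) = 0 := by
    have hz : NpD J E x ∘ₗ NpD J E y = 0 := by
      simp only [NpD, LinearMap.comp_assoc, oQPk h, LinearMap.comp_zero]
    rw [hz, map_zero]
  linarith [t1, t2, t3, t4]

lemma aTqq (h : IsCPS J E) (x y : g) :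
    tr ((RqD J E x - NqD J E x) ∘ₗ (RqD J E y - NqD J E y)) = 0 := by
  rw [LinearMap.sub_comp, LinearMap.comp_sub, LinearMap.comp_sub, map_sub, map_sub, map_sub]
  have t1 : tr (RqD J E x ∘ₗ RqD J E y) = 0 := by
    rw [atc, aOPIDQ h x y, map_add, map_sub, atrRq h _, atc (RqD J E y) (LqD J E x)]
    ring
  have t2 : tr (RqD J E x ∘ₗ NqD J E y) = 0 := by
    rw [atc]
    have hz : NqD J E y ∘ₗ RqD J E x = 0 := by
      simp only [NqD, RqD, LinearMap.comp_assoc, oPQk h, LinearMap.comp_zero]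
    rw [hz, map_zero]
  have t3 : tr (NqD J E x ∘ₗ RqD J E y) = 0 := by
    have hz : NqD J E x ∘ₗ RqD J E y = 0 := by
      simp only [NqD, RqD, LinearMap.comp_assoc, oPQk h, LinearMap.comp_zero]
    rw [hz, map_zero]
  have t4 : tr (NqD J E x ∘ₗ NqD J E y) = 0 := by
    have hz : NqD J E x ∘ₗ NqD J E y = 0 := by
      simp only [NqD, LinearMap.comp_assoc, oPQk h, LinearMap.comp_zero]
    rw [hz, map_zero]
  linarith [t1, t2, t3, t4]

lemma aTpq (h : IsCPS J E) (x y : g) :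
    tr ((RpD J E x - NpD J E x) ∘ₗ (RqD J E y - NqD J E y)) = 0 := by
  rw [LinearMap.sub_comp, LinearMap.comp_sub, LinearMap.comp_sub, map_sub, map_sub, map_sub]
  have t1 : tr (RpD J E x ∘ₗ RqD J E y) = 0 := by
    have hz : RpD J E x ∘ₗ RqD J E y = 0 := by
      simp only [RpD, RqD, LinearMap.comp_assoc, oPQk h, LinearMap.comp_zero]
    rw [hz, map_zero]
  have t2 : tr (RpD J E x ∘ₗ NqD J E y) = 0 := by
    have hz : RpD J E x ∘ₗ NqD J E y = 0 := by
      simp only [RpD, NqD, LinearMap.comp_assoc, oPQk h, LinearMap.comp_zero]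
    rw [hz, map_zero]
  have t3 : tr (NpD J E x ∘ₗ RqD J E y) = 0 := by
    rw [atc]
    have hz : RqD J E y ∘ₗ NpD J E x = 0 := by
      simp only [RqD, NpD, LinearMap.comp_assoc, oQPk h, LinearMap.comp_zero]
    rw [hz, map_zero]
  have t4 : tr (NpD J E x ∘ₗ NqD J E y) = 0 := by
    have e0 : NpD J E x ∘ₗ NqD J E y
        = pplus E ∘ₗ (LieAlgebra.ad ℝ g (pplus E x)
            ∘ₗ (pminus E ∘ₗ (LieAlgebra.ad ℝ g (pminus E y) ∘ₗ pplus E))) := by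
      simp only [NpD, NqD, LinearMap.comp_assoc, oQQk h]
    have hQ1 : (pminus E : Module.End ℝ g) = LinearMap.id - pplus E := by
      ext z
      simp only [LinearMap.sub_apply, LinearMap.id_apply]
      rw [eq_sub_iff_add_eq, add_comm]
      exact aPQ E z
    have e1 : NpD J E x ∘ₗ NqD J E y
        = pplus E ∘ₗ (LieAlgebra.ad ℝ g (pplus E x)
            ∘ₗ (LieAlgebra.ad ℝ g (pminus E y) ∘ₗ pplus E))
          - pplus E ∘ₗ (LieAlgebra.ad ℝ g (pplus E x)
            ∘ₗ (pplus E ∘ₗ (LieAlgebra.ad ℝ g (pminus E y) ∘ₗ pplus E))) := by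
      rw [e0, hQ1]
      simp only [LinearMap.sub_comp, LinearMap.id_comp, LinearMap.comp_sub]
    have c2 : tr (pplus E ∘ₗ (LieAlgebra.ad ℝ g (pplus E x)
            ∘ₗ (pplus E ∘ₗ (LieAlgebra.ad ℝ g (pminus E y) ∘ₗ pplus E))))
        = tr (pplus E ∘ₗ (LieAlgebra.ad ℝ g (pminus E y)
            ∘ₗ (LieAlgebra.ad ℝ g (pplus E x) ∘ₗ pplus E))) := by
      have l1 : tr (pplus E ∘ₗ (LieAlgebra.ad ℝ g (pplus E x)
            ∘ₗ (pplus E ∘ₗ (LieAlgebra.ad ℝ g (pminus E y) ∘ₗ pplus E))))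
          = tr (pplus E ∘ₗ (LieAlgebra.ad ℝ g (pminus E y) ∘ₗ LieAlgebra.ad ℝ g (pplus E x))) := by
        rw [atc]
        have hz : (LieAlgebra.ad ℝ g (pplus E x)
              ∘ₗ (pplus E ∘ₗ (LieAlgebra.ad ℝ g (pminus E y) ∘ₗ pplus E))) ∘ₗ pplus E
            = LieAlgebra.ad ℝ g (pplus E x) ∘ₗ (pplus E ∘ₗ LieAlgebra.ad ℝ g (pminus E y)) := by
          simp only [LinearMap.comp_assoc]
          rw [show pplus E ∘ₗ pplus E = pplus E from oPPc h, ainv2R h y]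
        rw [hz, atc, LinearMap.comp_assoc]
      have l2 : tr (pplus E ∘ₗ (LieAlgebra.ad ℝ g (pminus E y)
            ∘ₗ (LieAlgebra.ad ℝ g (pplus E x) ∘ₗ pplus E)))
          = tr (pplus E ∘ₗ (LieAlgebra.ad ℝ g (pminus E y) ∘ₗ LieAlgebra.ad ℝ g (pplus E x))) := by
        rw [atc]
        have hz : (LieAlgebra.ad ℝ g (pminus E y)
              ∘ₗ (LieAlgebra.ad ℝ g (pplus E x) ∘ₗ pplus E)) ∘ₗ pplus E
            = LieAlgebra.ad ℝ g (pminus E y) ∘ₗ (LieAlgebra.ad ℝ g (pplus E x) ∘ₗ pplus E) := by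
          simp only [LinearMap.comp_assoc]
          rw [show pplus E ∘ₗ pplus E = pplus E from oPPc h]
        rw [hz]
        rw [show LieAlgebra.ad ℝ g (pminus E y) ∘ₗ (LieAlgebra.ad ℝ g (pplus E x) ∘ₗ pplus E)
            = (LieAlgebra.ad ℝ g (pminus E y) ∘ₗ LieAlgebra.ad ℝ g (pplus E x)) ∘ₗ pplus E from by
          simp only [LinearMap.comp_assoc]]
        rw [atc]
      rw [l1, l2]
    have comm : pplus E ∘ₗ (LieAlgebra.ad ℝ g (pplus E x)
            ∘ₗ (LieAlgebra.ad ℝ g (pminus E y) ∘ₗ pplus E))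
          - pplus E ∘ₗ (LieAlgebra.ad ℝ g (pminus E y)
            ∘ₗ (LieAlgebra.ad ℝ g (pplus E x) ∘ₗ pplus E))
        = pplus E ∘ₗ (LieAlgebra.ad ℝ g ⁅pplus E x, pminus E y⁆ ∘ₗ pplus E) := by
      ext z
      simp only [LinearMap.sub_apply, LinearMap.comp_apply, LieAlgebra.ad_apply]
      rw [← map_sub, ← lie_lie]
    rw [e1, map_sub, c2, ← map_sub, comm, atrP h _]
  linarith [t1, t2, t3, t4]

lemma aTqp (h : IsCPS J E) (x y : g) :
    tr ((RqD J E x - NqD J E x) ∘ₗ (RpD J E y - NpD J E y)) = 0 := by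
  rw [LinearMap.sub_comp, LinearMap.comp_sub, LinearMap.comp_sub, map_sub, map_sub, map_sub]
  have t1 : tr (RqD J E x ∘ₗ RpD J E y) = 0 := by
    have hz : RqD J E x ∘ₗ RpD J E y = 0 := by
      simp only [RqD, RpD, LinearMap.comp_assoc, oQPk h, LinearMap.comp_zero]
    rw [hz, map_zero]
  have t2 : tr (RqD J E x ∘ₗ NpD J E y) = 0 := by
    have hz : RqD J E x ∘ₗ NpD J E y = 0 := by
      simp only [RqD, NpD, LinearMap.comp_assoc, oQPk h, LinearMap.comp_zero]
    rw [hz, map_zero]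
  have t3 : tr (NqD J E x ∘ₗ RpD J E y) = 0 := by
    rw [atc]
    have hz : RpD J E y ∘ₗ NqD J E x = 0 := by
      simp only [RpD, NqD, LinearMap.comp_assoc, oPQk h, LinearMap.comp_zero]
    rw [hz, map_zero]
  have t4 : tr (NqD J E x ∘ₗ NpD J E y) = 0 := by
    have e0 : NqD J E x ∘ₗ NpD J E y
        = pminus E ∘ₗ (LieAlgebra.ad ℝ g (pminus E x)
            ∘ₗ (pplus E ∘ₗ (LieAlgebra.ad ℝ g (pplus E y) ∘ₗ pminus E))) := by
      simp only [NqD, NpD, LinearMap.comp_assoc, oPPk h]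
    have hP1 : (pplus E : Module.End ℝ g) = LinearMap.id - pminus E := by
      ext z
      simp only [LinearMap.sub_apply, LinearMap.id_apply]
      rw [eq_sub_iff_add_eq]
      exact aPQ E z
    have e1 : NqD J E x ∘ₗ NpD J E y
        = pminus E ∘ₗ (LieAlgebra.ad ℝ g (pminus E x)
            ∘ₗ (LieAlgebra.ad ℝ g (pplus E y) ∘ₗ pminus E))
          - pminus E ∘ₗ (LieAlgebra.ad ℝ g (pminus E x)
            ∘ₗ (pminus E ∘ₗ (LieAlgebra.ad ℝ g (pplus E y) ∘ₗ pminus E))) := by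
      rw [e0, hP1]
      simp only [LinearMap.sub_comp, LinearMap.id_comp, LinearMap.comp_sub]
    have c2 : tr (pminus E ∘ₗ (LieAlgebra.ad ℝ g (pminus E x)
            ∘ₗ (pminus E ∘ₗ (LieAlgebra.ad ℝ g (pplus E y) ∘ₗ pminus E))))
        = tr (pminus E ∘ₗ (LieAlgebra.ad ℝ g (pplus E y)
            ∘ₗ (LieAlgebra.ad ℝ g (pminus E x) ∘ₗ pminus E))) := by
      have l1 : tr (pminus E ∘ₗ (LieAlgebra.ad ℝ g (pminus E x)
            ∘ₗ (pminus E ∘ₗ (LieAlgebra.ad ℝ g (pplus E y) ∘ₗ pminus E))))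
          = tr (pminus E ∘ₗ (LieAlgebra.ad ℝ g (pplus E y) ∘ₗ LieAlgebra.ad ℝ g (pminus E x))) := by
        rw [atc]
        have hz : (LieAlgebra.ad ℝ g (pminus E x)
              ∘ₗ (pminus E ∘ₗ (LieAlgebra.ad ℝ g (pplus E y) ∘ₗ pminus E))) ∘ₗ pminus E
            = LieAlgebra.ad ℝ g (pminus E x) ∘ₗ (pminus E ∘ₗ LieAlgebra.ad ℝ g (pplus E y)) := by
          simp only [LinearMap.comp_assoc]
          rw [show pminus E ∘ₗ pminus E = pminus E from oQQc h, ainv2mR h y]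
        rw [hz, atc, LinearMap.comp_assoc]
      have l2 : tr (pminus E ∘ₗ (LieAlgebra.ad ℝ g (pplus E y)
            ∘ₗ (LieAlgebra.ad ℝ g (pminus E x) ∘ₗ pminus E)))
          = tr (pminus E ∘ₗ (LieAlgebra.ad ℝ g (pplus E y) ∘ₗ LieAlgebra.ad ℝ g (pminus E x))) := by
        rw [atc]
        have hz : (LieAlgebra.ad ℝ g (pplus E y)
              ∘ₗ (LieAlgebra.ad ℝ g (pminus E x) ∘ₗ pminus E)) ∘ₗ pminus E
            = LieAlgebra.ad ℝ g (pplus E y) ∘ₗ (LieAlgebra.ad ℝ g (pminus E x) ∘ₗ pminus E) := by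
          simp only [LinearMap.comp_assoc]
          rw [show pminus E ∘ₗ pminus E = pminus E from oQQc h]
        rw [hz]
        rw [show LieAlgebra.ad ℝ g (pplus E y) ∘ₗ (LieAlgebra.ad ℝ g (pminus E x) ∘ₗ pminus E)
            = (LieAlgebra.ad ℝ g (pplus E y) ∘ₗ LieAlgebra.ad ℝ g (pminus E x)) ∘ₗ pminus E from by
          simp only [LinearMap.comp_assoc]]
        rw [atc]
      rw [l1, l2]
    have comm : pminus E ∘ₗ (LieAlgebra.ad ℝ g (pminus E x)
            ∘ₗ (LieAlgebra.ad ℝ g (pplus E y) ∘ₗ pminus E))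
          - pminus E ∘ₗ (LieAlgebra.ad ℝ g (pplus E y)
            ∘ₗ (LieAlgebra.ad ℝ g (pminus E x) ∘ₗ pminus E))
        = pminus E ∘ₗ (LieAlgebra.ad ℝ g ⁅pminus E x, pplus E y⁆ ∘ₗ pminus E) := by
      ext z
      simp only [LinearMap.sub_apply, LinearMap.comp_apply, LieAlgebra.ad_apply]
      rw [← map_sub, ← lie_lie]
    rw [e1, map_sub, c2, ← map_sub, comm, atrQ h _]
  linarith [t1, t2, t3, t4]

end TraceFacts

end CPSProof

/-- Let `g` be a (finite-dimensional) nilpotent real Lie algebra with a complex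
product structure `{J,E}` and associated torsion-free connection `∇ = cpConn J E`.
Then the Ricci tensor of `∇` vanishes identically. -/
theorem cpConn_ricci_flat [FiniteDimensional ℝ g] [LieRing.IsNilpotent g]
    (J E : Module.End ℝ g) (h : IsCPS J E) :
    ∀ x y : g, cpRicci J E x y = 0 := by
  intro x y
  have hflip : ∀ v : g, (cpConn J E).flip v
      = cpConn J E v - LieAlgebra.ad ℝ g v := by
    intro v
    ext u
    simp only [LinearMap.flip_apply, LinearMap.sub_apply, LieAlgebra.ad_apply]
    have h2 : cpConn J E u v = cpConn J E v u + ⁅u, v⁆ := by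
      rw [← CPSProof.ators h u v]; abel
    rw [h2, show ⁅u, v⁆ = -⁅v, u⁆ from (lie_skew _ _).symm]
    abel
  have key : LinearMap.trace ℝ g
      ((cpConn J E x - LieAlgebra.ad ℝ g x) ∘ₗ (cpConn J E y - LieAlgebra.ad ℝ g y)) = 0 := by
    have hx : cpConn J E x - LieAlgebra.ad ℝ g x
        = (cpConn J E (pplus E x) - LieAlgebra.ad ℝ g (pplus E x))
          + (cpConn J E (pminus E x) - LieAlgebra.ad ℝ g (pminus E x)) := by
      conv_lhs => rw [show x = pplus E x + pminus E x from (CPSProof.aPQ E x).symm]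
      rw [map_add, map_add]
      abel
    have hy : cpConn J E y - LieAlgebra.ad ℝ g y
        = (cpConn J E (pplus E y) - LieAlgebra.ad ℝ g (pplus E y))
          + (cpConn J E (pminus E y) - LieAlgebra.ad ℝ g (pminus E y)) := by
      conv_lhs => rw [show y = pplus E y + pminus E y from (CPSProof.aPQ E y).symm]
      rw [map_add, map_add]
      abel
    rw [hx, hy, CPSProof.aBP h x, CPSProof.aBQ h x, CPSProof.aBP h y, CPSProof.aBQ h y,
      LinearMap.add_comp, LinearMap.comp_add, LinearMap.comp_add, map_add, map_add, map_add,
      CPSProof.aTpp h x y, CPSProof.aTpq h x y, CPSProof.aTqp h x y, CPSProof.aTqq h x y]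
    ring
  have e1 := CPSProof.atrconn h (cpConn J E x y)
  have e2 := CPSProof.atrad (g := g) (cpConn J E x y)
  have c1 : LinearMap.trace ℝ g (cpConn J E y ∘ₗ LieAlgebra.ad ℝ g x)
      = LinearMap.trace ℝ g (LieAlgebra.ad ℝ g x ∘ₗ cpConn J E y) := CPSProof.atc _ _
  have c2 : LinearMap.trace ℝ g (LieAlgebra.ad ℝ g y ∘ₗ LieAlgebra.ad ℝ g x)
      = LinearMap.trace ℝ g (LieAlgebra.ad ℝ g x ∘ₗ LieAlgebra.ad ℝ g y) := CPSProof.atc _ _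
  rw [LinearMap.sub_comp, LinearMap.comp_sub, LinearMap.comp_sub, map_sub, map_sub,
    map_sub] at key
  unfold cpRicci
  rw [hflip, hflip, LinearMap.comp_sub, LinearMap.comp_neg, LinearMap.sub_comp]
  simp only [map_sub, map_neg]
  rw [e1, e2]
  linarith [key, c1, c2]
end

section
/- Let h be a real Lie algebra equipped with a complex product structure {J,E} whose eigenspace Lie subalgebras h₊ and h₋ = J h₊ are both abelian (an abelian complex product structure). If the centre z of h is nontrivial, then z ∩ h₊ ≠ {0}, z ∩ h₋ ≠ {0}, z = (z ∩ h₊) ⊕ (z ∩ h₋), and J(z ∩ h₊) = z ∩ h₋. -/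
open Module LinearMap

variable {g : Type*} [LieRing g] [LieAlgebra ℝ g]

/-- The centre of a Lie algebra, as a submodule. -/
def centre (g : Type*) [LieRing g] [LieAlgebra ℝ g] : Submodule ℝ g where
  carrier := {x | ∀ y : g, ⁅x, y⁆ = 0}
  zero_mem' := by intro y; simp
  add_mem' := by intro a b ha hb y; rw [add_lie, ha y, hb y, add_zero]
  smul_mem' := by intro c a ha y; rw [smul_lie, ha y, smul_zero]

/-- Let `h` (here called `g`) be a real Lie algebra with an abelian complex product
structure `{J,E}`, i.e. both eigenspace subalgebras `h₊` and `h₋ = J h₊` are abelian.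
If the centre `z` of `h` is nontrivial, then `z ∩ h₊ ≠ 0`, `z ∩ h₋ ≠ 0`,
`z = (z ∩ h₊) ⊕ (z ∩ h₋)` and `J (z ∩ h₊) = z ∩ h₋`. -/
theorem abelian_cps_centre (J E : Module.End ℝ g) (h : IsCPS J E)
    (hpos : ∀ x ∈ posPart E, ∀ y ∈ posPart E, ⁅x, y⁆ = 0)
    (hneg : ∀ x ∈ negPart E, ∀ y ∈ negPart E, ⁅x, y⁆ = 0)
    (hz : centre g ≠ ⊥) :
    centre g ⊓ posPart E ≠ ⊥ ∧
    centre g ⊓ negPart E ≠ ⊥ ∧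
    (centre g ⊓ posPart E) ⊔ (centre g ⊓ negPart E) = centre g ∧
    Disjoint (centre g ⊓ posPart E) (centre g ⊓ negPart E) ∧
    Submodule.map J (centre g ⊓ posPart E) = centre g ⊓ negPart E := by

  obtain ⟨⟨hJ2, hJint⟩, ⟨hE2, -, -, -⟩, hJE⟩ := h
  -- membership characterizations
  have memp : ∀ x : g, x ∈ posPart E ↔ E x = x := fun x => Iff.rfl
  have memn : ∀ x : g, x ∈ negPart E ↔ E x = -x := fun x => Iff.rfl
  have memc : ∀ x : g, x ∈ centre g ↔ ∀ y : g, ⁅x, y⁆ = 0 := fun x => Iff.rfl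
  -- J swaps the eigenspaces
  have hJp : ∀ x : g, E x = x → E (J x) = -(J x) := by
    intro x hx
    have h1 := hJE x
    rw [hx] at h1
    exact neg_eq_iff_eq_neg.mp h1.symm
  have hJn : ∀ x : g, E x = -x → E (J x) = J x := by
    intro x hx
    have h1 := hJE x
    rw [hx, map_neg] at h1
    exact (neg_injective h1).symm
  -- decomposition into eigenspace components
  have hEp : ∀ z : g, E ((1/2 : ℝ) • (z + E z)) = (1/2 : ℝ) • (z + E z) := by
    intro z
    rw [map_smul, map_add, hE2, add_comm]
  have hEn : ∀ z : g, E ((1/2 : ℝ) • (z - E z)) = -((1/2 : ℝ) • (z - E z)) := by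
    intro z
    rw [map_smul, map_sub, hE2, ← smul_neg, neg_sub]
  have hsum : ∀ z : g, (1/2 : ℝ) • (z + E z) + (1/2 : ℝ) • (z - E z) = z := by
    intro z
    rw [← smul_add]
    have : z + E z + (z - E z) = (2 : ℝ) • z := by
      rw [two_smul]; abel
    rw [this, smul_smul]
    norm_num
  -- the eigenspace components of a central element are central
  have hcp : ∀ z : g, z ∈ centre g → (1/2 : ℝ) • (z + E z) ∈ centre g := by
    intro z hzc y
    set p := (1/2 : ℝ) • (z + E z) with hp
    set q := (1/2 : ℝ) • (z - E z) with hq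
    have hy : y = (1/2 : ℝ) • (y + E y) + (1/2 : ℝ) • (y - E y) := (hsum y).symm
    rw [hy, lie_add]
    have h1 : ⁅p, (1/2 : ℝ) • (y + E y)⁆ = 0 :=
      hpos p (hEp z) _ (hEp y)
    have h2 : ⁅p, (1/2 : ℝ) • (y - E y)⁆ = 0 := by
      have hz' : ⁅z, (1/2 : ℝ) • (y - E y)⁆ = 0 := hzc _
      have hq' : ⁅q, (1/2 : ℝ) • (y - E y)⁆ = 0 :=
        hneg q (hEn z) _ (hEn y)
      have := hsum z
      calc ⁅p, (1/2 : ℝ) • (y - E y)⁆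
          = ⁅p + q, (1/2 : ℝ) • (y - E y)⁆ - ⁅q, (1/2 : ℝ) • (y - E y)⁆ := by
            rw [add_lie]; abel
        _ = 0 := by rw [this, hz', hq', sub_zero]
    rw [h1, h2, add_zero]
  have hcn : ∀ z : g, z ∈ centre g → (1/2 : ℝ) • (z - E z) ∈ centre g := by
    intro z hzc
    have hp := hcp z hzc
    have := hsum z
    have : (1/2 : ℝ) • (z - E z) = z - (1/2 : ℝ) • (z + E z) := by
      rw [eq_sub_iff_add_eq, add_comm, this]
    rw [this]
    exact sub_mem hzc hp
  -- abelian: ⁅J x, J y⁆ = ⁅x, y⁆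
  have hab : ∀ x y : g, ⁅J x, J y⁆ = ⁅x, y⁆ := by
    have mix : ∀ a b : g, E a = a → E b = -b → ⁅J a, J b⁆ = ⁅a, b⁆ := by
      intro a b ha hb
      have h1 := hJint a b
      have h2 : ⁅J a, b⁆ = 0 := hneg _ (hJp a ha) _ hb
      have h3 : ⁅a, J b⁆ = 0 := hpos _ ha _ (hJn b hb)
      rw [h2, h3, zero_add, zero_add] at h1
      have h4 := congrArg J h1
      rw [hJ2, hJ2] at h4
      exact neg_injective h4.symm
    intro x y
    have hpp : ⁅J ((1/2:ℝ) • (x + E x)), J ((1/2:ℝ) • (y + E y))⁆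
        = ⁅(1/2:ℝ) • (x + E x), (1/2:ℝ) • (y + E y)⁆ := by
      rw [hneg _ (hJp _ (hEp x)) _ (hJp _ (hEp y)), hpos _ (hEp x) _ (hEp y)]
    have hnn : ⁅J ((1/2:ℝ) • (x - E x)), J ((1/2:ℝ) • (y - E y))⁆
        = ⁅(1/2:ℝ) • (x - E x), (1/2:ℝ) • (y - E y)⁆ := by
      rw [hpos _ (hJn _ (hEn x)) _ (hJn _ (hEn y)), hneg _ (hEn x) _ (hEn y)]
    have hpn : ⁅J ((1/2:ℝ) • (x + E x)), J ((1/2:ℝ) • (y - E y))⁆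
        = ⁅(1/2:ℝ) • (x + E x), (1/2:ℝ) • (y - E y)⁆ :=
      mix _ _ (hEp x) (hEn y)
    have hnp : ⁅J ((1/2:ℝ) • (x - E x)), J ((1/2:ℝ) • (y + E y))⁆
        = ⁅(1/2:ℝ) • (x - E x), (1/2:ℝ) • (y + E y)⁆ := by
      have h5 := mix _ _ (hEp y) (hEn x)
      calc ⁅J ((1/2:ℝ) • (x - E x)), J ((1/2:ℝ) • (y + E y))⁆
          = -⁅J ((1/2:ℝ) • (y + E y)), J ((1/2:ℝ) • (x - E x))⁆ :=
            (neg_eq_iff_eq_neg.mpr (lie_skew _ _).symm).symm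
        _ = -⁅(1/2:ℝ) • (y + E y), (1/2:ℝ) • (x - E x)⁆ := by rw [h5]
        _ = ⁅(1/2:ℝ) • (x - E x), (1/2:ℝ) • (y + E y)⁆ := lie_skew _ _
    calc ⁅J x, J y⁆
        = ⁅J ((1/2:ℝ) • (x + E x) + (1/2:ℝ) • (x - E x)),
            J ((1/2:ℝ) • (y + E y) + (1/2:ℝ) • (y - E y))⁆ := by
          rw [hsum x, hsum y]
      _ = ⁅J ((1/2:ℝ) • (x + E x)), J ((1/2:ℝ) • (y + E y))⁆
          + ⁅J ((1/2:ℝ) • (x + E x)), J ((1/2:ℝ) • (y - E y))⁆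
          + (⁅J ((1/2:ℝ) • (x - E x)), J ((1/2:ℝ) • (y + E y))⁆
          + ⁅J ((1/2:ℝ) • (x - E x)), J ((1/2:ℝ) • (y - E y))⁆) := by
          rw [map_add, map_add, add_lie, lie_add, lie_add]
      _ = ⁅(1/2:ℝ) • (x + E x), (1/2:ℝ) • (y + E y)⁆
          + ⁅(1/2:ℝ) • (x + E x), (1/2:ℝ) • (y - E y)⁆
          + (⁅(1/2:ℝ) • (x - E x), (1/2:ℝ) • (y + E y)⁆
          + ⁅(1/2:ℝ) • (x - E x), (1/2:ℝ) • (y - E y)⁆) := by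
          rw [hpp, hnn, hpn, hnp]
      _ = ⁅(1/2:ℝ) • (x + E x) + (1/2:ℝ) • (x - E x),
            (1/2:ℝ) • (y + E y) + (1/2:ℝ) • (y - E y)⁆ := by
          rw [add_lie, lie_add, lie_add]
      _ = ⁅x, y⁆ := by rw [hsum x, hsum y]
  -- centre is J-invariant
  have hJc : ∀ z : g, z ∈ centre g → J z ∈ centre g := by
    intro z hzc y
    have h1 : J (-(J y)) = y := by rw [map_neg, hJ2, neg_neg]
    calc ⁅J z, y⁆ = ⁅J z, J (-(J y))⁆ := by rw [h1]
      _ = ⁅z, -(J y)⁆ := hab _ _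
      _ = 0 := hzc _
  -- J is injective
  have hJinj : ∀ x : g, J x = 0 → x = 0 := by
    intro x hx
    have := hJ2 x
    rw [hx, map_zero] at this
    rw [← neg_neg x, ← this, neg_zero]
  -- nontriviality
  obtain ⟨z, hzc, hz0⟩ := Submodule.exists_mem_ne_zero_of_ne_bot hz
  have hcase : (1/2:ℝ) • (z + E z) ≠ 0 ∨ (1/2:ℝ) • (z - E z) ≠ 0 := by
    by_contra hc
    push_neg at hc
    apply hz0
    rw [← hsum z, hc.1, hc.2, add_zero]
  have hposne : centre g ⊓ posPart E ≠ ⊥ := by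
    rcases hcase with h1 | h1
    · exact Submodule.ne_bot_iff _ |>.mpr ⟨_, ⟨hcp z hzc, hEp z⟩, h1⟩
    · refine Submodule.ne_bot_iff _ |>.mpr
        ⟨J ((1/2:ℝ) • (z - E z)), ⟨hJc _ (hcn z hzc), hJn _ (hEn z)⟩, ?_⟩
      intro h2; exact h1 (hJinj _ h2)
  have hnegne : centre g ⊓ negPart E ≠ ⊥ := by
    rcases hcase with h1 | h1
    · refine Submodule.ne_bot_iff _ |>.mpr
        ⟨J ((1/2:ℝ) • (z + E z)), ⟨hJc _ (hcp z hzc), hJp _ (hEp z)⟩, ?_⟩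
      intro h2; exact h1 (hJinj _ h2)
    · exact Submodule.ne_bot_iff _ |>.mpr ⟨_, ⟨hcn z hzc, hEn z⟩, h1⟩
  refine ⟨hposne, hnegne, ?_, ?_, ?_⟩
  · apply le_antisymm
    · exact sup_le inf_le_left inf_le_left
    · intro w hw
      rw [← hsum w]
      exact add_mem (Submodule.mem_sup_left ⟨hcp w hw, hEp w⟩)
        (Submodule.mem_sup_right ⟨hcn w hw, hEn w⟩)
  · rw [disjoint_iff, eq_bot_iff]
    rintro w ⟨⟨-, hw1⟩, ⟨-, hw2⟩⟩
    have hww : w = -w := hw1.symm.trans hw2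
    have h3 : (2:ℝ) • w = 0 := by
      rw [two_smul]
      nth_rewrite 2 [hww]
      exact add_neg_cancel w
    have hw0 : w = 0 := by
      have := smul_eq_zero.mp h3
      rcases this with h | h
      · norm_num at h
      · exact h
    exact (Submodule.mem_bot ℝ).mpr hw0
  · apply le_antisymm
    · rintro w ⟨u, ⟨huc, hup⟩, rfl⟩
      exact ⟨hJc _ huc, hJp _ hup⟩
    · rintro w ⟨hwc, hwn⟩
      refine ⟨-(J w), ⟨neg_mem (hJc _ hwc), neg_mem (hJn _ hwn)⟩, ?_⟩
      rw [map_neg, hJ2, neg_neg]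
end

section
/- Let g be a 6-dimensional nilpotent real Lie algebra equipped with a complex product structure {J,E}, suppose the eigenspace subalgebra g₊ is isomorphic to the 3-dimensional Heisenberg Lie algebra h₃ with basis {e₁,e₂,e₃} satisfying [e₁,e₂] = e₃ and [e₃,g₊] = 0, and suppose the eigenspace subalgebra g₋ = J g₊ is abelian. Then the element f₃ := J e₃ of g₋ belongs to the centre of g. -/
open Module LinearMap

variable {g : Type*} [LieRing g] [LieAlgebra ℝ g]

namespace F3Aux

variable (J E : Module.End ℝ g)

/-- projection onto the +1 eigenspace -/
noncomputable def Pp : Module.End ℝ g := (1/2 : ℝ) • ((1 : Module.End ℝ g) + E)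

/-- projection onto the −1 eigenspace -/
noncomputable def Pn : Module.End ℝ g := (1/2 : ℝ) • ((1 : Module.End ℝ g) - E)

lemma Pp_apply (u : g) : Pp E u = (1/2 : ℝ) • (u + E u) := by
  simp [Pp]

lemma Pn_apply (u : g) : Pn E u = (1/2 : ℝ) • (u - E u) := by
  simp [Pn]

lemma Pp_add_Pn (u : g) : Pp E u + Pn E u = u := by
  rw [Pp_apply, Pn_apply]; module

variable {E} in
lemma E_Pp (hE2 : ∀ x : g, E (E x) = x) (u : g) : E (Pp E u) = Pp E u := by
  rw [Pp_apply, map_smul, map_add, hE2]; module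

variable {E} in
lemma E_Pn (hE2 : ∀ x : g, E (E x) = x) (u : g) : E (Pn E u) = -(Pn E u) := by
  rw [Pn_apply, map_smul, map_sub, hE2]; module

variable {E} in
lemma Pp_pos {v : g} (hv : E v = v) : Pp E v = v := by
  rw [Pp_apply, hv]; module

variable {E} in
lemma Pp_neg {v : g} (hv : E v = -v) : Pp E v = 0 := by
  rw [Pp_apply, hv]; module

variable {E} in
lemma Pn_pos {v : g} (hv : E v = v) : Pn E v = 0 := by
  rw [Pn_apply, hv]; module

variable {E} in
lemma Pn_neg {v : g} (hv : E v = -v) : Pn E v = v := by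
  rw [Pn_apply, hv]; module

variable {J E} in
lemma E_J_pos (hJE : ∀ x : g, J (E x) = -E (J x)) {v : g} (hv : E v = v) :
    E (J v) = -(J v) := by
  have h1 := hJE v
  rw [hv] at h1
  have h2 := congrArg Neg.neg h1
  rw [neg_neg] at h2
  exact h2.symm

variable {J E} in
lemma E_J_neg (hJE : ∀ x : g, J (E x) = -E (J x)) {v : g} (hv : E v = -v) :
    E (J v) = J v := by
  have h1 := hJE v
  rw [hv, map_neg] at h1
  exact (neg_injective h1).symm

variable {E} in
lemma E_bracket_pos (hE2 : ∀ x : g, E (E x) = x)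
    (hEint : ∀ x y : g, E ⁅x, y⁆ = ⁅E x, y⁆ + ⁅x, E y⁆ - E ⁅E x, E y⁆)
    {x y : g} (hx : E x = x) (hy : E y = y) : E ⁅x, y⁆ = ⁅x, y⁆ := by
  have h := hEint x y
  rw [hx, hy] at h
  have h3 : E ⁅x, y⁆ + E ⁅x, y⁆ = ⁅x, y⁆ + ⁅x, y⁆ := by
    nth_rewrite 1 [h]; abel
  have h2 : (2:ℝ) • (E ⁅x, y⁆) = (2:ℝ) • ⁅x, y⁆ := by
    rw [two_smul, two_smul]; exact h3
  have := congrArg (fun z => (2:ℝ)⁻¹ • z) h2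
  simpa [smul_smul] using this


/-- `bop x v` is the element `b(x,v) ∈ g₊` with `⁅x, Jv⁆ = a(x,v) + J b(x,v)`. -/
noncomputable def bop (x : g) : Module.End ℝ g :=
  -(J ∘ₗ Pn E ∘ₗ (LieAlgebra.ad ℝ g x : Module.End ℝ g) ∘ₗ J)

/-- `aop x v` is the element `a(x,v) ∈ g₊` with `⁅x, Jv⁆ = a(x,v) + J b(x,v)`. -/
noncomputable def aop (x : g) : Module.End ℝ g :=
  Pp E ∘ₗ (LieAlgebra.ad ℝ g x : Module.End ℝ g) ∘ₗ J

/-- `mop q z = a(z,q)`, as a linear endomorphism of `z`. -/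
noncomputable def mop (q : g) : Module.End ℝ g :=
  -(Pp E ∘ₗ (LieAlgebra.ad ℝ g (J q) : Module.End ℝ g))

lemma bop_apply (x v : g) : bop J E x v = -(J (Pn E ⁅x, J v⁆)) := by
  simp [bop, LieAlgebra.ad_apply]

lemma aop_apply (x v : g) : aop J E x v = Pp E ⁅x, J v⁆ := by
  simp [aop, LieAlgebra.ad_apply]

lemma mop_apply (q z : g) : mop J E q z = -(Pp E ⁅J q, z⁆) := by
  simp [mop, LieAlgebra.ad_apply]

lemma mop_eq_aop (q z : g) : mop J E q z = aop J E z q := by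
  rw [mop_apply, aop_apply, ← lie_skew, map_neg, neg_neg]

variable {J E} in
lemma aop_posmem (hE2 : ∀ x : g, E (E x) = x) (x v : g) :
    E (aop J E x v) = aop J E x v := by
  rw [aop_apply]; exact E_Pp hE2 _

variable {J E} in
lemma mop_posmem (hE2 : ∀ x : g, E (E x) = x) (q z : g) :
    E (mop J E q z) = mop J E q z := by
  rw [mop_eq_aop]; exact aop_posmem hE2 _ _

variable {J E} in
lemma bop_posmem (hE2 : ∀ x : g, E (E x) = x) (hJE : ∀ x : g, J (E x) = -E (J x))
    (x v : g) : E (bop J E x v) = bop J E x v := by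
  rw [bop_apply, map_neg]
  rw [E_J_neg hJE (E_Pn hE2 _)]

variable {J E} in
lemma decomp (hJ2 : ∀ x : g, J (J x) = -x) (x v : g) :
    ⁅x, J v⁆ = aop J E x v + J (bop J E x v) := by
  rw [aop_apply, bop_apply, map_neg, hJ2, neg_neg, Pp_add_Pn]

variable {J E} in
lemma cancel (hJ2 : ∀ x : g, J (J x) = -x) (hJE : ∀ x : g, J (E x) = -E (J x))
    {p q : g} (hp : E p = p) (hq : E q = q) (h0 : p + J q = 0) : p = 0 ∧ q = 0 := by
  have hPp := congrArg (Pp E) h0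
  rw [map_add, Pp_pos hp, Pp_neg (E_J_pos hJE hq), add_zero, map_zero] at hPp
  -- hPp : p = 0
  have hJq : J q = 0 := by rw [hPp, zero_add] at h0; exact h0
  have := congrArg J hJq
  rw [hJ2, map_zero] at this
  exact ⟨hPp, neg_eq_zero.mp this⟩

section WithCPS

variable {J E}
variable (hcps : IsCPS J E)
variable (hab : ∀ p q : g, E p = p → E q = q → ⁅J p, J q⁆ = 0)

include hcps

lemma hJ2' : ∀ x : g, J (J x) = -x := hcps.1.1
lemma hJint' : ∀ x y : g, J ⁅x, y⁆ = ⁅J x, y⁆ + ⁅x, J y⁆ + J ⁅J x, J y⁆ := hcps.1.2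
lemma hE2' : ∀ x : g, E (E x) = x := hcps.2.1.1
lemma hEint' : ∀ x y : g, E ⁅x, y⁆ = ⁅E x, y⁆ + ⁅x, E y⁆ - E ⁅E x, E y⁆ := hcps.2.1.2.2.2
lemma hJE' : ∀ x : g, J (E x) = -E (J x) := hcps.2.2

lemma bracket_posmem {x y : g} (hx : E x = x) (hy : E y = y) : E ⁅x, y⁆ = ⁅x, y⁆ :=
  E_bracket_pos (hE2' hcps) (hEint' hcps) hx hy

include hab in
/-- antisymmetrization identity:  `b(p,q) − b(q,p) = ⁅p,q⁆`. -/
lemma antisym {p q : g} (hp : E p = p) (hq : E q = q) :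
    bop J E p q - bop J E q p = ⁅p, q⁆ := by
  have hJ2 := hJ2' hcps
  have hE2 := hE2' hcps
  have hJE := hJE' hcps
  have h1 := hJint' hcps p q
  rw [hab p q hp hq, map_zero, add_zero, (lie_skew (x := J p) (y := q)).symm,
    decomp (J := J) (E := E) hJ2 q p, decomp (J := J) (E := E) hJ2 p q] at h1
  have key : (aop J E p q - aop J E q p) +
      J (bop J E p q - bop J E q p - ⁅p, q⁆) = 0 := by
    rw [map_sub, map_sub, h1]; abel
  have m1 : E (aop J E p q - aop J E q p) = aop J E p q - aop J E q p := by
    rw [map_sub, aop_posmem hE2, aop_posmem hE2]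
  have m2 : E (bop J E p q - bop J E q p - ⁅p, q⁆)
      = bop J E p q - bop J E q p - ⁅p, q⁆ := by
    rw [map_sub, map_sub, bop_posmem hE2 hJE, bop_posmem hE2 hJE,
      bracket_posmem hcps hp hq]
  obtain ⟨-, h2⟩ := cancel hJ2 hJE m1 m2 key
  exact sub_eq_zero.mp h2

include hab in
/-- representation identity: `b(x,b(y,z)) − b(y,b(x,z)) = b(⁅x,y⁆,z)`. -/
lemma repid {x y z : g} (hx : E x = x) (hy : E y = y) :
    bop J E x (bop J E y z) - bop J E y (bop J E x z) = bop J E ⁅x, y⁆ z := by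
  have hJ2 := hJ2' hcps
  have hE2 := hE2' hcps
  have hJE := hJE' hcps
  have h0 := leibniz_lie x y (J z)
  rw [decomp (J := J) (E := E) hJ2 y z, decomp (J := J) (E := E) hJ2 x z,
    decomp (J := J) (E := E) hJ2 ⁅x, y⁆ z] at h0
  rw [lie_add, lie_add, decomp (J := J) (E := E) hJ2 x (bop J E y z),
    decomp (J := J) (E := E) hJ2 y (bop J E x z)] at h0
  -- h0 : ⁅x, aop y z⁆ + (aop x (bop y z) + J (bop x (bop y z)))
  --    = (aop ⁅x,y⁆ z + J (bop ⁅x,y⁆ z)) + (⁅y, aop x z⁆ + (aop y (bop x z) + J (...)))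
  have key : (⁅x, aop J E y z⁆ + aop J E x (bop J E y z) - aop J E ⁅x, y⁆ z
        - ⁅y, aop J E x z⁆ - aop J E y (bop J E x z)) +
      J (bop J E x (bop J E y z) - bop J E y (bop J E x z) - bop J E ⁅x, y⁆ z) = 0 := by
    rw [map_sub, map_sub]
    have h0' := sub_eq_zero.mpr h0
    rw [← h0']
    abel
  have m1 : E (⁅x, aop J E y z⁆ + aop J E x (bop J E y z) - aop J E ⁅x, y⁆ z
        - ⁅y, aop J E x z⁆ - aop J E y (bop J E x z))
      = ⁅x, aop J E y z⁆ + aop J E x (bop J E y z) - aop J E ⁅x, y⁆ z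
        - ⁅y, aop J E x z⁆ - aop J E y (bop J E x z) := by
    rw [map_sub, map_sub, map_sub, map_add, aop_posmem hE2, aop_posmem hE2,
      aop_posmem hE2, bracket_posmem hcps hx (aop_posmem hE2 y z),
      bracket_posmem hcps hy (aop_posmem hE2 x z)]
  have m2 : E (bop J E x (bop J E y z) - bop J E y (bop J E x z) - bop J E ⁅x, y⁆ z)
      = bop J E x (bop J E y z) - bop J E y (bop J E x z) - bop J E ⁅x, y⁆ z := by
    rw [map_sub, map_sub, bop_posmem hE2 hJE, bop_posmem hE2 hJE, bop_posmem hE2 hJE]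
  obtain ⟨-, h2⟩ := cancel hJ2 hJE m1 m2 key
  exact sub_eq_zero.mp h2

end WithCPS


/-- iterated bracket word -/
def adw (l : List g) (u : g) : g := l.foldr (fun x v => ⁅x, v⁆) u

/-- iterated `b`-word -/
noncomputable def bw (l : List g) (v : g) : g := l.foldr (fun x v => bop J E x v) v

lemma bw_nil (v : g) : bw J E [] v = v := rfl

lemma bw_cons (x : g) (l : List g) (v : g) :
    bw J E (x :: l) v = bop J E x (bw J E l v) := rfl

lemma bw_concat (l : List g) (x v : g) :
    bw J E (l ++ [x]) v = bw J E l (bop J E x v) := by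
  simp [bw, List.foldr_append]

/-- span of images of `b`-words of length `n` -/
noncomputable def Wc (n : ℕ) : Submodule ℝ g :=
  Submodule.span ℝ
    {u | ∃ l : List g, ∃ v : g, (∀ x ∈ l, E x = x) ∧ E v = v ∧ l.length = n ∧ u = bw J E l v}

lemma Wc_zero : Wc J E 0 = posPart E := by
  have : {u | ∃ l : List g, ∃ v : g,
      (∀ x ∈ l, E x = x) ∧ E v = v ∧ l.length = 0 ∧ u = bw J E l v}
      = (posPart E : Set g) := by
    ext u
    constructor
    · rintro ⟨l, v, -, hv, hlen, rfl⟩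
      rw [List.length_eq_zero_iff] at hlen
      subst hlen
      exact hv
    · intro hu
      exact ⟨[], u, by simp, hu, rfl, rfl⟩
  rw [Wc, this, Submodule.span_eq]

variable {J E} in
lemma bw_posmem (hE2 : ∀ x : g, E (E x) = x) (hJE : ∀ x : g, J (E x) = -E (J x))
    {l : List g} {v : g} (hv : E v = v) : E (bw J E l v) = bw J E l v := by
  cases l with
  | nil => exact hv
  | cons x l => exact bop_posmem hE2 hJE _ _

lemma mem_Wc_step {n : ℕ} {x v : g} (hx : E x = x) (hv : v ∈ Wc J E n) :
    bop J E x v ∈ Wc J E (n + 1) := by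
  induction hv using Submodule.span_induction with
  | mem u hu =>
    obtain ⟨l, w, hl, hw, hlen, rfl⟩ := hu
    exact Submodule.subset_span ⟨x :: l, w, by
      intro y hy
      rcases List.mem_cons.mp hy with h | h
      · exact h ▸ hx
      · exact hl y h, hw, by simp [hlen], rfl⟩
  | zero => rw [map_zero]; exact Submodule.zero_mem _
  | add a b ha hb hpa hpb => rw [map_add]; exact Submodule.add_mem _ hpa hpb
  | smul c a ha hpa => rw [map_smul]; exact Submodule.smul_mem _ _ hpa

variable {J E} in
lemma Wc_mono (hE2 : ∀ x : g, E (E x) = x) (hJE : ∀ x : g, J (E x) = -E (J x))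
    (n : ℕ) : Wc J E (n + 1) ≤ Wc J E n := by
  rw [Wc, Submodule.span_le]
  rintro u ⟨l, v, hl, hv, hlen, rfl⟩
  rcases List.eq_nil_or_concat l with rfl | ⟨l', x, rfl⟩
  · simp at hlen
  · rw [List.concat_eq_append, bw_concat]
    apply Submodule.subset_span
    refine ⟨l', bop J E x v, fun y hy => hl y (by simp [hy]), bop_posmem hE2 hJE _ _, ?_, rfl⟩
    have := hlen
    simp only [List.concat_eq_append, List.length_append, List.length_cons,
      List.length_nil] at this
    omega

variable {J E} in
lemma Wc_le_of_le (hE2 : ∀ x : g, E (E x) = x) (hJE : ∀ x : g, J (E x) = -E (J x))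
    {m n : ℕ} (h : n ≤ m) : Wc J E m ≤ Wc J E n := by
  induction m with
  | zero => simp_all
  | succ m ih =>
    rcases Nat.eq_or_lt_of_le h with rfl | hlt
    · exact le_rfl
    · exact (Wc_mono hE2 hJE m).trans (ih (by omega))

variable {J E} in
lemma Wc_forward (hE2 : ∀ x : g, E (E x) = x) (hJE : ∀ x : g, J (E x) = -E (J x))
    {n : ℕ} (h : Wc J E n ≤ Wc J E (n + 1)) : Wc J E (n + 1) ≤ Wc J E (n + 2) := by
  rw [Wc, Submodule.span_le]
  rintro u ⟨l, v, hl, hv, hlen, rfl⟩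
  rcases l with _ | ⟨x, l'⟩
  · simp at hlen
  · rw [bw_cons]
    have hmem : bw J E l' v ∈ Wc J E n :=
      Submodule.subset_span ⟨l', v, fun y hy => hl y (by simp [hy]), hv, by simpa using hlen, rfl⟩
    exact mem_Wc_step J E (hl x (by simp)) (h hmem)

variable {J E} in
lemma Wc_stab (hE2 : ∀ x : g, E (E x) = x) (hJE : ∀ x : g, J (E x) = -E (J x))
    {n : ℕ} (h : Wc J E n = Wc J E (n + 1)) {m : ℕ} (hm : n ≤ m) :
    Wc J E m = Wc J E n := by
  have step : ∀ j : ℕ, Wc J E (n + j) ≤ Wc J E (n + j + 1) := by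
    intro j
    induction j with
    | zero => exact h.le
    | succ j ih => exact Wc_forward hE2 hJE ih
  have up : ∀ j : ℕ, Wc J E n ≤ Wc J E (n + j) := by
    intro j
    induction j with
    | zero => exact le_rfl
    | succ j ih => exact ih.trans (step j)
  obtain ⟨j, rfl⟩ := Nat.exists_eq_add_of_le hm
  exact le_antisymm (Wc_le_of_le hE2 hJE hm) (up j)

lemma adw_mem_lcs (l : List g) (u : g) :
    adw l u ∈ LieModule.lowerCentralSeries ℝ g g l.length := by
  induction l with
  | nil => simp [adw, LieModule.lowerCentralSeries_zero, LieSubmodule.mem_top]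
  | cons x l ih =>
    have : adw (x :: l) u = ⁅x, adw l u⁆ := rfl
    rw [this]
    simp only [List.length_cons, LieModule.lowerCentralSeries_succ]
    exact LieSubmodule.lie_mem_lie (LieSubmodule.mem_top x) ih

variable {J E} in
lemma bw_J (hcps : IsCPS J E) :
    ∀ l : List g, (∀ x ∈ l, E x = x) → ∀ v : g, E v = v →
      J (bw J E l v) = Pn E (adw l (J v)) := by
  have hJ2 := hJ2' hcps
  have hE2 := hE2' hcps
  have hJE := hJE' hcps
  intro l
  induction l with
  | nil =>
    intro _ v hv
    exact (Pn_neg (E_J_pos hJE hv)).symm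
  | cons x l ih =>
    intro hl v hv
    have hx : E x = x := hl x (by simp)
    rw [bw_cons, bop_apply, map_neg, hJ2, neg_neg]
    have hJw := ih (fun y hy => hl y (by simp [hy])) v hv
    rw [hJw]
    have hsplit : ⁅x, adw l (J v)⁆
        = ⁅x, Pp E (adw l (J v))⁆ + ⁅x, Pn E (adw l (J v))⁆ := by
      rw [← lie_add, Pp_add_Pn]
    have : adw (x :: l) (J v) = ⁅x, adw l (J v)⁆ := rfl
    rw [this, hsplit, map_add, Pn_pos (bracket_posmem hcps hx (E_Pp hE2 _)), zero_add]

variable {J E} in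
lemma Wc_bot [LieRing.IsNilpotent g] (hcps : IsCPS J E) :
    ∃ K : ℕ, ∀ m : ℕ, K ≤ m → Wc J E m = ⊥ := by
  obtain ⟨k, hk⟩ := LieModule.IsNilpotent.nilpotent ℝ g g
  refine ⟨k, fun m hm => ?_⟩
  have hWk : Wc J E k = ⊥ := by
    rw [Wc, Submodule.span_eq_bot]
    rintro u ⟨l, v, hl, hv, hlen, rfl⟩
    have h1 : adw l (J v) ∈ LieModule.lowerCentralSeries ℝ g g k := by
      rw [← hlen]; exact adw_mem_lcs l (J v)
    rw [hk] at h1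
    have h2 : adw l (J v) = 0 := by simpa using h1
    have h3 := bw_J hcps l hl v hv
    rw [h2, map_zero] at h3
    have := congrArg J h3
    rw [hJ2' hcps, map_zero] at this
    exact neg_eq_zero.mp this
  rw [eq_bot_iff, ← hWk]
  exact Wc_le_of_le (hE2' hcps) (hJE' hcps) hm

lemma bop_smul_left (c : ℝ) (x v : g) : bop J E (c • x) v = c • bop J E x v := by
  simp only [bop_apply, smul_lie, map_smul, smul_neg]

variable {J E} in
lemma adJq_pow (hcps : IsCPS J E)
    (hab : ∀ p q : g, E p = p → E q = q → ⁅J p, J q⁆ = 0)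
    {q : g} (hq : E q = q) :
    ∀ n : ℕ, ∀ z : g, E z = z →
      ((LieAlgebra.ad ℝ g (J q)) ^ (n + 1)) z
        = ((-1 : ℝ) ^ (n + 1)) •
            (((mop J E q) ^ (n + 1)) z + J (bop J E (((mop J E q) ^ n) z) q)) := by
  have hJ2 := hJ2' hcps
  have hE2 := hE2' hcps
  have hJE := hJE' hcps
  intro n
  induction n with
  | zero =>
    intro z hz
    rw [pow_one, LieAlgebra.ad_apply, ← lie_skew, decomp (J := J) (E := E) hJ2 z q]
    rw [zero_add, pow_one, pow_one, pow_zero, Module.End.one_apply, mop_eq_aop, neg_one_smul]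
  | succ n ih =>
    intro z hz
    have hstep : ((LieAlgebra.ad ℝ g (J q)) ^ (n + 2)) z
        = (LieAlgebra.ad ℝ g (J q)) (((LieAlgebra.ad ℝ g (J q)) ^ (n + 1)) z) := by
      rw [pow_succ']
      rfl
    rw [hstep, ih z hz, map_smul, LieAlgebra.ad_apply]
    have hbp : E (bop J E (((mop J E q) ^ n) z) q) = bop J E (((mop J E q) ^ n) z) q :=
      bop_posmem hE2 hJE _ _
    rw [lie_add, hab q _ hq hbp, add_zero]
    have hu : ⁅J q, ((mop J E q) ^ (n + 1)) z⁆
        = -(((mop J E q) ^ (n + 2)) z + J (bop J E (((mop J E q) ^ (n + 1)) z) q)) := by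
      rw [← lie_skew, decomp (J := J) (E := E) hJ2 _ q]
      congr 2
      rw [← mop_eq_aop]
      rw [pow_succ' (mop J E q) (n + 1)]
      rfl
    rw [hu]
    rw [smul_neg, ← neg_smul, ← neg_one_mul ((-1:ℝ) ^ (n+1)), ← pow_succ']

variable {J E} in
/-- the eigenvalue trick: if `a(e₃,q)` is proportional to `e₃` then it vanishes. -/
lemma star_lemma [LieRing.IsNilpotent g] (hcps : IsCPS J E)
    (hab : ∀ p q : g, E p = p → E q = q → ⁅J p, J q⁆ = 0)
    {e₃ : g} (he₃ : E e₃ = e₃) (he₃ne : e₃ ≠ 0)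
    {q : g} (hq : E q = q) (hb : bop J E e₃ q = 0)
    {t : ℝ} (ht : aop J E e₃ q = t • e₃) : aop J E e₃ q = 0 := by
  obtain ⟨k, hk⟩ := LieAlgebra.nilpotent_ad_of_nilpotent_algebra ℝ g
  have hadzero : (LieAlgebra.ad ℝ g (J q)) ^ (k + 1) = 0 := by
    rw [pow_succ, hk (J q), zero_mul]
  have hmop : ∀ n : ℕ, ((mop J E q) ^ n) e₃ = (t ^ n) • e₃ := by
    intro n
    induction n with
    | zero => simp
    | succ n ih =>
      rw [pow_succ' (mop J E q) n]
      have : ((mop J E q) * ((mop J E q) ^ n)) e₃ = (mop J E q) (((mop J E q) ^ n) e₃) := rfl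
      rw [this, ih, map_smul, mop_eq_aop, ht, smul_smul, ← pow_succ]
  have h0 := adJq_pow hcps hab hq k e₃ he₃
  rw [hadzero] at h0
  rw [hmop, hmop] at h0
  have hsmul : (t ^ k) • bop J E e₃ q = bop J E ((t ^ k) • e₃) q := by
    rw [bop_smul_left]
  rw [← hsmul, hb, smul_zero, map_zero, add_zero] at h0
  have h1 : ((-1 : ℝ) ^ (k + 1)) • (t ^ (k + 1)) • e₃ = 0 := by
    rw [← h0]; rfl
  rw [smul_smul, smul_eq_zero] at h1
  rcases h1 with h1 | h1
  · rcases mul_eq_zero.mp h1 with h2 | h2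
    · exact absurd h2 (by positivity)
    · have : t = 0 := pow_eq_zero_iff (by omega) |>.mp h2
      rw [ht, this, zero_smul]
  · exact absurd h1 he₃ne

end F3Aux

open F3Aux

/-- Let `g` be a 6-dimensional nilpotent real Lie algebra with a complex product
structure `{J,E}`, suppose `g₊ ≅ h₃` with a basis `{e₁,e₂,e₃}` of `g₊` satisfying
`⁅e₁,e₂⁆ = e₃` and `⁅e₃, g₊⁆ = 0`, and suppose `g₋ = J g₊` is abelian.  Then the
element `f₃ := J e₃ ∈ g₋` lies in the centre of `g`. -/
theorem f3_central [FiniteDimensional ℝ g] [LieRing.IsNilpotent g]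
    (hdim : Module.finrank ℝ g = 6)
    (J E : Module.End ℝ g) (h : IsCPS J E)
    (e₁ e₂ e₃ : g)
    (he₁ : e₁ ∈ posPart E) (he₂ : e₂ ∈ posPart E) (he₃ : e₃ ∈ posPart E)
    (hind : LinearIndependent ℝ ![e₁, e₂, e₃])
    (hspan : posPart E ≤ Submodule.span ℝ {e₁, e₂, e₃})
    (hbr : ⁅e₁, e₂⁆ = e₃)
    (hcent : ∀ y ∈ posPart E, ⁅e₃, y⁆ = 0)
    (habel : ∀ x ∈ negPart E, ∀ y ∈ negPart E, ⁅x, y⁆ = 0) :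
    ∀ x : g, ⁅J e₃, x⁆ = 0 := by
  have hJ2 := h.1.1
  have hJint := h.1.2
  have hE2 := h.2.1.1
  have hEint := h.2.1.2.2.2
  have hJE := h.2.2
  have hab : ∀ p q : g, E p = p → E q = q → ⁅J p, J q⁆ = 0 := by
    intro p q hp hq
    exact habel (J p) (E_J_pos hJE hp) (J q) (E_J_pos hJE hq)
  have he₁' : E e₁ = e₁ := he₁
  have he₂' : E e₂ = e₂ := he₂
  have he₃' : E e₃ = e₃ := he₃
  have hz : ∀ x : g, E x = x → ⁅e₃, x⁆ = 0 := fun x hx => hcent x hx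
  have hz' : ∀ x : g, E x = x → ⁅x, e₃⁆ = 0 := fun x hx => by
    rw [← lie_skew, hz x hx, neg_zero]
  have he₃ne : e₃ ≠ 0 := by simpa using hind.ne_zero 2
  have hanti : ∀ p q : g, E p = p → E q = q → bop J E p q - bop J E q p = ⁅p, q⁆ :=
    fun p q hp hq => antisym h hab hp hq
  have hrep : ∀ v : g, E v = v →
      bop J E e₃ v = bop J E e₁ (bop J E e₂ v) - bop J E e₂ (bop J E e₁ v) := by
    intro v hv
    have := repid (x := e₁) (y := e₂) (z := v) h hab he₁' he₂'
    rw [hbr] at this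
    exact this.symm
  -- the `W` chain
  obtain ⟨K, hK⟩ := Wc_bot h
  have hW0 : Wc J E 0 = posPart E := Wc_zero J E
  have hPP : posPart E = Submodule.span ℝ {e₁, e₂, e₃} := by
    refine le_antisymm hspan ?_
    rw [Submodule.span_le]
    rintro x (rfl | rfl | rfl)
    · exact he₁
    · exact he₂
    · exact he₃
  have hfr : finrank ℝ (posPart E) = 3 := by
    have hrange : Set.range ![e₁, e₂, e₃] = ({e₁, e₂, e₃} : Set g) := by
      rw [Matrix.range_cons, Matrix.range_cons, Matrix.range_cons_empty,
        Set.singleton_union, Set.singleton_union]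
    rw [hPP, ← hrange]
    rw [finrank_span_eq_card hind]
    simp
  have he₃W1 : e₃ ∈ Wc J E 1 := by
    have h1 : bop J E e₁ e₂ ∈ Wc J E 1 :=
      Submodule.subset_span ⟨[e₁], e₂, by simp [he₁'], he₂', rfl, rfl⟩
    have h2 : bop J E e₂ e₁ ∈ Wc J E 1 :=
      Submodule.subset_span ⟨[e₂], e₁, by simp [he₂'], he₁', rfl, rfl⟩
    have h3 := hanti e₁ e₂ he₁' he₂'
    rw [hbr] at h3
    rw [← h3]
    exact Submodule.sub_mem _ h1 h2
  have hmemW1 : ∀ x v : g, E x = x → E v = v → bop J E x v ∈ Wc J E 1 :=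
    fun x v hx hv => Submodule.subset_span ⟨[x], v, by simp [hx], hv, rfl, rfl⟩
  -- B-part : `b(e₃,·) = 0`
  have hB3 : ∀ v : g, E v = v → bop J E e₃ v = 0 := by
    by_contra hcon
    push_neg at hcon
    obtain ⟨x₀, hx₀pos, hx₀⟩ := hcon
    set w : g := bop J E e₃ x₀ with hwdef
    have hwne : w ≠ 0 := hx₀
    have hwpos : E w = w := bop_posmem hE2 hJE _ _
    have hwW2 : w ∈ Wc J E 2 := by
      rw [hwdef, hrep x₀ hx₀pos]
      exact Submodule.sub_mem _
        (mem_Wc_step J E he₁' (hmemW1 e₂ x₀ he₂' hx₀pos))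
        (mem_Wc_step J E he₂' (hmemW1 e₁ x₀ he₁' hx₀pos))
    have hW2ne : Wc J E 2 ≠ ⊥ := by
      intro hbot
      rw [hbot] at hwW2
      exact hwne ((Submodule.mem_bot ℝ).mp hwW2)
    have hnoteq : ∀ n : ℕ, n ≤ 2 → Wc J E n ≠ Wc J E (n + 1) := by
      intro n hn heq
      apply hW2ne
      have h1 : Wc J E (max K n) = Wc J E n := Wc_stab hE2 hJE heq (le_max_right _ _)
      have h2 : Wc J E (max K n) = ⊥ := hK _ (le_max_left _ _)
      have h3 : Wc J E n = ⊥ := h1.symm.trans h2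
      exact le_bot_iff.mp ((Wc_le_of_le hE2 hJE hn).trans_eq h3)
    have l01 : Wc J E 1 < Wc J E 0 :=
      lt_of_le_of_ne (Wc_mono hE2 hJE 0) (Ne.symm (hnoteq 0 (by omega)))
    have l12 : Wc J E 2 < Wc J E 1 :=
      lt_of_le_of_ne (Wc_mono hE2 hJE 1) (Ne.symm (hnoteq 1 (by omega)))
    have l23 : Wc J E 3 < Wc J E 2 :=
      lt_of_le_of_ne (Wc_mono hE2 hJE 2) (Ne.symm (hnoteq 2 (by omega)))
    have fd0 : finrank ℝ (Wc J E 0) = 3 := by rw [hW0]; exact hfr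
    have fd1 : finrank ℝ (Wc J E 1) < finrank ℝ (Wc J E 0) :=
      Submodule.finrank_lt_finrank_of_lt l01
    have fd2 : finrank ℝ (Wc J E 2) < finrank ℝ (Wc J E 1) :=
      Submodule.finrank_lt_finrank_of_lt l12
    have fd3 : finrank ℝ (Wc J E 3) < finrank ℝ (Wc J E 2) :=
      Submodule.finrank_lt_finrank_of_lt l23
    have fd2pos : finrank ℝ (Wc J E 2) ≠ 0 := fun h0 => hW2ne (Submodule.finrank_eq_zero.mp h0)
    have hW3 : Wc J E 3 = ⊥ := Submodule.finrank_eq_zero.mp (by omega)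
    have hfr2 : finrank ℝ (Wc J E 2) = 1 := by omega
    have hfr1 : finrank ℝ (Wc J E 1) = 2 := by omega
    have hkill2 : ∀ x v : g, E x = x → v ∈ Wc J E 2 → bop J E x v = 0 := by
      intro x v hx hv
      have h1 := mem_Wc_step J E hx hv
      rw [hW3] at h1
      exact (Submodule.mem_bot ℝ).mp h1
    have hposW : ∀ v : g, v ∈ Wc J E 1 → E v = v := by
      intro v hv
      have h1 : v ∈ Wc J E 0 := Wc_mono hE2 hJE 0 hv
      rw [hW0] at h1
      exact h1
    have hkill1 : ∀ v : g, v ∈ Wc J E 1 → bop J E e₃ v = 0 := by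
      intro v hv
      rw [hrep v (hposW v hv)]
      rw [hkill2 e₁ _ he₁' (mem_Wc_step J E he₂' hv),
        hkill2 e₂ _ he₂' (mem_Wc_step J E he₁' hv), sub_zero]
    by_cases he₃W2 : e₃ ∈ Wc J E 2
    · have h1 : bop J E x₀ e₃ = 0 := hkill2 x₀ e₃ hx₀pos he₃W2
      have h2 := hanti e₃ x₀ he₃' hx₀pos
      rw [hz x₀ hx₀pos, h1, sub_zero] at h2
      exact hx₀ h2
    · -- main contradiction case
      have hspan2 : Submodule.span ℝ {w} = Wc J E 2 := by
        apply Submodule.eq_of_le_of_finrank_le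
        · rw [Submodule.span_le, Set.singleton_subset_iff]
          exact hwW2
        · rw [hfr2, finrank_span_singleton hwne]
      have he₃nspw : e₃ ∉ Submodule.span ℝ ({w} : Set g) := by
        rw [hspan2]; exact he₃W2
      have hpair : LinearIndependent ℝ ![e₃, w] := by
        rw [LinearIndependent.pair_iff]
        intro s t hst
        by_cases hs : s = 0
        · subst hs
          rw [zero_smul, zero_add] at hst
          exact ⟨rfl, (smul_eq_zero.mp hst).resolve_right hwne⟩
        · exfalso
          apply he₃nspw
          have h1 : e₃ = (-(s⁻¹ * t)) • w := by
            have h2 : s • e₃ = -(t • w) := eq_neg_of_add_eq_zero_left hst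
            have h3 : e₃ = s⁻¹ • (s • e₃) := by
              rw [smul_smul, inv_mul_cancel₀ hs, one_smul]
            rw [h3, h2, smul_neg, smul_smul, ← neg_smul]
          rw [h1]
          exact Submodule.smul_mem _ _ (Submodule.mem_span_singleton_self w)
      have hspan1 : Submodule.span ℝ {e₃, w} = Wc J E 1 := by
        apply Submodule.eq_of_le_of_finrank_le
        · rw [Submodule.span_le]
          rintro u (rfl | rfl)
          · exact he₃W1
          · exact Wc_mono hE2 hJE 1 hwW2
        · rw [hfr1]
          have hrange2 : Set.range ![e₃, w] = ({e₃, w} : Set g) := by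
            rw [Matrix.range_cons, Matrix.range_cons_empty, Set.singleton_union]
          rw [← hrange2, finrank_span_eq_card hpair]
          simp
      have hx₀nW1 : x₀ ∉ Wc J E 1 := fun hmem => hx₀ (hkill1 x₀ hmem)
      have htrip : LinearIndependent ℝ ![x₀, e₃, w] := by
        apply linearIndependent_fin_cons.mpr
        constructor
        · exact hpair
        · have hrange2 : Set.range ![e₃, w] = ({e₃, w} : Set g) := by
            rw [Matrix.range_cons, Matrix.range_cons_empty, Set.singleton_union]
          rw [hrange2, hspan1]
          exact hx₀nW1
      have hsp3 : Submodule.span ℝ {x₀, e₃, w} = posPart E := by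
        apply Submodule.eq_of_le_of_finrank_le
        · rw [Submodule.span_le]
          rintro u (rfl | rfl | rfl)
          · exact hx₀pos
          · exact he₃
          · exact hwpos
        · rw [hfr]
          have hrange3 : Set.range ![x₀, e₃, w] = ({x₀, e₃, w} : Set g) := by
            rw [Matrix.range_cons, Matrix.range_cons, Matrix.range_cons_empty,
              Set.singleton_union, Set.singleton_union]
          rw [← hrange3, finrank_span_eq_card htrip]
          simp
      have hdec : ∀ u : g, E u = u → ∃ a b c : ℝ, u = a • x₀ + (b • e₃ + c • w) := by
        intro u hu
        have h1 : u ∈ Submodule.span ℝ ({x₀, e₃, w} : Set g) := by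
          rw [hsp3]; exact hu
        rw [Submodule.mem_span_insert] at h1
        obtain ⟨a, z, hzmem, rfl⟩ := h1
        rw [Submodule.mem_span_pair] at hzmem
        obtain ⟨b, c, hbc⟩ := hzmem
        exact ⟨a, b, c, by rw [← hbc]⟩
      obtain ⟨μ₁, κ₁, ν₁, hdec1⟩ := hdec e₁ he₁'
      obtain ⟨μ₂, κ₂, ν₂, hdec2⟩ := hdec e₂ he₂'
      obtain ⟨q₁, p₁, hbe1⟩ : ∃ qa pa : ℝ, bop J E e₁ x₀ = qa • e₃ + pa • w := by
        have h1 : bop J E e₁ x₀ ∈ Wc J E 1 := hmemW1 e₁ x₀ he₁' hx₀pos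
        rw [← hspan1, Submodule.mem_span_pair] at h1
        obtain ⟨qa, pa, h2⟩ := h1
        exact ⟨qa, pa, h2.symm⟩
      obtain ⟨q₂, p₂, hbe2⟩ : ∃ qa pa : ℝ, bop J E e₂ x₀ = qa • e₃ + pa • w := by
        have h1 : bop J E e₂ x₀ ∈ Wc J E 1 := hmemW1 e₂ x₀ he₂' hx₀pos
        rw [← hspan1, Submodule.mem_span_pair] at h1
        obtain ⟨qa, pa, h2⟩ := h1
        exact ⟨qa, pa, h2.symm⟩
      have hb33 : bop J E e₃ e₃ = 0 := hkill1 e₃ he₃W1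
      have hb3w : bop J E e₃ w = 0 := hkill2 e₃ w he₃' hwW2
      have hb1w : bop J E e₁ w = 0 := hkill2 e₁ w he₁' hwW2
      have hb2w : bop J E e₂ w = 0 := hkill2 e₂ w he₂' hwW2
      have hbsym1 : bop J E e₁ e₃ = bop J E e₃ e₁ := by
        have h1 := hanti e₁ e₃ he₁' he₃'
        rw [hz' e₁ he₁'] at h1
        exact sub_eq_zero.mp h1
      have hbsym2 : bop J E e₂ e₃ = bop J E e₃ e₂ := by
        have h1 := hanti e₂ e₃ he₂' he₃'
        rw [hz' e₂ he₂'] at h1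
        exact sub_eq_zero.mp h1
      have hb3e1 : bop J E e₃ e₁ = μ₁ • w := by
        rw [hdec1, map_add, map_add, map_smul, map_smul, map_smul, hb33, hb3w,
          smul_zero, smul_zero, add_zero, add_zero, ← hwdef]
      have hb3e2 : bop J E e₃ e₂ = μ₂ • w := by
        rw [hdec2, map_add, map_add, map_smul, map_smul, map_smul, hb33, hb3w,
          smul_zero, smul_zero, add_zero, add_zero, ← hwdef]
      have hI : q₂ * μ₁ - q₁ * μ₂ = 1 := by
        have h1 := hrep x₀ hx₀pos
        rw [hbe2, hbe1, map_add, map_add, map_smul, map_smul, map_smul, map_smul,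
          hb1w, hb2w, smul_zero, smul_zero, add_zero, add_zero,
          hbsym1, hbsym2, hb3e1, hb3e2, ← hwdef] at h1
        have h2 : (1 - (q₂ * μ₁ - q₁ * μ₂)) • w = 0 := by
          rw [smul_smul, smul_smul] at h1
          rw [sub_smul, one_smul, sub_smul, ← h1, sub_self]
        rcases smul_eq_zero.mp h2 with h3 | h3
        · linarith [sub_eq_zero.mp (by linarith [h3] : (1:ℝ) - (q₂ * μ₁ - q₁ * μ₂) = 0)]
        · exact absurd h3 hwne
      have hII : μ₂ * q₁ - μ₁ * q₂ = 1 := by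
        have h1 := hanti e₁ e₂ he₁' he₂'
        rw [hbr] at h1
        have he12 : bop J E e₁ e₂ = μ₂ • (q₁ • e₃ + p₁ • w) + (κ₂ • (μ₁ • w) + ν₂ • 0) := by
          rw [← hbe1, ← hb3e1, ← hbsym1, ← hb1w]
          rw [hdec2, map_add, map_add, map_smul, map_smul, map_smul]
        have he21 : bop J E e₂ e₁ = μ₁ • (q₂ • e₃ + p₂ • w) + (κ₁ • (μ₂ • w) + ν₁ • 0) := by
          rw [← hbe2, ← hb3e2, ← hbsym2, ← hb2w]
          rw [hdec1, map_add, map_add, map_smul, map_smul, map_smul]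
        rw [he12, he21] at h1
        have h2 : (1 - (μ₂ * q₁ - μ₁ * q₂)) • e₃
            = (μ₂ * p₁ + κ₂ * μ₁ - μ₁ * p₂ - κ₁ * μ₂) • w := by
          linear_combination (norm := module) -h1
        by_cases hc : (1 - (μ₂ * q₁ - μ₁ * q₂)) = 0
        · linarith [hc]
        · exfalso
          apply he₃nspw
          have h4 := congrArg (fun z => (1 - (μ₂ * q₁ - μ₁ * q₂))⁻¹ • z) h2
          simp only [smul_smul, inv_mul_cancel₀ hc, one_smul] at h4
          rw [h4]
          exact Submodule.smul_mem _ _ (Submodule.mem_span_singleton_self w)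
      have : (0:ℝ) = 2 := by linear_combination hI + hII
      norm_num at this
  -- A-part : `a(e₃,·) = 0`
  have hv3 : ∀ y v : g, E y = y → E v = v →
      aop J E e₃ (bop J E y v) = ⁅y, aop J E e₃ v⁆ := by
    intro y v hy hv
    have h0 := leibniz_lie e₃ y (J v)
    rw [decomp (J := J) (E := E) hJ2 y v, lie_add, hz _ (aop_posmem hE2 y v)] at h0
    rw [decomp (J := J) (E := E) hJ2 e₃ (bop J E y v),
      hB3 _ (bop_posmem hE2 hJE y v), map_zero, add_zero, zero_add] at h0
    rw [hz y hy, zero_lie, zero_add, decomp (J := J) (E := E) hJ2 e₃ v,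
      hB3 v hv, map_zero, add_zero] at h0
    exact h0
  have hA3 : ∀ v : g, E v = v → aop J E e₃ v = 0 := by
    intro z hzpos
    have humem : aop J E e₃ z ∈ Submodule.span ℝ ({e₁, e₂, e₃} : Set g) :=
      hspan (aop_posmem hE2 e₃ z)
    rw [Submodule.mem_span_insert] at humem
    obtain ⟨α, z1, hz1, hu⟩ := humem
    rw [Submodule.mem_span_pair] at hz1
    obtain ⟨β, γ, hbc⟩ := hz1
    rw [← hbc] at hu
    -- hu : aop e₃ z = α • e₁ + (β • e₂ + γ • e₃)
    have hbru1 : ⁅e₁, aop J E e₃ z⁆ = β • e₃ := by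
      rw [hu, lie_add, lie_add, lie_smul, lie_smul, lie_smul, lie_self, hbr,
        hz' e₁ he₁', smul_zero, smul_zero, zero_add, add_zero]
    have hbru2 : ⁅e₂, aop J E e₃ z⁆ = (-α) • e₃ := by
      have h21 : ⁅e₂, e₁⁆ = -e₃ := by rw [← lie_skew, hbr]
      rw [hu, lie_add, lie_add, lie_smul, lie_smul, lie_smul, lie_self, h21,
        hz' e₂ he₂', smul_zero, smul_zero, add_zero, add_zero, smul_neg, ← neg_smul]
    have hβ : β = 0 := by
      have h1 := hv3 e₁ z he₁' hzpos
      rw [hbru1] at h1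
      have h2 := star_lemma h hab he₃' he₃ne (bop_posmem hE2 hJE e₁ z)
        (hB3 _ (bop_posmem hE2 hJE e₁ z)) h1
      rw [h2] at h1
      exact ((smul_eq_zero.mp h1.symm).resolve_right he₃ne)
    have hα : α = 0 := by
      have h1 := hv3 e₂ z he₂' hzpos
      rw [hbru2] at h1
      have h2 := star_lemma h hab he₃' he₃ne (bop_posmem hE2 hJE e₂ z)
        (hB3 _ (bop_posmem hE2 hJE e₂ z)) h1
      rw [h2] at h1
      have := (smul_eq_zero.mp h1.symm).resolve_right he₃ne
      linarith [this]
    rw [hα, hβ, zero_smul, zero_smul, zero_add, zero_add] at hu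
    exact star_lemma h hab he₃' he₃ne hzpos (hB3 z hzpos) hu
  -- assembly
  intro x
  have hppos : E (Pp E x) = Pp E x := E_Pp hE2 x
  have hqpos : E (-(J (Pn E x))) = -(J (Pn E x)) := by
    rw [map_neg, E_J_neg hJE (E_Pn hE2 x)]
  have hJq : J (-(J (Pn E x))) = Pn E x := by
    rw [map_neg, hJ2, neg_neg]
  have hxdec : x = Pp E x + J (-(J (Pn E x))) := by
    rw [hJq]
    exact (Pp_add_Pn E x).symm
  have hterm2 : ⁅J e₃, J (-(J (Pn E x)))⁆ = 0 := hab e₃ _ he₃' hqpos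
  have hterm1 : ⁅J e₃, Pp E x⁆ = 0 := by
    have h0 := hJint e₃ (Pp E x)
    rw [hz _ hppos, map_zero, hab e₃ _ he₃' hppos, map_zero, add_zero] at h0
    have h1 : ⁅e₃, J (Pp E x)⁆ = 0 := by
      rw [decomp (J := J) (E := E) hJ2 e₃ (Pp E x), hA3 _ hppos, hB3 _ hppos,
        map_zero, add_zero]
    rw [h1, add_zero] at h0
    exact h0.symm
  conv_lhs => rw [hxdec]
  rw [lie_add, hterm1, hterm2, add_zero]
end

section
/- Let g be a 6-dimensional nilpotent real Lie algebra with a complex product structure {J,E} whose eigenspace subalgebras satisfy g₊ ≅ h₃ and g₋ ≅ h₃. Then there exists θ ∈ [0,2π) such that E' := cos θ · E + sin θ · JE is a product structure on g anticommuting with J (so {J,E'} is a complex product structure on g) whose +1-eigenspace is isomorphic to h₃ and whose −1-eigenspace is an abelian 3-dimensional subalgebra. -/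
open Module LinearMap

variable {g : Type*} [LieRing g] [LieAlgebra ℝ g]

/-- `{a,b,c}` is a basis of the subalgebra `S` exhibiting it as a copy of the
3-dimensional Heisenberg Lie algebra `h₃`: `⁅a,b⁆ = c` and `c` is central in `S`. -/
def IsHeisBasis (S : Submodule ℝ g) (a b c : g) : Prop :=
  a ∈ S ∧ b ∈ S ∧ c ∈ S ∧ LinearIndependent ℝ ![a, b, c] ∧
  S ≤ Submodule.span ℝ {a, b, c} ∧ ⁅a, b⁆ = c ∧ ∀ y ∈ S, ⁅c, y⁆ = 0

lemma range_triple' {α : Type*} (a b c : α) : Set.range ![a,b,c] = {a,b,c} := by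
  ext w
  constructor
  · rintro ⟨i, rfl⟩; fin_cases i <;> simp
  · rintro (rfl|rfl|rfl)
    exacts [⟨0, rfl⟩, ⟨1, rfl⟩, ⟨2, rfl⟩]

lemma lie_span_span {g : Type*} [LieRing g] [LieAlgebra ℝ g] {S : Submodule ℝ g} {s t : Set g}
    (h : ∀ a ∈ s, ∀ b ∈ t, ⁅a, b⁆ ∈ S) :
    ∀ x ∈ Submodule.span ℝ s, ∀ y ∈ Submodule.span ℝ t, ⁅x, y⁆ ∈ S := by
  have key : ∀ a ∈ s, ∀ y ∈ Submodule.span ℝ t, ⁅a, y⁆ ∈ S := by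
    intro a ha y hy
    induction hy using Submodule.span_induction with
    | mem b hb => exact h a ha b hb
    | zero => simp
    | add u v _ _ hu hv => rw [lie_add]; exact S.add_mem hu hv
    | smul c u _ hu => rw [lie_smul]; exact S.smul_mem c hu
  intro x hx y hy
  induction hx using Submodule.span_induction with
  | mem a ha => exact key a ha y hy
  | zero => simp
  | add u v _ _ hu hv => rw [add_lie]; exact S.add_mem hu hv
  | smul c u _ hu => rw [smul_lie]; exact S.smul_mem c hu

lemma exists_coords3 {g : Type*} [LieRing g] [LieAlgebra ℝ g] {a b c x : g}
    (h : x ∈ Submodule.span ℝ ({a, b, c} : Set g)) :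
    ∃ r1 r2 r3 : ℝ, x = r1 • a + (r2 • b + r3 • c) := by
  rw [Submodule.mem_span_insert] at h
  obtain ⟨r1, z, hz, rfl⟩ := h
  rw [Submodule.mem_span_insert] at hz
  obtain ⟨r2, w, hw, rfl⟩ := hz
  rw [Submodule.mem_span_singleton] at hw
  obtain ⟨r3, rfl⟩ := hw
  exact ⟨r1, r2, r3, rfl⟩

lemma rot_bracket {g : Type*} [LieRing g] [LieAlgebra ℝ g] (J : Module.End ℝ g)
    (hJ2 : ∀ x : g, J (J x) = -x)
    (hJi : ∀ x y : g, J ⁅x, y⁆ = ⁅J x, y⁆ + ⁅x, J y⁆ + J ⁅J x, J y⁆)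
    (c s : ℝ) (x y : g) :
    ⁅c•x + s•(J x), c•y + s•(J y)⁆ =
      c•(c•⁅x,y⁆ - s•(J ⁅J x, J y⁆)) + s•(J (c•⁅x,y⁆ - s•(J ⁅J x, J y⁆))) := by
  have key : ⁅J x, y⁆ + ⁅x, J y⁆ = J ⁅x,y⁆ - J ⁅J x, J y⁆ := by
    rw [hJi]; abel
  have h2 := hJ2 ⁅J x, J y⁆
  simp only [lie_add, add_lie, lie_smul, smul_lie, map_add, map_smul, map_sub, h2]
  linear_combination (norm := module) (c*s : ℝ) • key

lemma aux_pos (a b : ℝ) (ha : 0 < a) : 0 < a + b * a * b := by nlinarith [sq_nonneg b]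

lemma exists_rot (τ : ℝ) :
    ∃ θ c1 s1 : ℝ, 0 ≤ θ ∧ θ < 2*Real.pi ∧ 0 < c1 ∧ s1 = τ * c1 ∧
      s1^2 + c1^2 = 1 ∧ Real.cos θ = c1^2 - s1^2 ∧ Real.sin θ = 2*(s1*c1) := by
  have hc : 0 < Real.cos (Real.arctan τ) := Real.cos_arctan_pos τ
  have hs : Real.sin (Real.arctan τ) = τ * Real.cos (Real.arctan τ) := by
    have h' := Real.tan_arctan τ
    rwa [Real.tan_eq_sin_div_cos, div_eq_iff hc.ne'] at h'
  have hpy := Real.sin_sq_add_cos_sq (Real.arctan τ)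
  have hcos2 : Real.cos (2*Real.arctan τ)
      = Real.cos (Real.arctan τ)^2 - Real.sin (Real.arctan τ)^2 := by
    rw [Real.cos_two_mul]; linear_combination hpy
  have hsin2 : Real.sin (2*Real.arctan τ)
      = 2*(Real.sin (Real.arctan τ) * Real.cos (Real.arctan τ)) := by
    rw [Real.sin_two_mul]; ring
  have hbound1 : -(Real.pi/2) < Real.arctan τ := Real.neg_pi_div_two_lt_arctan τ
  have hbound2 : Real.arctan τ < Real.pi/2 := Real.arctan_lt_pi_div_two τ
  have hpi := Real.pi_pos
  by_cases h0 : 2*Real.arctan τ < 0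
  · exact ⟨2*Real.arctan τ + 2*Real.pi, _, _, by linarith, by linarith, hc, hs, hpy,
      by rw [Real.cos_add_two_pi, hcos2], by rw [Real.sin_add_two_pi, hsin2]⟩
  · exact ⟨2*Real.arctan τ, _, _, by linarith, by linarith, hc, hs, hpy, hcos2, hsin2⟩




set_option maxHeartbeats 1000000 in
/-- Let `g` be a 6-dimensional nilpotent real Lie algebra with a complex product
structure `{J,E}` whose eigenspace subalgebras satisfy `g₊ ≅ h₃` and `g₋ ≅ h₃`.
Then there is `θ ∈ [0,2π)` such that `E' := cos θ • E + sin θ • J E` is a product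
structure anticommuting with `J` (so `{J,E'}` is a complex product structure), whose
`+1`-eigenspace is isomorphic to `h₃` and whose `−1`-eigenspace is an abelian
3-dimensional subalgebra. -/
theorem rotate_to_heis_abelian [FiniteDimensional ℝ g] [LieRing.IsNilpotent g]
    (hdim : Module.finrank ℝ g = 6)
    (J E : Module.End ℝ g) (h : IsCPS J E)
    (hpos : ∃ a b c : g, IsHeisBasis (posPart E) a b c)
    (hneg : ∃ a b c : g, IsHeisBasis (negPart E) a b c) :
    ∃ θ : ℝ, 0 ≤ θ ∧ θ < 2 * Real.pi ∧
      IsCPS J (Real.cos θ • E + Real.sin θ • (J * E)) ∧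
      (∃ a b c : g,
        IsHeisBasis (posPart (Real.cos θ • E + Real.sin θ • (J * E))) a b c) ∧
      Module.finrank ℝ (negPart (Real.cos θ • E + Real.sin θ • (J * E))) = 3 ∧
      (∀ x ∈ negPart (Real.cos θ • E + Real.sin θ • (J * E)),
        ∀ y ∈ negPart (Real.cos θ • E + Real.sin θ • (J * E)), ⁅x, y⁆ = 0) := by
  obtain ⟨⟨hJ2, hJi⟩, ⟨hE2, _hEa, _hEb, _hEc⟩, hJE⟩ := h
  obtain ⟨e1, e2, e3, he1, he2, he3, heli, hesp, heb, hec⟩ := hpos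
  obtain ⟨f1, f2, f3, hf1, hf2, hf3, hfli, hfsp, hfb, hfc⟩ := hneg
  have hEe1 : E e1 = e1 := he1
  have hEe2 : E e2 = e2 := he2
  have hEe3 : E e3 = e3 := he3
  have hEf1 : E f1 = -f1 := hf1
  have hEf2 : E f2 = -f2 := hf2
  have hEf3 : E f3 = -f3 := hf3
  have hne_e3 : e3 ≠ 0 := by simpa using heli.ne_zero 2
  have hne_f3 : f3 ≠ 0 := by simpa using hfli.ne_zero 2
  have hEJ : ∀ x : g, E (J x) = -J (E x) := fun x => by rw [hJE x, neg_neg]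
  have hJinj : ∀ x : g, J x = 0 → x = 0 := by
    intro x hx
    have h' := hJ2 x
    rw [hx, map_zero] at h'
    exact neg_eq_zero.mp h'.symm
  have hposJ : ∀ x : g, E x = x → E (J x) = -(J x) := fun x hx => by rw [hEJ, hx]
  have hnegJ : ∀ x : g, E x = -x → E (J x) = J x := fun x hx => by
    rw [hEJ, hx, map_neg, neg_neg]
  have hEg1 : E (-J f1) = -J f1 := by rw [map_neg, hnegJ f1 hEf1]
  have hEg2 : E (-J f2) = -J f2 := by rw [map_neg, hnegJ f2 hEf2]
  have hEg3 : E (-J f3) = -J f3 := by rw [map_neg, hnegJ f3 hEf3]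
  have hJg1 : J (-J f1) = f1 := by rw [map_neg, hJ2, neg_neg]
  have hJg2 : J (-J f2) = f2 := by rw [map_neg, hJ2, neg_neg]
  have hJg3 : J (-J f3) = f3 := by rw [map_neg, hJ2, neg_neg]
  -- bracket tables
  have hb31 : ⁅e3, e1⁆ = 0 := hec e1 he1
  have hb32 : ⁅e3, e2⁆ = 0 := hec e2 he2
  have hb13 : ⁅e1, e3⁆ = 0 := by rw [← lie_skew, hb31, neg_zero]
  have hb23 : ⁅e2, e3⁆ = 0 := by rw [← lie_skew, hb32, neg_zero]
  have hb21 : ⁅e2, e1⁆ = -e3 := by rw [← lie_skew, heb]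
  have hbf31 : ⁅f3, f1⁆ = 0 := hfc f1 hf1
  have hbf32 : ⁅f3, f2⁆ = 0 := hfc f2 hf2
  have hbf13 : ⁅f1, f3⁆ = 0 := by rw [← lie_skew, hbf31, neg_zero]
  have hbf23 : ⁅f2, f3⁆ = 0 := by rw [← lie_skew, hbf32, neg_zero]
  have hbf21 : ⁅f2, f1⁆ = -f3 := by rw [← lie_skew, hfb]
  by_cases hc : (-J f3) ∈ Submodule.span ℝ ({e3} : Set g)
  · -- main case : the two Heisenberg centres are aligned
    obtain ⟨κ, hκ⟩ := Submodule.mem_span_singleton.mp hc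
    have hκ0 : κ ≠ 0 := by
      intro h0
      rw [h0, zero_smul] at hκ
      exact hne_f3 (hJinj f3 (neg_eq_zero.mp hκ.symm))
    have hJf3 : J f3 = -(κ • e3) := by rw [hκ, neg_neg]
    have he3g : e3 = κ⁻¹ • (-J f3) := by
      rw [← hκ, smul_smul, inv_mul_cancel₀ hκ0, one_smul]
    have hJe3 : J e3 = κ⁻¹ • f3 := by rw [he3g, map_smul, hJg3]
    have hnegJe1 : E (J e1) = -(J e1) := hposJ e1 hEe1
    have hnegJe2 : E (J e2) = -(J e2) := hposJ e2 hEe2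
    obtain ⟨p1, p2, p3, hJe1⟩ := exists_coords3 (hfsp hnegJe1)
    obtain ⟨q1, q2, q3, hJe2⟩ := exists_coords3 (hfsp hnegJe2)
    have hJB13 : ⁅J e1, J e3⁆ = 0 := by
      rw [hJe3, lie_smul, ← lie_skew, hfc (J e1) hnegJe1, neg_zero, smul_zero]
    have hJB23 : ⁅J e2, J e3⁆ = 0 := by
      rw [hJe3, lie_smul, ← lie_skew, hfc (J e2) hnegJe2, neg_zero, smul_zero]
    have hJB31 : ⁅J e3, J e1⁆ = 0 := by rw [← lie_skew, hJB13, neg_zero]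
    have hJB32 : ⁅J e3, J e2⁆ = 0 := by rw [← lie_skew, hJB23, neg_zero]
    have hJB12 : ⁅J e1, J e2⁆ = (p1*q2 - p2*q1) • f3 := by
      rw [hJe1, hJe2]
      simp only [lie_add, add_lie, lie_smul, smul_lie, lie_self, hfb, hbf21, hbf13,
        hbf31, hbf23, hbf32, smul_zero, zero_add, add_zero, smul_smul, smul_neg]
      module
    have hJB21 : ⁅J e2, J e1⁆ = -((p1*q2 - p2*q1) • f3) := by
      rw [← lie_skew, hJB12]
    -- proportionality of the two Heisenberg brackets
    have Hm : ∀ x y : g, E x = x → E y = y →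
        J ⁅J x, J y⁆ = (-((p1*q2 - p2*q1)*κ)) • ⁅x, y⁆ := by
      intro x y hx hy
      obtain ⟨x1, x2, x3, hxe⟩ := exists_coords3 (hesp hx)
      obtain ⟨y1, y2, y3, hye⟩ := exists_coords3 (hesp hy)
      rw [hxe, hye]
      simp only [map_add, map_smul, lie_add, add_lie, lie_smul, smul_lie, lie_self,
        hJB12, hJB21, hJB13, hJB31, hJB23, hJB32, heb, hb21, hb13, hb31, hb23, hb32,
        smul_zero, add_zero, zero_add, smul_smul, smul_neg, map_neg, map_zero, hJf3,
        neg_neg, neg_zero]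
      module
    have hτ0 : (p1*q2 - p2*q1)*κ ≠ 0 := by
      intro h0
      have h1 := Hm (-J f1) (-J f2) hEg1 hEg2
      rw [hJg1, hJg2, hfb, hJf3, h0, neg_zero, zero_smul, neg_eq_zero] at h1
      rcases smul_eq_zero.mp h1 with h2 | h2
      · exact hκ0 h2
      · exact hne_e3 h2
    have hσ0 : (p1*q2 - p2*q1) ≠ 0 := fun h0 => hτ0 (by rw [h0, zero_mul])
    have hG12 : ⁅-J f1, -J f2⁆ = (p1*q2 - p2*q1)⁻¹ • e3 := by
      have h1 := Hm (-J f1) (-J f2) hEg1 hEg2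
      rw [hJg1, hJg2, hfb, hJf3] at h1
      have h2 : ⁅-J f1, -J f2⁆ = (-((p1*q2 - p2*q1)*κ))⁻¹ • (-(κ • e3)) := by
        rw [h1, smul_smul, inv_mul_cancel₀ (neg_ne_zero.mpr hτ0), one_smul]
      rw [h2]
      match_scalars
      field_simp
      try ring
    have hG13 : ⁅-J f1, -J f3⁆ = 0 := by
      have h1 := Hm (-J f1) (-J f3) hEg1 hEg3
      rw [hJg1, hJg3, hbf13, map_zero] at h1
      exact (smul_eq_zero.mp h1.symm).resolve_left (neg_ne_zero.mpr hτ0)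
    have hG23 : ⁅-J f2, -J f3⁆ = 0 := by
      have h1 := Hm (-J f2) (-J f3) hEg2 hEg3
      rw [hJg2, hJg3, hbf23, map_zero] at h1
      exact (smul_eq_zero.mp h1.symm).resolve_left (neg_ne_zero.mpr hτ0)
    have hJF12 : ⁅J f1, J f2⁆ = (p1*q2 - p2*q1)⁻¹ • e3 := by
      rw [show J f1 = -(-J f1) from (neg_neg _).symm, show J f2 = -(-J f2) from (neg_neg _).symm,
        neg_lie, lie_neg, neg_neg, hG12]
    have hJF13 : ⁅J f1, J f3⁆ = 0 := by
      rw [show J f1 = -(-J f1) from (neg_neg _).symm, show J f3 = -(-J f3) from (neg_neg _).symm,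
        neg_lie, lie_neg, neg_neg, hG13]
    have hJF23 : ⁅J f2, J f3⁆ = 0 := by
      rw [show J f2 = -(-J f2) from (neg_neg _).symm, show J f3 = -(-J f3) from (neg_neg _).symm,
        neg_lie, lie_neg, neg_neg, hG23]
    -- abstract rotation data
    obtain ⟨θ, c1, s1, hθ0, hθlt, hc1pos, hs1e, hPy1, hcosθ, hsinθ⟩ :=
      exists_rot ((p1*q2 - p2*q1)*κ)
    have hρpos : 0 < c1 + s1 * ((p1*q2 - p2*q1)*κ) := by
      rw [hs1e]; exact aux_pos c1 ((p1*q2 - p2*q1)*κ) hc1pos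
    set ρ := c1 + s1 * ((p1*q2 - p2*q1)*κ) with hρd
    have hρ0 : ρ ≠ 0 := ne_of_gt hρpos
    -- rotated brackets on the positive part
    have hRpos : ∀ x y : g, E x = x → E y = y →
        ⁅c1•x + s1•(J x), c1•y + s1•(J y)⁆ = ρ • (c1•⁅x,y⁆ + s1•(J ⁅x,y⁆)) := by
      intro x y hx hy
      rw [rot_bracket J hJ2 hJi c1 s1 x y, Hm x y hx hy,
        show c1•⁅x,y⁆ - s1•((-((p1*q2 - p2*q1)*κ))•⁅x,y⁆) = ρ•⁅x,y⁆ by rw [hρd]; module,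
        map_smul]
      module
    set A1 := c1 • e1 + s1 • (J e1) with hA1d
    set A2 := c1 • e2 + s1 • (J e2) with hA2d
    set A3 := c1 • e3 + s1 • (J e3) with hA3d
    set B1 := c1 • f1 + s1 • (J f1) with hB1d
    set B2 := c1 • f2 + s1 • (J f2) with hB2d
    set B3 := c1 • f3 + s1 • (J f3) with hB3d
    have hbr12 : ⁅A1, A2⁆ = ρ • A3 := by
      rw [hA1d, hA2d, hA3d, hRpos e1 e2 hEe1 hEe2, heb]
    have hbr13 : ⁅A1, A3⁆ = 0 := by
      rw [hA1d, hA3d, hRpos e1 e3 hEe1 hEe3, hb13]; simp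
    have hbr23 : ⁅A2, A3⁆ = 0 := by
      rw [hA2d, hA3d, hRpos e2 e3 hEe2 hEe3, hb23]; simp
    have hbr21 : ⁅A2, A1⁆ = -(ρ • A3) := by rw [← lie_skew, hbr12]
    have hbr31 : ⁅A3, A1⁆ = 0 := by rw [← lie_skew, hbr13, neg_zero]
    have hbr32 : ⁅A3, A2⁆ = 0 := by rw [← lie_skew, hbr23, neg_zero]
    -- rotated brackets on the negative part vanish
    have hz0 : c1•f3 - s1•((p1*q2 - p2*q1)⁻¹•(κ⁻¹•f3)) = (0:g) := by
      rw [hs1e]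
      match_scalars
      field_simp
      try ring
    have hnr12 : ⁅B1, B2⁆ = 0 := by
      rw [hB1d, hB2d, rot_bracket J hJ2 hJi c1 s1 f1 f2, hfb, hJF12, map_smul, hJe3, hz0]
      simp
    have hnr13 : ⁅B1, B3⁆ = 0 := by
      rw [hB1d, hB3d, rot_bracket J hJ2 hJi c1 s1 f1 f3, hbf13, hJF13, map_zero]
      simp
    have hnr23 : ⁅B2, B3⁆ = 0 := by
      rw [hB2d, hB3d, rot_bracket J hJ2 hJi c1 s1 f2 f3, hbf23, hJF23, map_zero]
      simp
    have hnr21 : ⁅B2, B1⁆ = 0 := by rw [← lie_skew, hnr12, neg_zero]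
    have hnr31 : ⁅B3, B1⁆ = 0 := by rw [← lie_skew, hnr13, neg_zero]
    have hnr32 : ⁅B3, B2⁆ = 0 := by rw [← lie_skew, hnr23, neg_zero]
    -- the rotated product structure
    set F := (c1^2 - s1^2) • E + (2*(s1*c1)) • (J * E) with hFd
    have hFap : ∀ x : g, F x = (c1^2 - s1^2) • E x + (2*(s1*c1)) • J (E x) := by
      intro x
      rw [hFd]
      simp [LinearMap.add_apply, LinearMap.smul_apply, Module.End.mul_apply]
    have hF2 : ∀ x : g, F (F x) = x := by
      intro x
      rw [hFap (F x), hFap x]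
      simp only [map_add, map_smul, hE2, hEJ, hJ2, map_neg, smul_neg, neg_neg]
      match_scalars <;> first
        | linear_combination (s1^2 + c1^2 + 1) * hPy1
        | ring
    have hFJ : ∀ x : g, J (F x) = -(F (J x)) := by
      intro x
      rw [hFap x, hFap (J x)]
      simp only [map_add, map_smul, hJ2, hEJ, map_neg, smul_neg, neg_neg, neg_add]
      try module
    have hFpos : ∀ x : g, E x = x → F (c1 • x + s1 • (J x)) = c1 • x + s1 • (J x) := by
      intro x hx
      rw [hFap]
      simp only [map_add, map_smul, hx, hEJ, map_neg, smul_neg, hJ2, neg_neg]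
      match_scalars <;> first
        | linear_combination c1 * hPy1
        | linear_combination s1 * hPy1
        | ring
    have hFneg : ∀ x : g, E x = -x → F (c1 • x + s1 • (J x)) = -(c1 • x + s1 • (J x)) := by
      intro x hx
      rw [hFap]
      simp only [map_add, map_smul, hx, hEJ, map_neg, smul_neg, hJ2, neg_neg, neg_add]
      match_scalars <;> first
        | linear_combination (-c1) * hPy1
        | linear_combination (-s1) * hPy1
        | ring
        | linear_combination (-c1) * hPy1
        | linear_combination (-s1) * hPy1
    -- memberships
    have hA1P : A1 ∈ posPart F := by
      show F A1 = A1
      rw [hA1d]; exact hFpos e1 hEe1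
    have hA2P : A2 ∈ posPart F := by
      show F A2 = A2
      rw [hA2d]; exact hFpos e2 hEe2
    have hA3P : A3 ∈ posPart F := by
      show F A3 = A3
      rw [hA3d]; exact hFpos e3 hEe3
    have hB1N : B1 ∈ negPart F := by
      show F B1 = -B1
      rw [hB1d]; exact hFneg f1 hEf1
    have hB2N : B2 ∈ negPart F := by
      show F B2 = -B2
      rw [hB2d]; exact hFneg f2 hEf2
    have hB3N : B3 ∈ negPart F := by
      show F B3 = -B3
      rw [hB3d]; exact hFneg f3 hEf3
    set CV := ρ • A3 with hCVd
    have hCVP : CV ∈ posPart F := (posPart F).smul_mem ρ hA3P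
    -- linear equivalences
    set Jeq : g ≃ₗ[ℝ] g := LinearEquiv.ofLinear J (-J)
      (by ext x; simp [hJ2]) (by ext x; simp [hJ2]) with hJeqd
    have hJeqap : ∀ x : g, (Jeq : g →ₗ[ℝ] g) x = J x := fun x => by
      rw [hJeqd]; rfl
    set Req : g ≃ₗ[ℝ] g := LinearEquiv.ofLinear
      (c1 • (1 : Module.End ℝ g) + s1 • J) (c1 • (1 : Module.End ℝ g) - s1 • J)
      (by
        ext x
        simp only [LinearMap.coe_comp, Function.comp_apply, LinearMap.add_apply,
          LinearMap.sub_apply, LinearMap.smul_apply, Module.End.one_apply, map_add,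
          map_sub, map_smul, hJ2, smul_neg, LinearMap.id_coe, id_eq]
        match_scalars <;> first
          | linear_combination hPy1
          | ring)
      (by
        ext x
        simp only [LinearMap.coe_comp, Function.comp_apply, LinearMap.add_apply,
          LinearMap.sub_apply, LinearMap.smul_apply, Module.End.one_apply, map_add,
          map_sub, map_smul, hJ2, smul_neg, LinearMap.id_coe, id_eq]
        match_scalars <;> first
          | linear_combination hPy1
          | ring) with hReqd
    have hReqapL : ∀ x : g, (Req : g →ₗ[ℝ] g) x = c1 • x + s1 • (J x) := fun x => by
      rw [hReqd]; rfl
    have hReqap : ∀ x : g, Req x = c1 • x + s1 • (J x) := fun x => by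
      rw [hReqd]; rfl
    -- linear independence of the rotated vectors
    have li1 : LinearIndependent ℝ ((Req : g →ₗ[ℝ] g) ∘ ![e1, e2, e3]) :=
      heli.map' _ (LinearEquiv.ker Req)
    have li1' : LinearIndependent ℝ ![A1, A2, A3] := by
      have hfe : (Req : g →ₗ[ℝ] g) ∘ ![e1, e2, e3] = ![A1, A2, A3] := by
        funext i
        fin_cases i <;> simp [hReqap, hReqapL, LinearEquiv.coe_coe, hA1d, hA2d, hA3d]
      rwa [hfe] at li1
    have li2 : LinearIndependent ℝ ![A1, A2, CV] := by
      have h' := li1'.units_smul ![1, 1, Units.mk0 ρ hρ0]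
      have hfe : (![1, 1, Units.mk0 ρ hρ0] • ![A1, A2, A3]) = ![A1, A2, CV] := by
        funext i
        fin_cases i <;> simp [Pi.smul_apply', hCVd, Units.smul_def]
      rwa [hfe] at h'
    have li3 : LinearIndependent ℝ ![B1, B2, B3] := by
      have h' : LinearIndependent ℝ ((Req : g →ₗ[ℝ] g) ∘ ![f1, f2, f3]) :=
        hfli.map' _ (LinearEquiv.ker Req)
      have hfe : (Req : g →ₗ[ℝ] g) ∘ ![f1, f2, f3] = ![B1, B2, B3] := by
        funext i
        fin_cases i <;> simp [hReqap, hReqapL, LinearEquiv.coe_coe, hB1d, hB2d, hB3d]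
      rwa [hfe] at h'
    -- dimension bookkeeping
    have hinf : posPart F ⊓ negPart F = ⊥ := by
      rw [eq_bot_iff]
      intro x hx
      rw [Submodule.mem_inf] at hx
      obtain ⟨hx1, hx2⟩ := hx
      have h1 : F x = x := hx1
      have h2 : F x = -x := hx2
      have hxx : x = -x := h1.symm.trans h2
      have h3 : (2:ℝ) • x = 0 := by
        rw [two_smul]
        nth_rewrite 1 [hxx]
        exact neg_add_cancel x
      have h4 : x = 0 := (smul_eq_zero.mp h3).resolve_left (by norm_num)
      simp [h4]
    have hsup : posPart F ⊔ negPart F = ⊤ := by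
      rw [eq_top_iff]
      intro x _
      rw [Submodule.mem_sup]
      refine ⟨(2⁻¹:ℝ) • (x + F x), ?_, (2⁻¹:ℝ) • (x - F x), ?_, by module⟩
      · show F ((2⁻¹:ℝ) • (x + F x)) = (2⁻¹:ℝ) • (x + F x)
        rw [map_smul, map_add, hF2, add_comm]
      · show F ((2⁻¹:ℝ) • (x - F x)) = -((2⁻¹:ℝ) • (x - F x))
        rw [map_smul, map_sub, hF2]
        module
    have hcard : finrank ℝ ↥(posPart F) + finrank ℝ ↥(negPart F) = 6 := by
      have h' := Submodule.finrank_sup_add_finrank_inf_eq (posPart F) (negPart F)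
      rw [hsup, hinf, finrank_top, hdim, finrank_bot, add_zero] at h'
      omega
    have hmapP : Submodule.map (Jeq : g →ₗ[ℝ] g) (posPart F) ≤ negPart F := by
      intro x hx
      rw [Submodule.mem_map] at hx
      obtain ⟨y, hy, rfl⟩ := hx
      have h1 : F y = y := hy
      have h2 := hFJ y
      rw [h1] at h2
      have h3 : F (J y) = -(J y) := by
        have h4 := congrArg Neg.neg h2
        rw [neg_neg] at h4
        exact h4.symm
      show F ((Jeq : g →ₗ[ℝ] g) y) = -((Jeq : g →ₗ[ℝ] g) y)
      rw [hJeqap]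
      exact h3
    have hmapN : Submodule.map (Jeq : g →ₗ[ℝ] g) (negPart F) ≤ posPart F := by
      intro x hx
      rw [Submodule.mem_map] at hx
      obtain ⟨y, hy, rfl⟩ := hx
      have h1 : F y = -y := hy
      have h2 := hFJ y
      rw [h1, map_neg] at h2
      have h3 : F (J y) = J y := by
        have h4 := congrArg Neg.neg h2
        rw [neg_neg, neg_neg] at h4
        exact h4.symm
      show F ((Jeq : g →ₗ[ℝ] g) y) = (Jeq : g →ₗ[ℝ] g) y
      rw [hJeqap]
      exact h3
    have hPle : finrank ℝ ↥(posPart F) ≤ finrank ℝ ↥(negPart F) := by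
      have h' := LinearEquiv.finrank_map_eq Jeq (posPart F)
      rw [← h']
      exact Submodule.finrank_mono hmapP
    have hNle : finrank ℝ ↥(negPart F) ≤ finrank ℝ ↥(posPart F) := by
      have h' := LinearEquiv.finrank_map_eq Jeq (negPart F)
      rw [← h']
      exact Submodule.finrank_mono hmapN
    have hfrP : finrank ℝ ↥(posPart F) = 3 := by omega
    have hfrN : finrank ℝ ↥(negPart F) = 3 := by omega
    -- identification of the eigenspaces
    have hspP3 : finrank ℝ ↥(Submodule.span ℝ ({A1, A2, CV} : Set g)) = 3 := by
      rw [← range_triple' A1 A2 CV, finrank_span_eq_card li2, Fintype.card_fin]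
    have hspN3 : finrank ℝ ↥(Submodule.span ℝ ({B1, B2, B3} : Set g)) = 3 := by
      rw [← range_triple' B1 B2 B3, finrank_span_eq_card li3, Fintype.card_fin]
    have hsplP : Submodule.span ℝ ({A1, A2, CV} : Set g) ≤ posPart F := by
      rw [Submodule.span_le]
      intro b hb
      simp only [Set.mem_insert_iff, Set.mem_singleton_iff] at hb
      rcases hb with rfl | rfl | rfl
      exacts [hA1P, hA2P, hCVP]
    have hsplN : Submodule.span ℝ ({B1, B2, B3} : Set g) ≤ negPart F := by
      rw [Submodule.span_le]
      intro b hb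
      simp only [Set.mem_insert_iff, Set.mem_singleton_iff] at hb
      rcases hb with rfl | rfl | rfl
      exacts [hB1N, hB2N, hB3N]
    have hPeq : posPart F = Submodule.span ℝ ({A1, A2, CV} : Set g) :=
      (Submodule.eq_of_le_of_finrank_le hsplP (by rw [hfrP, hspP3])).symm
    have hNeq : negPart F = Submodule.span ℝ ({B1, B2, B3} : Set g) :=
      (Submodule.eq_of_le_of_finrank_le hsplN (by rw [hfrN, hspN3])).symm
    -- abelianity of the negative part
    have habN : ∀ x ∈ negPart F, ∀ y ∈ negPart F, ⁅x, y⁆ = 0 := by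
      intro x hx y hy
      rw [hNeq] at hx hy
      have h' : ⁅x, y⁆ ∈ (⊥ : Submodule ℝ g) := by
        refine lie_span_span ?_ x hx y hy
        intro a ha b hb
        simp only [Set.mem_insert_iff, Set.mem_singleton_iff] at ha hb
        rw [Submodule.mem_bot]
        rcases ha with rfl | rfl | rfl <;> rcases hb with rfl | rfl | rfl <;>
          simp [lie_self, hnr12, hnr13, hnr23, hnr21, hnr31, hnr32]
      simpa using h'
    -- the positive part is a subalgebra
    have hclP : ∀ a b : g, F a = a → F b = b → F ⁅a, b⁆ = ⁅a, b⁆ := by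
      intro a b ha hb
      have haS : a ∈ posPart F := ha
      have hbS : b ∈ posPart F := hb
      rw [hPeq] at haS hbS
      have h' : ⁅a, b⁆ ∈ posPart F := by
        refine lie_span_span ?_ a haS b hbS
        intro u hu v hv
        simp only [Set.mem_insert_iff, Set.mem_singleton_iff] at hu hv
        rcases hu with rfl | rfl | rfl <;> rcases hv with rfl | rfl | rfl
        · rw [lie_self]; exact (posPart F).zero_mem
        · rw [hbr12]; exact (posPart F).smul_mem ρ hA3P
        · rw [hCVd, lie_smul, hbr13, smul_zero]; exact (posPart F).zero_mem
        · rw [hbr21]; exact (posPart F).neg_mem ((posPart F).smul_mem ρ hA3P)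
        · rw [lie_self]; exact (posPart F).zero_mem
        · rw [hCVd, lie_smul, hbr23, smul_zero]; exact (posPart F).zero_mem
        · rw [hCVd, smul_lie, hbr31, smul_zero]; exact (posPart F).zero_mem
        · rw [hCVd, smul_lie, hbr32, smul_zero]; exact (posPart F).zero_mem
        · rw [lie_self]; exact (posPart F).zero_mem
      exact h'
    have hNab' : ∀ a b : g, F a = -a → F b = -b → ⁅a, b⁆ = 0 := fun a b ha hb =>
      habN a ha b hb
    -- integrability of F
    have hFint : ∀ x y : g, F ⁅x, y⁆ = ⁅F x, y⁆ + ⁅x, F y⁆ - F ⁅F x, F y⁆ := by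
      have key : ∀ a b a' b' : g, F a = a → F a' = a' → F b = -b → F b' = -b' →
          F ⁅a + b, a' + b'⁆ =
            ⁅F (a + b), a' + b'⁆ + ⁅a + b, F (a' + b')⁆ - F ⁅F (a + b), F (a' + b')⁆ := by
        intro a b a' b' ha ha' hb hb'
        have h1 : ⁅b, b'⁆ = 0 := hNab' _ _ hb hb'
        have h2 : F ⁅a, a'⁆ = ⁅a, a'⁆ := hclP _ _ ha ha'
        simp only [map_add, ha, ha', hb, hb', lie_add, add_lie, lie_neg, neg_lie, h1,
          map_neg, map_zero, h2, neg_neg, neg_zero, add_zero, zero_add]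
        abel
      intro x y
      have hxd : (2⁻¹:ℝ) • (x + F x) + (2⁻¹:ℝ) • (x - F x) = x := by module
      have hyd : (2⁻¹:ℝ) • (y + F y) + (2⁻¹:ℝ) • (y - F y) = y := by module
      have hpa : F ((2⁻¹:ℝ) • (x + F x)) = (2⁻¹:ℝ) • (x + F x) := by
        rw [map_smul, map_add, hF2, add_comm]
      have hna : F ((2⁻¹:ℝ) • (x - F x)) = -((2⁻¹:ℝ) • (x - F x)) := by
        rw [map_smul, map_sub, hF2]; module
      have hpb : F ((2⁻¹:ℝ) • (y + F y)) = (2⁻¹:ℝ) • (y + F y) := by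
        rw [map_smul, map_add, hF2, add_comm]
      have hnb : F ((2⁻¹:ℝ) • (y - F y)) = -((2⁻¹:ℝ) • (y - F y)) := by
        rw [map_smul, map_sub, hF2]; module
      have h' := key _ _ _ _ hpa hpb hna hnb
      rw [hxd, hyd] at h'
      exact h'
    -- F is not ± id
    have hB1ne : B1 ≠ 0 := by simpa using li3.ne_zero 0
    have hA1ne : A1 ≠ 0 := by simpa using li2.ne_zero 0
    have hFneid : F ≠ LinearMap.id := by
      intro h'
      have h1 : F B1 = B1 := by rw [h']; rfl
      have h2 : F B1 = -B1 := hB1N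
      have hxx : B1 = -B1 := h1.symm.trans h2
      have h3 : (2:ℝ) • B1 = 0 := by
        rw [two_smul]
        nth_rewrite 1 [hxx]
        exact neg_add_cancel B1
      exact hB1ne ((smul_eq_zero.mp h3).resolve_left (by norm_num))
    have hFnenid : F ≠ -LinearMap.id := by
      intro h'
      have h1 : F A1 = -A1 := by rw [h']; simp
      have h2 : F A1 = A1 := hA1P
      have hxx : A1 = -A1 := h2.symm.trans h1
      have h3 : (2:ℝ) • A1 = 0 := by
        rw [two_smul]
        nth_rewrite 1 [hxx]
        exact neg_add_cancel A1
      exact hA1ne ((smul_eq_zero.mp h3).resolve_left (by norm_num))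
    -- assemble everything
    refine ⟨θ, hθ0, hθlt, ?_, ?_, ?_, ?_⟩
    · rw [hcosθ, hsinθ, ← hFd]
      exact ⟨⟨hJ2, hJi⟩, ⟨hF2, hFneid, hFnenid, hFint⟩, fun x => hFJ x⟩
    · rw [hcosθ, hsinθ, ← hFd]
      refine ⟨A1, A2, CV, hA1P, hA2P, hCVP, li2, hPeq.le, by rw [hbr12, hCVd], ?_⟩
      intro y hy
      rw [hPeq] at hy
      have h' : ⁅CV, y⁆ ∈ (⊥ : Submodule ℝ g) := by
        refine lie_span_span ?_ CV (Submodule.mem_span_singleton_self CV) y hy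
        intro a ha b hb
        simp only [Set.mem_singleton_iff] at ha
        simp only [Set.mem_insert_iff, Set.mem_singleton_iff] at hb
        subst ha
        rw [Submodule.mem_bot]
        rcases hb with rfl | rfl | rfl
        · rw [hCVd, smul_lie, hbr31, smul_zero]
        · rw [hCVd, smul_lie, hbr32, smul_zero]
        · rw [lie_self]
      simpa using h'
    · rw [hcosθ, hsinθ, ← hFd]
      exact hfrN
    · rw [hcosθ, hsinθ, ← hFd]
      exact habN
  · -- contradictory case : nilpotency is violated
    exfalso
    have rot1 : ∀ x y : g, ⁅x + J x, y + J y⁆ =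
        (⁅x,y⁆ - J ⁅J x, J y⁆) + J (⁅x,y⁆ - J ⁅J x, J y⁆) := by
      intro x y
      have h' := rot_bracket J hJ2 hJi 1 1 x y
      simpa using h'
    have hnegJe3 : E (J e3) = -(J e3) := hposJ e3 hEe3
    obtain ⟨u1, u2, u3, hJe3⟩ := exists_coords3 (hfsp hnegJe3)
    obtain ⟨v1, v2, v3, hg3⟩ := exists_coords3 (hesp hEg3)
    have hu : u1 ≠ 0 ∨ u2 ≠ 0 := by
      by_contra hK
      push_neg at hK
      obtain ⟨h1, h2⟩ := hK
      rw [h1, h2, zero_smul, zero_smul, zero_add, zero_add] at hJe3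
      have he3' : e3 = u3 • (-J f3) := by
        have h3 := hJ2 e3
        rw [hJe3, map_smul] at h3
        rw [← neg_neg e3, ← h3, smul_neg]
      have hu3 : u3 ≠ 0 := by
        intro h0; rw [h0, zero_smul] at he3'; exact hne_e3 he3'
      apply hc
      rw [Submodule.mem_span_singleton]
      exact ⟨u3⁻¹, by rw [he3', smul_smul, inv_mul_cancel₀ hu3, one_smul]⟩
    have hv : v1 ≠ 0 ∨ v2 ≠ 0 := by
      by_contra hK
      push_neg at hK
      obtain ⟨h1, h2⟩ := hK
      rw [h1, h2, zero_smul, zero_smul, zero_add, zero_add] at hg3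
      exact hc (Submodule.mem_span_singleton.mpr ⟨v3, hg3.symm⟩)
    have step1 : ∃ yy : g, ∃ d : ℝ, d ≠ 0 ∧
        ⁅yy + J yy, e3 + J e3⁆ = d • ((-J f3) + J (-J f3)) := by
      rcases hu with hu1 | hu2
      · refine ⟨-J f2, -u1, neg_ne_zero.mpr hu1, ?_⟩
        rw [rot1 (-J f2) e3, hJg2]
        have hA : ⁅-J f2, e3⁆ = 0 := by rw [← lie_skew, hec (-J f2) hEg2, neg_zero]
        have hB : ⁅f2, J e3⁆ = -(u1 • f3) := by
          rw [hJe3]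
          simp only [lie_add, lie_smul, hbf21, hbf23, lie_self, smul_zero, add_zero,
            smul_neg]
          try module
        rw [hA, hB]
        simp only [zero_sub, map_neg, map_smul, neg_neg, smul_add, smul_neg, hJ2, hJg3,
          neg_smul]
        try module
      · refine ⟨-J f1, u2, hu2, ?_⟩
        rw [rot1 (-J f1) e3, hJg1]
        have hA : ⁅-J f1, e3⁆ = 0 := by rw [← lie_skew, hec (-J f1) hEg1, neg_zero]
        have hB : ⁅f1, J e3⁆ = u2 • f3 := by
          rw [hJe3]
          simp only [lie_add, lie_smul, hfb, hbf13, lie_self, smul_zero, add_zero,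
            zero_add]
          try module
        rw [hA, hB]
        simp only [zero_sub, map_neg, map_smul, neg_neg, smul_add, smul_neg, hJ2, hJg3,
          neg_smul]
        try module
    have step2 : ∃ zz : g, ∃ d : ℝ, d ≠ 0 ∧
        ⁅zz + J zz, (-J f3) + J (-J f3)⁆ = d • (e3 + J e3) := by
      rcases hv with hv1 | hv2
      · refine ⟨e2, -v1, neg_ne_zero.mpr hv1, ?_⟩
        rw [rot1 e2 (-J f3), hJg3]
        have hA : ⁅e2, -J f3⁆ = -(v1 • e3) := by
          rw [hg3]
          simp only [lie_add, lie_smul, hb21, hb23, lie_self, smul_zero, add_zero,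
            smul_neg]
          try module
        have hB : ⁅J e2, f3⁆ = 0 := by
          rw [← lie_skew, hfc (J e2) (hposJ e2 hEe2), neg_zero]
        rw [hA, hB, map_zero, sub_zero]
        simp only [map_neg, map_smul, smul_add, smul_neg, neg_smul]
        try module
      · refine ⟨e1, v2, hv2, ?_⟩
        rw [rot1 e1 (-J f3), hJg3]
        have hA : ⁅e1, -J f3⁆ = v2 • e3 := by
          rw [hg3]
          simp only [lie_add, lie_smul, heb, hb13, lie_self, smul_zero, add_zero,
            zero_add]
          try module
        have hB : ⁅J e1, f3⁆ = 0 := by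
          rw [← lie_skew, hfc (J e1) (hposJ e1 hEe1), neg_zero]
        rw [hA, hB, map_zero, sub_zero]
        simp only [map_smul, smul_add]
    obtain ⟨yy, d1, hd1, hyy⟩ := step1
    obtain ⟨zz, d2, hd2, hzz⟩ := step2
    have main : ∀ k : ℕ, (e3 + J e3 ∈ LieModule.lowerCentralSeries ℝ g g k) ∧
        ((-J f3) + J (-J f3) ∈ LieModule.lowerCentralSeries ℝ g g k) := by
      intro k
      induction k with
      | zero =>
        rw [LieModule.lowerCentralSeries_zero]
        exact ⟨LieSubmodule.mem_top _, LieSubmodule.mem_top _⟩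
      | succ k ih =>
        obtain ⟨hA, hB⟩ := ih
        constructor
        · have h1 : ⁅zz + J zz, (-J f3) + J (-J f3)⁆ ∈
              LieModule.lowerCentralSeries ℝ g g (k+1) := by
            rw [LieModule.lowerCentralSeries_succ]
            exact LieSubmodule.lie_mem_lie (LieSubmodule.mem_top _) hB
          rw [hzz] at h1
          have h2 := (LieModule.lowerCentralSeries ℝ g g (k+1)).smul_mem d2⁻¹ h1
          rwa [smul_smul, inv_mul_cancel₀ hd2, one_smul] at h2
        · have h1 : ⁅yy + J yy, e3 + J e3⁆ ∈
              LieModule.lowerCentralSeries ℝ g g (k+1) := by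
            rw [LieModule.lowerCentralSeries_succ]
            exact LieSubmodule.lie_mem_lie (LieSubmodule.mem_top _) hA
          rw [hyy] at h1
          have h2 := (LieModule.lowerCentralSeries ℝ g g (k+1)).smul_mem d1⁻¹ h1
          rwa [smul_smul, inv_mul_cancel₀ hd1, one_smul] at h2
    obtain ⟨k, hk⟩ := (LieModule.IsNilpotent.nilpotent ℝ g g :
      ∃ k, LieModule.lowerCentralSeries ℝ g g k = ⊥)
    have hA := (main k).1
    rw [hk] at hA
    have h0 : e3 + J e3 = 0 := by simpa using hA
    have h1 : -e3 = J e3 := neg_eq_of_add_eq_zero_right h0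
    have h2 := hJ2 e3
    rw [← h1, map_neg] at h2
    have h3 : J e3 = e3 := neg_injective h2
    rw [h3] at h1
    have h4 : (2:ℝ) • e3 = 0 := by
      rw [two_smul]
      nth_rewrite 1 [← h1]
      exact neg_add_cancel e3
    rcases smul_eq_zero.mp h4 with h5 | h5
    · norm_num at h5
    · exact hne_e3 h5
end

section
/- Let g be a 6-dimensional nilpotent real Lie algebra with a complex product structure {J,E} whose eigenspace subalgebras satisfy g₊ ≅ h₃ and g₋ abelian. Then E' := JE is a product structure on g anticommuting with J (so {J,E'} is a complex product structure on g) such that both the +1-eigenspace and the −1-eigenspace of E' are isomorphic to h₃. -/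
open Module LinearMap

variable {g : Type*} [LieRing g] [LieAlgebra ℝ g]

section Helpers

variable {J E : Module.End ℝ g}

lemma mem_posPart_iff {E : Module.End ℝ g} {x : g} : x ∈ posPart E ↔ E x = x := Iff.rfl

lemma mem_negPart_iff {E : Module.End ℝ g} {x : g} : x ∈ negPart E ↔ E x = -x := Iff.rfl

lemma negswap {a b : g} (hab : a = -b) : b = -a := by rw [hab, neg_neg]

lemma two_smul_cancel {x y : g} (hxy : x + x = y + y) : x = y := by
  have h2 : (2:ℝ) • x = (2:ℝ) • y := by rw [two_smul, two_smul]; exact hxy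
  exact smul_right_injective g (two_ne_zero) h2

/-- Brackets of `+1`-eigenvectors are `+1`-eigenvectors. -/
lemma brkt_pos_lem (hPE : IsProductStr E) {u v : g} (hu : E u = u) (hv : E v = v) :
    E ⁅u, v⁆ = ⁅u, v⁆ := by
  have hint := hPE.2.2.2 u v
  rw [hu, hv] at hint
  apply two_smul_cancel
  nth_rewrite 1 [hint]
  abel

/-- The key consequence of integrability of `J` when `⁅Ju,Jv⁆ = 0`. -/
lemma key_L3 (h : IsCPS J E) {u v : g} (hJJ : ⁅J u, J v⁆ = 0) :
    ⁅J u, v⁆ + ⁅u, J v⁆ = J ⁅u, v⁆ := by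
  have hint := h.1.2 (J u) (J v)
  rw [hJJ, h.1.1 u, h.1.1 v, map_zero] at hint
  simp only [neg_lie, lie_neg, neg_neg] at hint
  apply eq_of_sub_eq_zero
  have hrw : ⁅J u, v⁆ + ⁅u, J v⁆ - J ⁅u, v⁆ = -(-⁅u, J v⁆ + -⁅J u, v⁆ + J ⁅u, v⁆) := by abel
  rw [hrw, ← hint, neg_zero]

lemma brkt_pp (h : IsCPS J E) {u v : g} (hJJ : ⁅J u, J v⁆ = 0) :
    ⁅u + J u, v + J v⁆ = ⁅u, v⁆ + J ⁅u, v⁆ := by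
  have h3 := key_L3 h hJJ
  rw [lie_add, add_lie, add_lie, hJJ, add_zero, ← h3]
  abel

lemma brkt_mm (h : IsCPS J E) {u v : g} (hJJ : ⁅J u, J v⁆ = 0) :
    ⁅u - J u, v - J v⁆ = ⁅u, v⁆ - J ⁅u, v⁆ := by
  have h3 := key_L3 h hJJ
  rw [lie_sub, sub_lie, sub_lie, hJJ, sub_zero, ← h3]
  abel

/-- Elements of the `+1`-eigenspace of `JE` have the form `u + Ju` with `u ∈ g₊`. -/
lemma pos_form (h : IsCPS J E) {x : g} (hx : J (E x) = x) :
    ∃ u : g, E u = u ∧ x = u + J u := by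
  have hJx : J x = -(E x) := by
    have h1 := h.1.1 (E x); rwa [hx] at h1
  refine ⟨(2⁻¹ : ℝ) • (x + E x), ?_, ?_⟩
  · rw [map_smul, map_add, h.2.1.1]; module
  · rw [map_smul, map_add, hJx, hx]; module

/-- Elements of the `-1`-eigenspace of `JE` have the form `u - Ju` with `u ∈ g₊`. -/
lemma neg_form (h : IsCPS J E) {x : g} (hx : J (E x) = -x) :
    ∃ u : g, E u = u ∧ x = u - J u := by
  have hJx : J x = E x := by
    have h1 := h.1.1 (E x); rw [hx, map_neg] at h1
    exact neg_inj.mp h1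
  refine ⟨(2⁻¹ : ℝ) • (x + E x), ?_, ?_⟩
  · rw [map_smul, map_add, h.2.1.1]; module
  · rw [map_smul, map_add, hJx, hx]; module

lemma JE_sq (h : IsCPS J E) (z : g) : J (E (J (E z))) = z := by
  have h1 : E (J (E z)) = -(J z) := by
    have h2 := h.2.2 (E z); rw [h.2.1.1] at h2
    exact negswap h2
  rw [h1, map_neg, h.1.1, neg_neg]

lemma Cplus (h : IsCPS J E) (hJJ : ∀ u v : g, E u = u → E v = v → ⁅J u, J v⁆ = 0)
    {x y : g} (hx : J (E x) = x) (hy : J (E y) = y) : J (E ⁅x, y⁆) = ⁅x, y⁆ := by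
  obtain ⟨u, hu, rfl⟩ := pos_form h hx
  obtain ⟨v, hv, rfl⟩ := pos_form h hy
  rw [brkt_pp h (hJJ u v hu hv)]
  have h1 : E ⁅u, v⁆ = ⁅u, v⁆ := brkt_pos_lem h.2.1 hu hv
  have h2 : E (J ⁅u, v⁆) = -(J ⁅u, v⁆) := by
    have h3 := h.2.2 ⁅u, v⁆; rw [h1] at h3; exact negswap h3
  rw [map_add, h1, h2, map_add, map_neg, h.1.1, neg_neg]
  abel

lemma Cminus (h : IsCPS J E) (hJJ : ∀ u v : g, E u = u → E v = v → ⁅J u, J v⁆ = 0)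
    {x y : g} (hx : J (E x) = -x) (hy : J (E y) = -y) : J (E ⁅x, y⁆) = -⁅x, y⁆ := by
  obtain ⟨u, hu, rfl⟩ := neg_form h hx
  obtain ⟨v, hv, rfl⟩ := neg_form h hy
  rw [brkt_mm h (hJJ u v hu hv)]
  have h1 : E ⁅u, v⁆ = ⁅u, v⁆ := brkt_pos_lem h.2.1 hu hv
  have h2 : E (J ⁅u, v⁆) = -(J ⁅u, v⁆) := by
    have h3 := h.2.2 ⁅u, v⁆; rw [h1] at h3; exact negswap h3
  rw [map_sub, h1, h2, sub_neg_eq_add, map_add, h.1.1]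
  abel

/-- Integrability of `E' = JE`. -/
lemma integr (h : IsCPS J E) (hJJ : ∀ u v : g, E u = u → E v = v → ⁅J u, J v⁆ = 0)
    (x y : g) :
    J (E ⁅x, y⁆) = ⁅J (E x), y⁆ + ⁅x, J (E y)⁆ - J (E ⁅J (E x), J (E y)⁆) := by
  have decomp : ∀ z : g, ∃ p m : g, J (E p) = p ∧ J (E m) = -m ∧ z = p + m := by
    intro z
    refine ⟨(2⁻¹ : ℝ) • (z + J (E z)), (2⁻¹ : ℝ) • (z - J (E z)), ?_, ?_, by module⟩
    · rw [map_smul, map_smul, map_add, map_add, JE_sq h]; module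
    · rw [map_smul, map_smul, map_sub, map_sub, JE_sq h]; module
  obtain ⟨p, m, hp, hm, rfl⟩ := decomp x
  obtain ⟨q, n, hq, hn, rfl⟩ := decomp y
  have hpq := Cplus h hJJ hp hq
  have hmn := Cminus h hJJ hm hn
  simp only [map_add, lie_add, add_lie, hp, hm, hq, hn, neg_lie, lie_neg, map_neg,
    hpq, hmn, neg_neg]
  abel

end Helpers

/-- Let `g` be a 6-dimensional nilpotent real Lie algebra with a complex product
structure `{J,E}` whose eigenspace subalgebras satisfy `g₊ ≅ h₃` and `g₋` abelian.
Then `E' := J E` is a product structure anticommuting with `J` (so `{J,E'}` is a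
complex product structure) such that both the `+1`- and the `−1`-eigenspace of `E'`
are isomorphic to `h₃`. -/
theorem rotate_to_heis_heis [FiniteDimensional ℝ g] [LieRing.IsNilpotent g]
    (hdim : Module.finrank ℝ g = 6)
    (J E : Module.End ℝ g) (h : IsCPS J E)
    (hpos : ∃ a b c : g, IsHeisBasis (posPart E) a b c)
    (hneg : ∀ x ∈ negPart E, ∀ y ∈ negPart E, ⁅x, y⁆ = 0) :
    IsCPS J (J * E) ∧
    (∃ a b c : g, IsHeisBasis (posPart (J * E)) a b c) ∧
    (∃ a b c : g, IsHeisBasis (negPart (J * E)) a b c) := by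
  obtain ⟨a, b, c, ha, hb, hc, hli, hspan, habc, hcen⟩ := hpos
  have ha' : E a = a := ha
  have hb' : E b = b := hb
  have hc' : E c = c := hc
  have hane : a ≠ 0 := by simpa using hli.ne_zero 0
  have eq_zero_of_eq_neg : ∀ x : g, x = -x → x = 0 := by
    intro x hx
    apply two_smul_cancel
    nth_rewrite 2 [hx]
    rw [add_neg_cancel, add_zero]
  -- brackets of J-images of `+1`-eigenvectors vanish
  have hEJ : ∀ x : g, E (J x) = -(J (E x)) := fun x => negswap (h.2.2 x)
  have hJJ : ∀ u v : g, E u = u → E v = v → ⁅J u, J v⁆ = 0 := by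
    intro u v hu hv
    have h1 : E (J u) = -(J u) := by rw [hEJ u, hu]
    have h2 : E (J v) = -(J v) := by rw [hEJ v, hv]
    exact hneg (J u) (mem_negPart_iff.mpr h1) (J v) (mem_negPart_iff.mpr h2)
  -- square of J*E is the identity
  have hsq : ∀ x : g, (J * E) ((J * E) x) = x := by
    intro x; simp only [Module.End.mul_apply]; exact JE_sq h x
  -- J*E ≠ id
  have hne1 : (J * E : Module.End ℝ g) ≠ LinearMap.id := by
    intro heq
    have k : ∀ x : g, J (E x) = x := by
      intro x
      simpa [Module.End.mul_apply] using DFunLike.congr_fun heq x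
    have h1 : E (J a) = -(J a) := by rw [hEJ a, ha']
    have h2 := k (J a)
    rw [h1, map_neg, h.1.1, neg_neg] at h2
    -- h2 : a = J a
    have h3 := h.1.1 a
    rw [← h2, ← h2] at h3
    exact hane (eq_zero_of_eq_neg a h3)
  -- J*E ≠ -id
  have hne2 : (J * E : Module.End ℝ g) ≠ -LinearMap.id := by
    intro heq
    have k : ∀ x : g, J (E x) = -x := by
      intro x
      simpa [Module.End.mul_apply] using DFunLike.congr_fun heq x
    have h1 : E (J a) = -(J a) := by rw [hEJ a, ha']
    have h2 := k (J a)
    rw [h1, map_neg, h.1.1, neg_neg] at h2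
    -- h2 : a = -(J a)
    have h4 : J a = -a := negswap h2
    have h3 := h.1.1 a
    rw [h4, map_neg, h4, neg_neg] at h3
    exact hane (eq_zero_of_eq_neg a h3)
  -- the new pair is a complex product structure
  have hcps : IsCPS J (J * E) := by
    refine ⟨h.1, ⟨hsq, hne1, hne2, ?_⟩, ?_⟩
    · intro x y
      simp only [Module.End.mul_apply]
      exact integr h hJJ x y
    · intro x
      simp only [Module.End.mul_apply]
      rw [hEJ x, map_neg, neg_neg]
  -- injectivity of id + J and id - J
  have hkerP : LinearMap.ker (LinearMap.id + J : Module.End ℝ g) = ⊥ := by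
    rw [LinearMap.ker_eq_bot']
    intro m hm
    simp only [LinearMap.add_apply, LinearMap.id_apply] at hm
    have h1 : J m = -m := eq_neg_of_add_eq_zero_right hm
    have h2 := h.1.1 m
    rw [h1, map_neg, h1, neg_neg] at h2
    exact eq_zero_of_eq_neg m h2
  have hkerM : LinearMap.ker (LinearMap.id - J : Module.End ℝ g) = ⊥ := by
    rw [LinearMap.ker_eq_bot']
    intro m hm
    simp only [LinearMap.sub_apply, LinearMap.id_apply] at hm
    have h1 : J m = m := (sub_eq_zero.mp hm).symm
    have h2 := h.1.1 m
    rw [h1, h1] at h2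
    exact eq_zero_of_eq_neg m h2
  refine ⟨hcps, ⟨a + J a, b + J b, c + J c, ?_, ?_, ?_, ?_, ?_, ?_, ?_⟩,
    ⟨a - J a, b - J b, c - J c, ?_, ?_, ?_, ?_, ?_, ?_, ?_⟩⟩
  -- positive part of J*E
  · show (J * E) (a + J a) = a + J a
    simp only [Module.End.mul_apply]
    rw [map_add, ha', hEJ a, ha', map_add, map_neg, h.1.1, neg_neg, add_comm]
  · show (J * E) (b + J b) = b + J b
    simp only [Module.End.mul_apply]
    rw [map_add, hb', hEJ b, hb', map_add, map_neg, h.1.1, neg_neg, add_comm]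
  · show (J * E) (c + J c) = c + J c
    simp only [Module.End.mul_apply]
    rw [map_add, hc', hEJ c, hc', map_add, map_neg, h.1.1, neg_neg, add_comm]
  · -- linear independence
    have hmap := hli.map' (LinearMap.id + J) hkerP
    have hfun : (⇑(LinearMap.id + J : Module.End ℝ g)) ∘ ![a, b, c]
        = ![a + J a, b + J b, c + J c] := by
      funext i
      fin_cases i <;> simp
    rwa [hfun] at hmap
  · -- span
    intro x hx
    have hx' : J (E x) = x := by
      have := mem_posPart_iff.mp hx
      simpa [Module.End.mul_apply] using this
    obtain ⟨u, hu, rfl⟩ := pos_form h hx'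
    have hu' : u ∈ Submodule.span ℝ ({a, b, c} : Set g) := hspan (mem_posPart_iff.mpr hu)
    have himg := Submodule.mem_map_of_mem (f := (LinearMap.id + J : Module.End ℝ g)) hu'
    rw [Submodule.map_span] at himg
    simpa [Set.image_insert_eq] using himg
  · rw [brkt_pp h (hJJ a b ha' hb'), habc]
  · -- centrality
    intro y hy
    have hy' : J (E y) = y := by
      have := mem_posPart_iff.mp hy
      simpa [Module.End.mul_apply] using this
    obtain ⟨v, hv, rfl⟩ := pos_form h hy'
    rw [brkt_pp h (hJJ c v hc' hv), hcen v (mem_posPart_iff.mpr hv), map_zero, add_zero]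
  -- negative part of J*E
  · show (J * E) (a - J a) = -(a - J a)
    simp only [Module.End.mul_apply]
    rw [map_sub, ha', hEJ a, ha', sub_neg_eq_add, map_add, h.1.1]
    abel
  · show (J * E) (b - J b) = -(b - J b)
    simp only [Module.End.mul_apply]
    rw [map_sub, hb', hEJ b, hb', sub_neg_eq_add, map_add, h.1.1]
    abel
  · show (J * E) (c - J c) = -(c - J c)
    simp only [Module.End.mul_apply]
    rw [map_sub, hc', hEJ c, hc', sub_neg_eq_add, map_add, h.1.1]
    abel
  · have hmap := hli.map' (LinearMap.id - J) hkerM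
    have hfun : (⇑(LinearMap.id - J : Module.End ℝ g)) ∘ ![a, b, c]
        = ![a - J a, b - J b, c - J c] := by
      funext i
      fin_cases i <;> simp
    rwa [hfun] at hmap
  · intro x hx
    have hx' : J (E x) = -x := by
      have := mem_negPart_iff.mp hx
      simpa [Module.End.mul_apply] using this
    obtain ⟨u, hu, rfl⟩ := neg_form h hx'
    have hu' : u ∈ Submodule.span ℝ ({a, b, c} : Set g) := hspan (mem_posPart_iff.mpr hu)
    have himg := Submodule.mem_map_of_mem (f := (LinearMap.id - J : Module.End ℝ g)) hu'
    rw [Submodule.map_span] at himg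
    simpa [Set.image_insert_eq] using himg
  · rw [brkt_mm h (hJJ a b ha' hb'), habc]
  · intro y hy
    have hy' : J (E y) = -y := by
      have := mem_negPart_iff.mp hy
      simpa [Module.End.mul_apply] using this
    obtain ⟨v, hv, rfl⟩ := neg_form h hy'
    rw [brkt_mm h (hJJ c v hc' hv), hcen v (mem_posPart_iff.mpr hv), map_zero, sub_zero]
end
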